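/- arXiv:0908.1500 — 3 statements merged into one kernel-verified Lean document; each statement's English description precedes it below -/
import Mathlib

section
/- Fix δ ∈ ℤ and let λ be a partition with a removable box e_i such that s_δ(λ) = s_δ(λ − e_i). Then there is no row index i′ such that λ + e_{i′} (adding a box at the end of row i′ of λ) is a partition and the two-box skew (λ + e_{i′})/(λ − e_i) is a minimal δ-balanced skew. -/
/-! ### Partitions and Young diagrams (rows/columns indexed from 1) -/

/-- An integer partition, encoded as its sequence of row lengths, with
`f 0 = 0` (rows are indexed from `1`), weakly decreasing on positive indices,
and eventually zero. -/
def IsPartition (f : ℕ → ℕ) : Prop :=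
  f 0 = 0 ∧ (∀ i, 1 ≤ i → f (i + 1) ≤ f i) ∧ ∃ N, ∀ i, N ≤ i → f i = 0

/-- The boxes of the Young diagram of `f`, as pairs (row, column) of integers,
both indexed from 1. -/
def cells (f : ℕ → ℕ) : Set (ℤ × ℤ) :=
  {p | 1 ≤ p.1 ∧ 1 ≤ p.2 ∧ p.2 ≤ (f p.1.toNat : ℤ)}

/-- The skew λ/μ of two partitions. -/
def skewOf (lam mu : ℕ → ℕ) : Set (ℤ × ℤ) := cells lam \ cells mu

/-- The δ-charge of a box `p = (i,j)`: `δ - 1 - 2 (j - i)`. -/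
def chg (δ : ℤ) (p : ℤ × ℤ) : ℤ := δ - 1 - 2 * (p.2 - p.1)

/-- The π-rotation of the plane about the point `(a/2, b/2)`, as a map on boxes:
the box `(i,j)` (the unit square `[i-1,i] × [j-1,j]`) is sent to the box
`(a + 1 - i, b + 1 - j)`. -/
def boxRot (a b : ℤ) (p : ℤ × ℤ) : ℤ × ℤ := (a + 1 - p.1, b + 1 - p.2)

/-- Two boxes are adjacent when they share an edge. -/
def adjacentCell (p q : ℤ × ℤ) : Prop := |p.1 - q.1| + |p.2 - q.2| = 1

/-- A rim: a (nonempty, finite) set of boxes which forms a path under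
edge-adjacency (possibly a single box). -/
def IsRim (S : Set (ℤ × ℤ)) : Prop :=
  ∃ (n : ℕ) (s : Fin (n + 1) → ℤ × ℤ),
    Function.Injective s ∧ Set.range s = S ∧
      ∀ k l : Fin (n + 1), adjacentCell (s k) (s l) ↔ ((k : ℕ) + 1 = l ∨ (l : ℕ) + 1 = k)

/-- `MiBSWitness δ lam mu a b` : the π-rotation about the point `(a/2, b/2)`
(which lies on the δ-charge-0 diagonal) exhibits the skew λ/μ as a union of two
rims interchanged by this rotation, with no row of the skew fixed by the
rotation (the rotation sends row `i` to row `a + 1 - i`). -/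
def MiBSWitness (δ : ℤ) (lam mu : ℕ → ℕ) (a b : ℤ) : Prop :=
  b - a = δ - 1 ∧
  (∃ R1 R2 : Set (ℤ × ℤ),
      IsRim R1 ∧ IsRim R2 ∧ skewOf lam mu = R1 ∪ R2 ∧ boxRot a b '' R1 = R2) ∧
  ∀ p ∈ skewOf lam mu, 2 * p.1 ≠ a + 1

/-- λ/μ is a minimal δ-balanced skew. -/
def IsMiBS (δ : ℤ) (lam mu : ℕ → ℕ) : Prop :=
  IsPartition lam ∧ IsPartition mu ∧ cells mu ⊆ cells lam ∧
    ∃ a b : ℤ, MiBSWitness δ lam mu a b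

/-- `μ ←^δ λ` : λ/μ is a minimal δ-balanced skew. -/
def MiBSRel (δ : ℤ) (mu lam : ℕ → ℕ) : Prop := IsMiBS δ lam mu

/-- `μ <^δ λ` : the transitive closure of `←^δ`. -/
def ltDelta (δ : ℤ) : (ℕ → ℕ) → (ℕ → ℕ) → Prop := Relation.TransGen (MiBSRel δ)

/-- `μ ∼^δ λ` : the reflexive-symmetric-transitive closure of `←^δ`
(the block relation). -/
def simDelta (δ : ℤ) : (ℕ → ℕ) → (ℕ → ℕ) → Prop := Relation.EqvGen (MiBSRel δ)

/-- Remove the last box of row `i`. -/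
def removeBox (f : ℕ → ℕ) (i : ℕ) : ℕ → ℕ := fun k => if k = i then f i - 1 else f k

/-- Add a box at the end of row `i`. -/
def addBox (f : ℕ → ℕ) (i : ℕ) : ℕ → ℕ := fun k => if k = i then f i + 1 else f k

/-- The box `e_i` at the end of row `i` of `f` is removable. -/
def Removable (f : ℕ → ℕ) (i : ℕ) : Prop :=
  1 ≤ i ∧ 1 ≤ f i ∧ IsPartition (removeBox f i)

/-- The cell `p` is a removable box of the partition `f`. -/
def RemovableCell (f : ℕ → ℕ) (p : ℤ × ℤ) : Prop :=
  ∃ i : ℕ, Removable f i ∧ p = ((i : ℤ), (f i : ℤ))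

/-- `(ρ_δ)_i = -δ/2 - (i - 1)`. -/
noncomputable def rho (δ : ℤ) (i : ℕ) : ℝ := -(δ : ℝ) / 2 - ((i : ℝ) - 1)

/-- `e_δ(λ) = λ + ρ_δ ∈ ℝ^ℕ`. -/
noncomputable def eDel (δ : ℤ) (f : ℕ → ℕ) : ℕ → ℝ := fun i => (f i : ℝ) + rho δ i

/-- The singularity `s_δ(λ)`: the number of pairs `i < j` of (positive) positions
with `e_δ(λ)_i = -e_δ(λ)_j`. -/
noncomputable def sing (δ : ℤ) (f : ℕ → ℕ) : ℕ :=
  Set.ncard {q : ℕ × ℕ | 1 ≤ q.1 ∧ q.1 < q.2 ∧ eDel δ f q.1 = -(eDel δ f q.2)}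

/-- The boxes of `S` lying in row `i`. -/
def rowCells (S : Set (ℤ × ℤ)) (i : ℤ) : Set (ℤ × ℤ) := {p | p ∈ S ∧ p.1 = i}

/-- Rows `i` and `j` of the skew `S` are matched by the π-rotation about
`(a/2, b/2)`: the rotation maps the skew boxes in row `i` onto those in row `j`. -/
def MatchedRows (a b : ℤ) (S : Set (ℤ × ℤ)) (i j : ℤ) : Prop :=
  (rowCells S i).Nonempty ∧ boxRot a b '' rowCells S i = rowCells S j

/-- `e_i` is a rim-end removable box of the skew λ/μ: a removable box of λ
contained in the skew, of maximal absolute δ-charge among such boxes. -/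
def RimEndBox (δ : ℤ) (lam mu : ℕ → ℕ) (i : ℕ) : Prop :=
  Removable lam i ∧ ((i : ℤ), (lam i : ℤ)) ∈ skewOf lam mu ∧
    ∀ i' : ℕ, Removable lam i' → ((i' : ℤ), (lam i' : ℤ)) ∈ skewOf lam mu →
      |chg δ ((i' : ℤ), (lam i' : ℤ))| ≤ |chg δ ((i : ℤ), (lam i : ℤ))|

/-- A set of boxes is boxy if every box lies in some 2×2 block of boxes
entirely contained in the set. -/
def Boxy (S : Set (ℤ × ℤ)) : Prop :=
  ∀ p ∈ S, ∃ q : ℤ × ℤ,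
    p ∈ ({q, (q.1 + 1, q.2), (q.1, q.2 + 1), (q.1 + 1, q.2 + 1)} : Set (ℤ × ℤ)) ∧
    ({q, (q.1 + 1, q.2), (q.1, q.2 + 1), (q.1 + 1, q.2 + 1)} : Set (ℤ × ℤ)) ⊆ S

/-! ### Sequences, the reflection group 𝒟, and orbits -/

/-- A strongly decreasing sequence (on positive positions): `v_i - v_{i+1} ≥ 1`. -/
def StronglyDecr (v : ℕ → ℝ) : Prop := ∀ i, 1 ≤ i → v (i + 1) ≤ v i - 1

/-- Entrywise order on sequences (positions indexed from 1). -/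
def leSeq (v w : ℕ → ℝ) : Prop := ∀ i, 1 ≤ i → v i ≤ w i

/-- `w'` covers `w` in the entrywise order restricted to `S`. -/
def SeqCovers (S : Set (ℕ → ℝ)) (w w' : ℕ → ℝ) : Prop :=
  leSeq w w' ∧ w ≠ w' ∧ ¬∃ u ∈ S, u ≠ w ∧ u ≠ w' ∧ leSeq w u ∧ leSeq u w'

/-- The map `(ij)` swapping the `i`-th and `j`-th entries of a sequence. -/
def swapFun (i j : ℕ) (v : ℕ → ℝ) : ℕ → ℝ :=
  fun k => if k = i then v j else if k = j then v i else v k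

/-- The map `(ij)_-` replacing the pair of entries `(v_i, v_j)` by `(-v_j, -v_i)`. -/
def negSwapFun (i j : ℕ) (v : ℕ → ℝ) : ℕ → ℝ :=
  fun k => if k = i then -v j else if k = j then -v i else v k

lemma swapFun_involutive (i j : ℕ) : Function.Involutive (swapFun i j) := by
  intro v; funext k; unfold swapFun
  split_ifs <;> simp_all

lemma negSwapFun_involutive (i j : ℕ) : Function.Involutive (negSwapFun i j) := by
  intro v; funext k; unfold negSwapFun
  split_ifs <;> simp_all

/-- `(ij)` as a bijection of `ℝ^ℕ`. -/
def swapPerm (i j : ℕ) : Equiv.Perm (ℕ → ℝ) :=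
  Function.Involutive.toPerm _ (swapFun_involutive i j)

/-- `(ij)_-` as a bijection of `ℝ^ℕ`. -/
def negSwapPerm (i j : ℕ) : Equiv.Perm (ℕ → ℝ) :=
  Function.Involutive.toPerm _ (negSwapFun_involutive i j)

/-- The generators `(ij)`, `(ij)_-` for `1 ≤ i < j`. -/
def Dgens : Set (Equiv.Perm (ℕ → ℝ)) :=
  {g | ∃ i j : ℕ, 1 ≤ i ∧ i < j ∧ (g = swapPerm i j ∨ g = negSwapPerm i j)}

/-- The group 𝒟 of bijections of `ℝ^ℕ` generated by all `(ij)` and `(ij)_-`. -/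
def Dgroup : Subgroup (Equiv.Perm (ℕ → ℝ)) := Subgroup.closure Dgens

/-- `V(v) = 𝒟v ∩ A^+`. -/
def Vset (v : ℕ → ℝ) : Set (ℕ → ℝ) :=
  {w | (∃ g ∈ Dgroup, g v = w) ∧ StronglyDecr w}

/-- Position `i ≥ 1` of `v` belongs to no doubleton. -/
def keptPos (v : ℕ → ℝ) (i : ℕ) : Prop :=
  1 ≤ i ∧ ∀ j, 1 ≤ j → j ≠ i → v j ≠ -v i

/-- `Reg v`: delete all entries of `v` belonging to doubletons, and re-index
the remaining entries in their original order (positions from 1). -/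
noncomputable def Reg (v : ℕ → ℝ) : ℕ → ℝ :=
  fun n => if n = 0 then v 0 else v (Nat.nth (keptPos v) (n - 1))

/-- Insert the value `a` into the sequence `t` after position `i`. -/
def insertAt (t : ℕ → ℝ) (i : ℕ) (a : ℝ) : ℕ → ℝ :=
  fun k => if k ≤ i then t k else if k = i + 1 then a else t (k - 1)

/-- The set of positive naturals occurring as entries of `w`. -/
def Pmap (w : ℕ → ℝ) : Set ℕ := {n | 1 ≤ n ∧ ∃ i, 1 ≤ i ∧ w i = (n : ℝ)}

/-- The sequence `(v_-)_i = -i`. -/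
noncomputable def vminus : ℕ → ℝ := fun i => -(i : ℝ)

open Classical in
/-- The product `w = ∏_{{i,j} ∈ R} (ij)_-` over the matched row pairs of a MiBS
with π-rotation about `(a/2, ·)` (row `i` is matched with row `a + 1 - i`),
acting on a sequence `v`. -/
noncomputable def wAct (a : ℤ) (S : Set (ℤ × ℤ)) (v : ℕ → ℝ) : ℕ → ℝ :=
  fun k => if 1 ≤ k ∧ (∃ p ∈ S, p.1 = (k : ℤ)) then -v (a + 1 - (k : ℤ)).toNat else v k

/-! ### TL-diagrams -/

/-- Reading `0` (not in `a`) as `+1` and `1` (in `a`) as `-1`: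
the depth of the interval `[p, r]`. -/
def tlDepth (a : Finset ℕ) (p r : ℕ) : ℤ :=
  (((Finset.Icc p r).filter (fun i => i ∉ a)).card : ℤ) -
    (((Finset.Icc p r).filter (fun i => i ∈ a)).card : ℤ)

/-- `{p, q}` is a pair formed in the first (bracket-matching) phase of the
construction of `𝒯(a)`. -/
def MatchedPair (a : Finset ℕ) (p q : ℕ) : Prop :=
  1 ≤ p ∧ p < q ∧ p ∉ a ∧ q ∈ a ∧ tlDepth a p q = 0 ∧
    ∀ r, p ≤ r → r < q → 0 < tlDepth a p r

/-- The `1`-positions left unpaired by the first phase. -/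
def leftover (a : Finset ℕ) : Set ℕ := {q | q ∈ a ∧ ¬∃ p, MatchedPair a p q}

/-- All the pair parts of `𝒯(a)`: the matched pairs together with the
consecutive pairing (from the left) of the leftover `1`-positions. -/
noncomputable def TLpairs (a : Finset ℕ) : Set (Set ℕ) :=
  {P | (∃ p q, MatchedPair a p q ∧ P = {p, q}) ∨
       (∃ k : ℕ, 2 * k + 1 < (leftover a).ncard ∧
          P = {Nat.nth (· ∈ leftover a) (2 * k), Nat.nth (· ∈ leftover a) (2 * k + 1)})}

/-- The parts of the partition `𝒯(a)` of `{1,2,3,…}`: the pair parts, and a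
singleton for every other positive position. -/
noncomputable def TLparts (a : Finset ℕ) : Set (Set ℕ) :=
  TLpairs a ∪ {P | ∃ x : ℕ, 1 ≤ x ∧ (∀ Q ∈ TLpairs a, x ∉ Q) ∧ P = {x}}

/-! ### Brauer diagrams -/

/-- `(m,l)`-pair-partitions, encoded as fixed-point-free involutions of
`{1,…,m} ⊔ {1',…,l'}`. -/
def BrDiag (m l : ℕ) : Set ((Fin m ⊕ Fin l) → (Fin m ⊕ Fin l)) :=
  {f | Function.Involutive f ∧ ∀ x, f x ≠ x}

/-- `Br^l(m,l)`: every primed element lies in a propagating block. -/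
def BrProp (m l : ℕ) : Set ((Fin m ⊕ Fin l) → (Fin m ⊕ Fin l)) :=
  {f | f ∈ BrDiag m l ∧ ∀ i : Fin l, ∃ j : Fin m, f (Sum.inr i) = Sum.inl j}

/-- `Br^{l̲}(m,l)`: moreover the propagating blocks are non-crossing. -/
def BrNC (m l : ℕ) : Set ((Fin m ⊕ Fin l) → (Fin m ⊕ Fin l)) :=
  {f | f ∈ BrProp m l ∧ ∀ (i h : Fin l) (j k : Fin m),
      f (Sum.inr i) = Sum.inl j → f (Sum.inr h) = Sum.inl k → i < h → j < k}

/-- The pair-partition with the same non-propagating blocks as `w`, and with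
propagating block `{j, σ(i)'}` for each propagating block `{j, i'}` of `w`. -/
def brMap (m l : ℕ) (w : (Fin m ⊕ Fin l) → (Fin m ⊕ Fin l)) (σ : Equiv.Perm (Fin l)) :
    (Fin m ⊕ Fin l) → (Fin m ⊕ Fin l) :=
  fun x => Sum.map id σ (w (Sum.map id σ.symm x))

lemma part_anti {f : ℕ → ℕ} (hf : IsPartition f) :
    ∀ k l, 1 ≤ k → k ≤ l → f l ≤ f k := by
  intro k l hk hkl
  induction l, hkl using Nat.le_induction with
  | base => exact le_rfl
  | succ n hn ih => exact le_trans (hf.2.1 n (le_trans hk hn)) ih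

lemma eDel_mono {f : ℕ → ℕ} (hf : IsPartition f) (δ : ℤ) :
    ∀ k l : ℕ, 1 ≤ k → k ≤ l → eDel δ f l ≤ eDel δ f k - ((l : ℝ) - (k : ℝ)) := by
  intro k l hk hkl
  have h := part_anti hf k l hk hkl
  have h1 : (f l : ℝ) ≤ f k := Nat.cast_le.mpr h
  have h2 : (k : ℝ) ≤ l := Nat.cast_le.mpr hkl
  unfold eDel rho
  linarith

lemma sing_set_finite (v : ℕ → ℝ) (M : ℝ) (hb : ∀ k, 1 ≤ k → v k ≤ M - ((k : ℝ) - 1)) :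
    {q : ℕ × ℕ | 1 ≤ q.1 ∧ q.1 < q.2 ∧ v q.1 = -(v q.2)}.Finite := by
  obtain ⟨N, hN⟩ := exists_nat_ge (2 * M + 1)
  apply Set.Finite.subset ((Set.finite_Iic N).prod (Set.finite_Iic N))
  rintro ⟨k, l⟩ ⟨hk, hkl, he⟩
  have h1 : v k ≤ M - ((k : ℝ) - 1) := hb k hk
  have h2 : v l ≤ M - ((l : ℝ) - 1) := hb l (by omega)
  have hk1 : (1 : ℝ) ≤ (k : ℝ) := by exact_mod_cast hk
  have hlR : (l : ℝ) ≤ N := by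
    have : v l = -(v k) := by linarith [he]
    linarith
  have hlN : l ≤ N := by exact_mod_cast hlR
  exact ⟨Set.mem_Iic.mpr (by omega), Set.mem_Iic.mpr hlN⟩

/-- If λ has a removable box `e_i` with
`s_δ(λ) = s_δ(λ - e_i)`, then there is no row `i'` such that `λ + e_{i'}` is a
partition with `(λ + e_{i'})/(λ - e_i)` a minimal δ-balanced skew. -/
theorem stmt10 (δ : ℤ) (lam : ℕ → ℕ) (hl : IsPartition lam) (i : ℕ)
    (hrem : Removable lam i) (hs : sing δ lam = sing δ (removeBox lam i)) :
    ¬∃ i' : ℕ, 1 ≤ i' ∧ IsPartition (addBox lam i') ∧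
        IsMiBS δ (addBox lam i') (removeBox lam i) := by
  rintro ⟨i', hi'1, hν, -, hμpart, -, a, b, hba, ⟨R1, R2, -, -, hskew, hrot⟩, hnofix⟩
  obtain ⟨hi1, hli, hremp⟩ := hrem
  -- removability inequality
  have hrm : lam (i + 1) + 1 ≤ lam i := by
    have h := hremp.2.1 i hi1
    have e1 : removeBox lam i (i + 1) = lam (i + 1) := if_neg (by omega)
    have e2 : removeBox lam i i = lam i - 1 := if_pos rfl
    rw [e1, e2] at h
    omega
  -- the box P = (i, lam i) is in the skew
  have htn : ((i : ℤ)).toNat = i := Int.toNat_natCast i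
  set P : ℤ × ℤ := ((i : ℤ), (lam i : ℤ)) with hPdef
  have hPmem : P ∈ skewOf (addBox lam i') (removeBox lam i) := by
    constructor
    · refine ⟨show (1 : ℤ) ≤ (i : ℤ) by exact_mod_cast hi1,
        show (1 : ℤ) ≤ (lam i : ℤ) by exact_mod_cast hli, ?_⟩
      show (lam i : ℤ) ≤ ((addBox lam i' (((i : ℤ)).toNat) : ℕ) : ℤ)
      rw [htn]
      have : lam i ≤ addBox lam i' i := by
        simp only [addBox]
        split_ifs with h
        · subst h; omega
        · exact le_rfl
      exact_mod_cast this
    · rintro ⟨-, -, h3⟩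
      have h3' : (P.2 : ℤ) ≤ ((removeBox lam i (((i : ℤ)).toNat) : ℕ) : ℤ) := h3
      rw [htn] at h3'
      have e2 : removeBox lam i i = lam i - 1 := if_pos rfl
      rw [e2] at h3'
      have h3'' : (lam i : ℤ) ≤ ((lam i - 1 : ℕ) : ℤ) := h3'
      omega
  -- boxRot is an involution
  have hinv : ∀ p : ℤ × ℤ, boxRot a b (boxRot a b p) = p := by
    intro p
    unfold boxRot
    ext <;> simp <;> ring
  -- boxRot a b P is in the skew
  have hQmem : boxRot a b P ∈ skewOf (addBox lam i') (removeBox lam i) := by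
    have hPm := hPmem
    rw [hskew] at hPm
    rw [hskew]
    rcases hPm with h | h
    · exact Or.inr (hrot ▸ ⟨P, h, rfl⟩)
    · left
      rw [← hrot] at h
      obtain ⟨x, hx, hxe⟩ := h
      rw [← hxe, hinv x]
      exact hx
  -- no fixed row
  have hQ1 : a + 1 - (i : ℤ) ≠ (i : ℤ) := by
    have h := hnofix P hPmem
    simp only [hPdef] at h
    intro hcon
    exact h (by omega)
  -- analyze the skew membership of boxRot a b P
  obtain ⟨⟨h1, h2, h3⟩, hnot⟩ := hQmem
  simp only [boxRot, hPdef] at h1 h2 h3 hnot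
  have hnz : (((a + 1 - (i : ℤ)).toNat : ℕ) : ℤ) = a + 1 - (i : ℤ) :=
    Int.toNat_of_nonneg (by linarith)
  have hni : (a + 1 - (i : ℤ)).toNat ≠ i := by
    intro hcon
    exact hQ1 (by rw [← hnz, hcon])
  have h4 : ((removeBox lam i ((a + 1 - (i : ℤ)).toNat) : ℕ) : ℤ) < b + 1 - (lam i : ℤ) := by
    by_contra hcon
    push_neg at hcon
    exact hnot ⟨h1, h2, hcon⟩
  rw [show removeBox lam i ((a + 1 - (i : ℤ)).toNat) = lam ((a + 1 - (i : ℤ)).toNat)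
    from if_neg hni] at h4
  by_cases hni' : (a + 1 - (i : ℤ)).toNat = i'
  swap
  · exfalso
    rw [show addBox lam i' ((a + 1 - (i : ℤ)).toNat) = lam ((a + 1 - (i : ℤ)).toNat)
      from if_neg hni'] at h3
    omega
  -- so a + 1 - i = i' and b + 1 - lam i = lam i' + 1
  have hEA : a + 1 - (i : ℤ) = (i' : ℤ) := by rw [← hnz, hni']
  rw [show addBox lam i' ((a + 1 - (i : ℤ)).toNat) = lam i' + 1 by
    rw [hni']; exact if_pos rfl] at h3
  rw [hni'] at h4
  have hEB : b + 1 - (lam i : ℤ) = (lam i' : ℤ) + 1 := by push_cast at h3 h4 ⊢; omega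
  have hii' : i ≠ i' := by rw [← hni']; exact fun hcon => hni hcon.symm
  -- key numeric relation
  have key : eDel δ lam i + eDel δ lam i' = 0 := by
    have e1 : ((lam i : ℤ) + (lam i' : ℤ)) - ((i : ℤ) + (i' : ℤ)) + 1 = δ - 1 := by omega
    have e2 : ((lam i : ℝ) + (lam i' : ℝ)) - ((i : ℝ) + (i' : ℝ)) + 1 = (δ : ℝ) - 1 := by
      exact_mod_cast e1
    unfold eDel rho
    push_cast
    linarith
  set c : ℝ := eDel δ lam i with hcdef
  have hti' : eDel δ lam i' = -c := by linarith
  -- monotonicity facts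
  have hmono := eDel_mono hl δ
  have hstrict : ∀ k l : ℕ, 1 ≤ k → k < l → eDel δ lam l ≤ eDel δ lam k - 1 := by
    intro k l hk hkl
    have h := hmono k l hk (le_of_lt hkl)
    have h' : (k : ℝ) + 1 ≤ l := by exact_mod_cast hkl
    linarith
  have hinj : ∀ k l : ℕ, 1 ≤ k → 1 ≤ l → eDel δ lam k = eDel δ lam l → k = l := by
    intro k l hk hl' he
    rcases lt_trichotomy k l with h | h | h
    · have := hstrict k l hk h; linarith
    · exact h
    · have := hstrict l k hl' h; linarith
  have hc0 : c ≠ 0 := by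
    intro h
    exact hii' (hinj i i' hi1 hi'1 (by rw [hti', h, neg_zero, ← hcdef, h]))
  -- addability inequality
  have haddR : 2 ≤ i' → eDel δ lam i' + 2 ≤ eDel δ lam (i' - 1) := by
    intro h2
    have h := hν.2.1 (i' - 1) (by omega)
    rw [show i' - 1 + 1 = i' from by omega] at h
    simp only [addBox, if_pos rfl, if_neg (by omega : i' - 1 ≠ i')] at h
    have hc : (lam i' : ℝ) + 1 ≤ lam (i' - 1) := by exact_mod_cast h
    have hc2 : ((i' - 1 : ℕ) : ℝ) = (i' : ℝ) - 1 := by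
      have h3 : ((1:ℕ):ℝ) ≤ ((i':ℕ):ℝ) := by exact_mod_cast hi'1
      rw [Nat.cast_sub hi'1]; norm_num
    unfold eDel rho
    rw [hc2]
    linarith
  -- no entry equals -c + 1
  have hno : ∀ l, 1 ≤ l → eDel δ lam l ≠ -c + 1 := by
    intro l hl1 he
    rcases lt_trichotomy l i' with h | h | h
    · have h2 : 2 ≤ i' := by omega
      have ha := haddR h2
      rw [hti'] at ha
      have hm : eDel δ lam (i' - 1) ≤ eDel δ lam l := by
        rcases eq_or_lt_of_le (show l ≤ i' - 1 by omega) with h' | h'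
        · rw [h']
        · have := hstrict l (i' - 1) hl1 h'; linarith
      linarith
    · rw [h, hti'] at he; linarith
    · have := hstrict i' l hi'1 h
      rw [hti'] at this
      linarith
  -- entries of removed partition
  have hμe : ∀ k, eDel δ (removeBox lam i) k =
      if k = i then eDel δ lam k - 1 else eDel δ lam k := by
    intro k
    unfold eDel removeBox
    by_cases hk : k = i
    · subst hk
      rw [if_pos rfl, if_pos rfl, Nat.cast_sub hli]
      push_cast; ring
    · rw [if_neg hk, if_neg hk]
  -- finiteness
  have hfin : {q : ℕ × ℕ | 1 ≤ q.1 ∧ q.1 < q.2 ∧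
      eDel δ (removeBox lam i) q.1 = -(eDel δ (removeBox lam i) q.2)}.Finite := by
    apply sing_set_finite _ (eDel δ lam 1)
    intro k hk
    have hm := hmono 1 k le_rfl hk
    rw [hμe]
    split <;> push_cast at hm ⊢ <;> linarith
  -- case analysis on the sign of c
  rcases lt_or_gt_of_ne hc0 with hcneg | hcpos
  · -- c < 0, extra pair is (i', i)
    have hlt : i' < i := by
      rcases lt_trichotomy i' i with h | h | h
      · exact h
      · exact absurd h.symm hii'
      · have := hstrict i i' hi1 h; rw [hti'] at this; linarith
    have hSeq : {q : ℕ × ℕ | 1 ≤ q.1 ∧ q.1 < q.2 ∧ eDel δ lam q.1 = -(eDel δ lam q.2)} =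
        insert (i', i) {q : ℕ × ℕ | 1 ≤ q.1 ∧ q.1 < q.2 ∧
          eDel δ (removeBox lam i) q.1 = -(eDel δ (removeBox lam i) q.2)} := by
      ext ⟨k, l⟩
      simp only [Set.mem_insert_iff, Set.mem_setOf_eq, Prod.mk.injEq]
      constructor
      · rintro ⟨hk1, hkl, he⟩
        by_cases hki : k = i
        · exfalso
          subst hki
          have := hstrict k l hk1 hkl
          rw [← hcdef] at this he
          linarith
        · by_cases hli' : l = i
          · subst hli'
            rw [← hcdef] at he
            exact Or.inl ⟨hinj k i' (by omega) hi'1 (by rw [hti']; linarith), rfl⟩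
          · exact Or.inr ⟨hk1, hkl, by
              rw [hμe, hμe, if_neg hki, if_neg hli']; exact he⟩
      · rintro (⟨hk, hl'⟩ | ⟨hk1, hkl, he⟩)
        · subst hk; subst hl'
          exact ⟨hi'1, hlt, by rw [hti', ← hcdef]⟩
        · rw [hμe, hμe] at he
          by_cases hki : k = i
          · exfalso
            rw [if_pos hki, if_neg (by omega : l ≠ i)] at he
            rw [hki, ← hcdef] at he
            exact hno l (by omega) (by linarith)
          · by_cases hli' : l = i
            · exfalso
              rw [if_neg hki, if_pos hli'] at he
              rw [hli', ← hcdef] at he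
              exact hno k (by omega) (by linarith)
            · rw [if_neg hki, if_neg hli'] at he
              exact ⟨hk1, hkl, he⟩
    have hp0 : (i', i) ∉ {q : ℕ × ℕ | 1 ≤ q.1 ∧ q.1 < q.2 ∧
        eDel δ (removeBox lam i) q.1 = -(eDel δ (removeBox lam i) q.2)} := by
      rintro ⟨-, -, he⟩
      have he' : eDel δ (removeBox lam i) i' = -(eDel δ (removeBox lam i) i) := he
      rw [hμe, hμe, if_neg (by omega : i' ≠ i), if_pos rfl, hti', ← hcdef] at he'
      linarith
    have hcount : sing δ lam = sing δ (removeBox lam i) + 1 := by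
      unfold sing
      rw [hSeq]
      exact Set.ncard_insert_of_notMem hp0 hfin
    omega
  · -- c > 0, extra pair is (i, i')
    have hlt : i < i' := by
      rcases lt_trichotomy i i' with h | h | h
      · exact h
      · exact absurd h hii'
      · have := hstrict i' i hi'1 h; rw [hti'] at this; linarith
    have hSeq : {q : ℕ × ℕ | 1 ≤ q.1 ∧ q.1 < q.2 ∧ eDel δ lam q.1 = -(eDel δ lam q.2)} =
        insert (i, i') {q : ℕ × ℕ | 1 ≤ q.1 ∧ q.1 < q.2 ∧
          eDel δ (removeBox lam i) q.1 = -(eDel δ (removeBox lam i) q.2)} := by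
      ext ⟨k, l⟩
      simp only [Set.mem_insert_iff, Set.mem_setOf_eq, Prod.mk.injEq]
      constructor
      · rintro ⟨hk1, hkl, he⟩
        by_cases hki : k = i
        · subst hki
          rw [← hcdef] at he
          exact Or.inl ⟨rfl, (hinj l i' (by omega) hi'1 (by rw [hti']; linarith)).symm ▸ rfl⟩
        · by_cases hli' : l = i
          · exfalso
            subst hli'
            rw [← hcdef] at he
            have hk' : k = i' := hinj k i' (by omega) hi'1 (by rw [hti']; linarith)
            omega
          · exact Or.inr ⟨hk1, hkl, by
              rw [hμe, hμe, if_neg hki, if_neg hli']; exact he⟩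
      · rintro (⟨hk, hl'⟩ | ⟨hk1, hkl, he⟩)
        · subst hk; subst hl'
          exact ⟨hi1, hlt, by rw [hti', neg_neg, ← hcdef]⟩
        · rw [hμe, hμe] at he
          by_cases hki : k = i
          · exfalso
            rw [if_pos hki, if_neg (by omega : l ≠ i)] at he
            rw [hki, ← hcdef] at he
            exact hno l (by omega) (by linarith)
          · by_cases hli' : l = i
            · exfalso
              rw [if_neg hki, if_pos hli'] at he
              rw [hli', ← hcdef] at he
              exact hno k (by omega) (by linarith)
            · rw [if_neg hki, if_neg hli'] at he
              exact ⟨hk1, hkl, he⟩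
    have hp0 : (i, i') ∉ {q : ℕ × ℕ | 1 ≤ q.1 ∧ q.1 < q.2 ∧
        eDel δ (removeBox lam i) q.1 = -(eDel δ (removeBox lam i) q.2)} := by
      rintro ⟨-, -, he⟩
      have he' : eDel δ (removeBox lam i) i = -(eDel δ (removeBox lam i) i') := he
      rw [hμe, hμe, if_pos rfl, if_neg (by omega : i' ≠ i), hti', ← hcdef] at he'
      linarith
    have hcount : sing δ lam = sing δ (removeBox lam i) + 1 := by
      unfold sing
      rw [hSeq]
      exact Set.ncard_insert_of_notMem hp0 hfin
    omega
end

section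
/- Let v_− ∈ ℝ^ℕ be the sequence (v_−)_i = −i, and for w ∈ V(v_−) let P(w) = {n ∈ {1,2,3,…} : n occurs as an entry of w}. For w, w′ ∈ V(v_−), w′ covers w in the entrywise partial order on V(v_−) (i.e. w < w′ and there is no u ∈ V(v_−) with w < u < w′) if and only if either (a) there exists α ≥ 1 with α ∈ P(w), α+1 ∉ P(w), and P(w′) = (P(w) ∖ {α}) ∪ {α+1}, or (b) 1 ∉ P(w), 2 ∉ P(w), and P(w′) = P(w) ∪ {1, 2}. -/
/-! ### Part 1: counting combinatorics on finsets -/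

def fcount (P : Finset ℕ) (n : ℕ) : ℕ := (P.filter (fun p => n ≤ p)).card

lemma fcount_mono (P : Finset ℕ) {n m : ℕ} (h : n ≤ m) : fcount P m ≤ fcount P n := by
  apply Finset.card_le_card
  intro x hx
  simp only [Finset.mem_filter] at *
  exact ⟨hx.1, le_trans h hx.2⟩

lemma fcount_step (P : Finset ℕ) (n : ℕ) :
    fcount P n = fcount P (n + 1) + (if n ∈ P then 1 else 0) := by
  classical
  have hsplit : P.filter (fun p => n ≤ p)
      = P.filter (fun p => n + 1 ≤ p) ∪ P.filter (fun p => p = n) := by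
    ext p
    simp only [Finset.mem_filter, Finset.mem_union]
    by_cases hp : p ∈ P <;> simp [hp] <;> omega
  have hdisj : Disjoint (P.filter (fun p => n + 1 ≤ p)) (P.filter (fun p => p = n)) := by
    rw [Finset.disjoint_left]
    intro a ha hb
    simp only [Finset.mem_filter] at ha hb
    omega
  rw [fcount, hsplit, Finset.card_union_of_disjoint hdisj]
  congr 1
  rw [Finset.filter_eq']
  split_ifs with h <;> simp [h]

lemma mem_iff_fcount (P : Finset ℕ) (p : ℕ) : p ∈ P ↔ fcount P (p + 1) < fcount P p := by
  rw [fcount_step P p]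
  split_ifs with h <;> simp [h]

lemma fcount_le_card (P : Finset ℕ) (n : ℕ) : fcount P n ≤ P.card := Finset.card_filter_le _ _

lemma fcount_one (P : Finset ℕ) (hP : ∀ p ∈ P, 1 ≤ p) : fcount P 1 = P.card := by
  unfold fcount
  rw [Finset.filter_true_of_mem]
  intro x hx; exact hP x hx

lemma eq_of_fcount_eq {P Q : Finset ℕ} (hP : ∀ p ∈ P, 1 ≤ p) (hQ : ∀ q ∈ Q, 1 ≤ q)
    (h : ∀ n, 1 ≤ n → fcount P n = fcount Q n) : P = Q := by
  ext p
  rcases Nat.eq_zero_or_pos p with rfl | hp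
  · constructor
    · intro h'; exact absurd (hP _ h') (by omega)
    · intro h'; exact absurd (hQ _ h') (by omega)
  · rw [mem_iff_fcount, mem_iff_fcount, h p hp, h (p+1) (by omega)]

lemma fcount_eq_of_gap {P : Finset ℕ} {n m : ℕ} (hnm : n ≤ m)
    (h : ∀ p ∈ P, n ≤ p → m ≤ p) : fcount P n = fcount P m := by
  unfold fcount; congr 1
  ext p
  simp only [Finset.mem_filter]
  constructor
  · rintro ⟨hp, hnp⟩; exact ⟨hp, h p hp hnp⟩
  · rintro ⟨hp, hmp⟩; exact ⟨hp, le_trans hnm hmp⟩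

lemma fcount_insert {P : Finset ℕ} {a : ℕ} (ha : a ∉ P) (n : ℕ) :
    fcount (insert a P) n = fcount P n + (if n ≤ a then 1 else 0) := by
  classical
  unfold fcount
  rw [Finset.filter_insert]
  split_ifs with h
  · rw [Finset.card_insert_of_notMem (by simp [ha])]
  · rfl

lemma fcount_erase {P : Finset ℕ} {a : ℕ} (ha : a ∈ P) (n : ℕ) :
    fcount P n = fcount (P.erase a) n + (if n ≤ a then 1 else 0) := by
  classical
  conv_lhs => rw [show P = insert a (P.erase a) from (Finset.insert_erase ha).symm]
  rw [fcount_insert (Finset.notMem_erase a P)]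

lemma fcount_move_a {P : Finset ℕ} {β : ℕ} (hβ : β ∈ P) (hβ1 : β + 1 ∉ P) (n : ℕ) :
    fcount (insert (β + 1) (P.erase β)) n
      = fcount P n + (if n = β + 1 then 1 else 0) := by
  have h1 : β + 1 ∉ P.erase β := fun h => hβ1 (Finset.mem_of_mem_erase h)
  rw [fcount_insert h1]
  have h2 := fcount_erase hβ n
  split_ifs at h2 ⊢ <;> omega

lemma fcount_move_b {P : Finset ℕ} (h1 : 1 ∉ P) (h2 : 2 ∉ P) (n : ℕ) :
    fcount (insert 1 (insert 2 P)) n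
      = fcount P n + (if n ≤ 1 then 2 else if n = 2 then 1 else 0) := by
  have h1' : (1:ℕ) ∉ insert 2 P := by simp [h1]
  rw [fcount_insert h1', fcount_insert h2]
  split_ifs <;> omega

/-! ### Part 3: the invariant goodW -/

def goodW (u : ℕ → ℝ) : Prop :=
  u 0 = 0 ∧
  (∀ i, 1 ≤ i → ∃ n : ℕ, 1 ≤ n ∧ |u i| = (n : ℝ)) ∧
  (∀ n : ℕ, 1 ≤ n → ∃! i, 1 ≤ i ∧ |u i| = (n : ℝ)) ∧
  Even ({i : ℕ | 1 ≤ i ∧ 0 < u i}.ncard)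

lemma goodW_vminus : goodW vminus := by
  refine ⟨by simp [vminus], ?_, ?_, ?_⟩
  · intro i hi
    exact ⟨i, hi, by simp [vminus]⟩
  · intro n hn
    refine ⟨n, ⟨hn, by simp [vminus]⟩, ?_⟩
    rintro y ⟨hy1, hy2⟩
    simp [vminus] at hy2
    exact_mod_cast hy2
  · have h : {i : ℕ | 1 ≤ i ∧ 0 < vminus i} = ∅ := by
      ext i
      simp only [Set.mem_setOf_eq, Set.mem_empty_iff_false, iff_false, not_and]
      intro _
      simp only [vminus, neg_pos, not_lt]
      exact Nat.cast_nonneg i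
    rw [h]
    simp

open scoped Classical in
lemma ncard_inter_pair {S : Set ℕ} {i j : ℕ} (hij : i ≠ j) :
    (S ∩ {i, j}).ncard = (if i ∈ S then 1 else 0) + (if j ∈ S then 1 else 0) := by
  classical
  by_cases hi : i ∈ S <;> by_cases hj : j ∈ S
  · have h : S ∩ {i, j} = {i, j} := Set.inter_eq_right.mpr (by
      rintro x (rfl | rfl) <;> assumption)
    rw [h, Set.ncard_pair hij, if_pos hi, if_pos hj]
  · have h : S ∩ {i, j} = {i} := by
      ext x
      simp only [Set.mem_inter_iff, Set.mem_insert_iff, Set.mem_singleton_iff]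
      constructor
      · rintro ⟨hx, rfl | rfl⟩
        · rfl
        · exact absurd hx hj
      · rintro rfl; exact ⟨hi, Or.inl rfl⟩
    rw [h, Set.ncard_singleton, if_pos hi, if_neg hj]
  · have h : S ∩ {i, j} = {j} := by
      ext x
      simp only [Set.mem_inter_iff, Set.mem_insert_iff, Set.mem_singleton_iff]
      constructor
      · rintro ⟨hx, rfl | rfl⟩
        · exact absurd hx hi
        · rfl
      · rintro rfl; exact ⟨hj, Or.inr rfl⟩
    rw [h, Set.ncard_singleton, if_neg hi, if_pos hj]
  · have h : S ∩ {i, j} = ∅ := by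
      ext x
      simp only [Set.mem_inter_iff, Set.mem_insert_iff, Set.mem_singleton_iff,
        Set.mem_empty_iff_false, iff_false, not_and]
      rintro hx (rfl | rfl)
      · exact hi hx
      · exact hj hx
    rw [h, Set.ncard_empty, if_neg hi, if_neg hj]

open scoped Classical in
lemma even_ncard_congr {S T : Set ℕ} {i j : ℕ} (hij : i ≠ j)
    (hagree : ∀ k, k ≠ i → k ≠ j → (k ∈ S ↔ k ∈ T))
    (hcross : ((i ∈ S ↔ j ∈ S) ↔ (i ∈ T ↔ j ∈ T)))
    (hE : Even S.ncard) : Even T.ncard := by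
  have hdiff : S \ {i, j} = T \ {i, j} := by
    ext k
    simp only [Set.mem_diff, Set.mem_insert_iff, Set.mem_singleton_iff]
    constructor
    · rintro ⟨hk, hk2⟩
      exact ⟨(hagree k (fun h => hk2 (Or.inl h)) (fun h => hk2 (Or.inr h))).mp hk, hk2⟩
    · rintro ⟨hk, hk2⟩
      exact ⟨(hagree k (fun h => hk2 (Or.inl h)) (fun h => hk2 (Or.inr h))).mpr hk, hk2⟩
  by_cases hfin : S.Finite
  · have hTfin : T.Finite := by
      apply Set.Finite.subset (hfin.union ((Set.finite_singleton j).insert i))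
      intro k hk
      by_cases hk' : k = i ∨ k = j
      · rcases hk' with rfl | rfl
        · exact Or.inr (Set.mem_insert _ _)
        · exact Or.inr (Set.mem_insert_iff.mpr (Or.inr rfl))
      · push_neg at hk'
        exact Or.inl ((hagree k hk'.1 hk'.2).mpr hk)
    have hSdec : S.ncard = (S \ {i, j}).ncard + (S ∩ {i, j}).ncard := by
      rw [← Set.ncard_union_eq (Set.disjoint_left.mpr fun a ha hb => ha.2 hb.2)
        (hfin.diff) (hfin.inter_of_left _), Set.diff_union_inter]
    have hTdec : T.ncard = (T \ {i, j}).ncard + (T ∩ {i, j}).ncard := by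
      rw [← Set.ncard_union_eq (Set.disjoint_left.mpr fun a ha hb => ha.2 hb.2)
        (hTfin.diff) (hTfin.inter_of_left _), Set.diff_union_inter]
    rw [hSdec, hdiff, ncard_inter_pair hij] at hE
    rw [hTdec, ncard_inter_pair hij]
    by_cases hiS : i ∈ S <;> by_cases hjS : j ∈ S <;>
      by_cases hiT : i ∈ T <;> by_cases hjT : j ∈ T <;>
      simp only [hiS, hjS, hiT, hjT, iff_true, iff_false, true_iff, false_iff,
        not_true, not_false_iff, if_true, if_false] at hcross hE ⊢ <;>
      first
        | (exfalso; tauto)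
        | (rw [Nat.even_iff] at hE ⊢; omega)
  · have hTinf : ¬ T.Finite := by
      intro hTfin
      apply hfin
      apply Set.Finite.subset (hTfin.union ((Set.finite_singleton j).insert i))
      intro k hk
      by_cases hk' : k = i ∨ k = j
      · rcases hk' with rfl | rfl
        · exact Or.inr (Set.mem_insert _ _)
        · exact Or.inr (Set.mem_insert_iff.mpr (Or.inr rfl))
      · push_neg at hk'
        exact Or.inl ((hagree k hk'.1 hk'.2).mp hk)
    rw [Set.Infinite.ncard hTinf]
    simp

lemma goodW_comp {u : ℕ → ℝ} (hu : goodW u) (σ : Equiv.Perm ℕ) (h0 : σ 0 = 0) :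
    goodW (fun k => u (σ k)) := by
  obtain ⟨h1, h2, h3, h4⟩ := hu
  have hpos : ∀ k : ℕ, 1 ≤ σ k ↔ 1 ≤ k := by
    intro k
    have h : σ k = 0 ↔ k = 0 :=
      ⟨fun h => σ.injective (h.trans h0.symm), fun h => h ▸ h0⟩
    omega
  refine ⟨by simpa [h0] using h1, ?_, ?_, ?_⟩
  · intro i hi
    exact h2 (σ i) ((hpos i).mpr hi)
  · intro n hn
    obtain ⟨i, ⟨hi1, hi2⟩, hiu⟩ := h3 n hn
    refine ⟨σ.symm i, ⟨?_, ?_⟩, ?_⟩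
    · have h := hpos (σ.symm i)
      rw [Equiv.apply_symm_apply] at h
      exact h.mp hi1
    · simpa [Equiv.apply_symm_apply] using hi2
    · rintro y ⟨hy1, hy2⟩
      have hy : σ y = i := hiu (σ y) ⟨(hpos y).mpr hy1, hy2⟩
      rw [← hy, Equiv.symm_apply_apply]
  · have himg : {k : ℕ | 1 ≤ k ∧ 0 < u (σ k)} = ⇑σ.symm '' {i : ℕ | 1 ≤ i ∧ 0 < u i} := by
      ext k
      simp only [Set.mem_image, Set.mem_setOf_eq]
      constructor
      · rintro ⟨hk1, hk2⟩
        exact ⟨σ k, ⟨(hpos k).mpr hk1, hk2⟩, σ.symm_apply_apply k⟩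
      · rintro ⟨i, ⟨hi1, hi2⟩, rfl⟩
        have h := hpos (σ.symm i)
        rw [Equiv.apply_symm_apply] at h
        exact ⟨h.mp hi1, by rwa [Equiv.apply_symm_apply]⟩
    rw [himg, Set.ncard_image_of_injective _ σ.symm.injective]
    exact h4

lemma goodW_swapFun {u : ℕ → ℝ} (hu : goodW u) {i j : ℕ} (hi : 1 ≤ i) (hj : 1 ≤ j)
    (hij : i ≠ j) : goodW (swapFun i j u) := by
  have h : swapFun i j u = fun k => u (Equiv.swap i j k) := by
    funext k
    unfold swapFun
    rcases eq_or_ne k i with rfl | hki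
    · simp
    · rcases eq_or_ne k j with rfl | hkj
      · simp [hki]
      · simp [hki, hkj, Equiv.swap_apply_of_ne_of_ne hki hkj]
  rw [h]
  exact goodW_comp hu _ (Equiv.swap_apply_of_ne_of_ne (by omega) (by omega))

lemma negSwapFun_apply_left {i j : ℕ} (hij : i ≠ j) (u : ℕ → ℝ) :
    negSwapFun i j u i = -u j := by simp [negSwapFun]

lemma negSwapFun_apply_right {i j : ℕ} (hij : i ≠ j) (u : ℕ → ℝ) :
    negSwapFun i j u j = -u i := by
  simp [negSwapFun, if_neg hij.symm]

lemma negSwapFun_apply_other {i j k : ℕ} (hk1 : k ≠ i) (hk2 : k ≠ j) (u : ℕ → ℝ) :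
    negSwapFun i j u k = u k := by simp [negSwapFun, hk1, hk2]

lemma goodW_negSwapFun {u : ℕ → ℝ} (hu : goodW u) {i j : ℕ} (hi : 1 ≤ i) (hj : 1 ≤ j)
    (hij : i ≠ j) : goodW (negSwapFun i j u) := by
  have hswap : goodW (swapFun i j u) := goodW_swapFun hu hi hj hij
  obtain ⟨h1, h2, h3, h4⟩ := hswap
  have habs : ∀ k, |negSwapFun i j u k| = |swapFun i j u k| := by
    intro k
    unfold negSwapFun swapFun
    split_ifs <;> simp [abs_neg]
  have hval : ∀ k, k ≠ i → k ≠ j → negSwapFun i j u k = swapFun i j u k := by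
    intro k h h'
    simp [negSwapFun, swapFun, h, h']
  have hvi : negSwapFun i j u i = -(swapFun i j u i) := by
    simp [negSwapFun, swapFun]
  have hvj : negSwapFun i j u j = -(swapFun i j u j) := by
    simp [negSwapFun, swapFun, if_neg hij.symm]
  have hvne : ∀ k, 1 ≤ k → swapFun i j u k ≠ 0 := by
    intro k hk h0
    obtain ⟨n, hn, he⟩ := h2 k hk
    rw [h0, abs_zero] at he
    have : (1:ℝ) ≤ (n:ℝ) := by exact_mod_cast hn
    linarith
  refine ⟨?_, ?_, ?_, ?_⟩
  · rw [hval 0 (by omega) (by omega)]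
    exact h1
  · intro k hk
    obtain ⟨n, hn, he⟩ := h2 k hk
    exact ⟨n, hn, by rw [habs k]; exact he⟩
  · intro n hn
    obtain ⟨k, ⟨hk1, hk2⟩, hk3⟩ := h3 n hn
    exact ⟨k, ⟨hk1, by rw [habs]; exact hk2⟩,
      fun y hy => hk3 y ⟨hy.1, by rw [← habs]; exact hy.2⟩⟩
  · apply even_ncard_congr (S := {k | 1 ≤ k ∧ 0 < swapFun i j u k}) hij ?_ ?_ h4
    · intro k hk1 hk2
      simp only [Set.mem_setOf_eq]
      rw [hval k hk1 hk2]
    · have hvi0 := hvne i hi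
      have hvj0 := hvne j hj
      have hlt : ∀ x : ℝ, x ≠ 0 → (x < 0 ↔ ¬ 0 < x) := by
        intro x hx
        constructor
        · intro h h'; linarith
        · intro h; rcases hx.lt_or_gt with h' | h'
          · exact h'
          · exact absurd h' h
      simp only [Set.mem_setOf_eq, hvi, hvj, hi, hj, true_and, neg_pos]
      rw [hlt _ hvi0, hlt _ hvj0]
      tauto

lemma goodW_Dgroup {g : Equiv.Perm (ℕ → ℝ)} (hg : g ∈ Dgroup) :
    (∀ u, goodW u → goodW (g u)) ∧ (∀ u, goodW u → goodW (g⁻¹ u)) := by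
  have hg' : g ∈ Subgroup.closure Dgens := hg
  induction hg' using Subgroup.closure_induction with
  | mem x hx =>
      obtain ⟨i, j, hi, hij, hx | hx⟩ := hx <;> subst hx
      · have hgen : ∀ u, goodW u → goodW (swapPerm i j u) := fun u hu =>
          goodW_swapFun hu hi (by omega) (by omega)
        refine ⟨hgen, ?_⟩
        have hinv : (swapPerm i j)⁻¹ = swapPerm i j :=
          inv_eq_of_mul_eq_one_left (Equiv.ext fun v => swapFun_involutive i j v)
        rw [hinv]
        exact hgen
      · have hgen : ∀ u, goodW u → goodW (negSwapPerm i j u) := fun u hu =>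
          goodW_negSwapFun hu hi (by omega) (by omega)
        refine ⟨hgen, ?_⟩
        have hinv : (negSwapPerm i j)⁻¹ = negSwapPerm i j :=
          inv_eq_of_mul_eq_one_left (Equiv.ext fun v => negSwapFun_involutive i j v)
        rw [hinv]
        exact hgen
  | one => constructor <;> intro u hu <;> simpa using hu
  | mul x y hx hy ihx ihy =>
      constructor
      · intro u hu
        have h1 := (ihy hy).1 u hu
        have h2 := (ihx hx).1 _ h1
        simpa [Equiv.Perm.mul_apply] using h2
      · intro u hu
        have h1 := (ihx hx).2 u hu
        have h2 := (ihy hy).2 _ h1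
        rw [mul_inv_rev]
        simpa [Equiv.Perm.mul_apply] using h2
  | inv x hx ih =>
      exact ⟨(ih hx).2, fun u hu => by simpa using (ih hx).1 u hu⟩

lemma goodW_of_Vset {w : ℕ → ℝ} (hw : w ∈ Vset vminus) : goodW w := by
  obtain ⟨⟨g, hgD, hgw⟩, -⟩ := hw
  rw [← hgw]
  exact (goodW_Dgroup hgD).1 vminus goodW_vminus

lemma Vset_negSwap {w : ℕ → ℝ} (hw : w ∈ Vset vminus) {p q : ℕ} (hp : 1 ≤ p) (hpq : p < q)
    (hsd : StronglyDecr (negSwapFun p q w)) : negSwapFun p q w ∈ Vset vminus := by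
  obtain ⟨⟨g, hgD, hgw⟩, -⟩ := hw
  refine ⟨⟨negSwapPerm p q * g, ?_, ?_⟩, hsd⟩
  · exact Subgroup.mul_mem _ (Subgroup.subset_closure ⟨p, q, hp, hpq, Or.inr rfl⟩) hgD
  · rw [Equiv.Perm.mul_apply, hgw]
    rfl

/-! ### Part 4: structure of good strongly decreasing sequences -/

lemma sd_strict {u : ℕ → ℝ} (hsd : StronglyDecr u) :
    ∀ i d : ℕ, 1 ≤ i → u (i + d) ≤ u i - d := by
  intro i d hi
  induction d with
  | zero => simp
  | succ d ih =>
      have h1 := hsd (i + d) (by omega)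
      push_cast
      push_cast at ih
      have : u (i + (d + 1)) = u ((i + d) + 1) := by ring_nf
      rw [this]
      linarith

lemma sd_le {u : ℕ → ℝ} (hsd : StronglyDecr u) {i j : ℕ} (hi : 1 ≤ i) (hij : i ≤ j) :
    u j ≤ u i := by
  have h := sd_strict hsd i (j - i) hi
  rw [show i + (j - i) = j by omega] at h
  have : (0:ℝ) ≤ ((j - i : ℕ) : ℝ) := Nat.cast_nonneg _
  linarith

lemma sd_lt {u : ℕ → ℝ} (hsd : StronglyDecr u) {i j : ℕ} (hi : 1 ≤ i) (hij : i < j) :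
    u j < u i := by
  have h := sd_strict hsd i (j - i) hi
  rw [show i + (j - i) = j by omega] at h
  have : (1:ℝ) ≤ ((j - i : ℕ) : ℝ) := by exact_mod_cast (by omega : 1 ≤ j - i)
  linarith

lemma sd_inj {u : ℕ → ℝ} (hsd : StronglyDecr u) {a b : ℕ} (ha : 1 ≤ a) (hb : 1 ≤ b)
    (h : u a = u b) : a = b := by
  rcases lt_trichotomy a b with hl | he | hl
  · exact absurd h.symm (sd_lt hsd ha hl).ne
  · exact he
  · exact absurd h (sd_lt hsd hb hl).ne

lemma mem_Pmap {w : ℕ → ℝ} {n : ℕ} : n ∈ Pmap w ↔ 1 ≤ n ∧ ∃ i, 1 ≤ i ∧ w i = n :=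
  Iff.rfl

lemma val_unique {u : ℕ → ℝ} (hg : goodW u) {n : ℕ} (hn : 1 ≤ n) {i j : ℕ}
    (hi : 1 ≤ i) (hj : 1 ≤ j) (h1 : |u i| = (n : ℝ)) (h2 : |u j| = (n : ℝ)) : i = j := by
  obtain ⟨k, -, hk⟩ := hg.2.2.1 n hn
  rw [hk i ⟨hi, h1⟩, hk j ⟨hj, h2⟩]

lemma val_cases {u : ℕ → ℝ} (hg : goodW u) {i : ℕ} (hi : 1 ≤ i) :
    ∃ n : ℕ, 1 ≤ n ∧ ((u i = (n : ℝ) ∧ n ∈ Pmap u) ∨ (u i = -(n : ℝ) ∧ n ∉ Pmap u)) := by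
  obtain ⟨n, hn, habs⟩ := hg.2.1 i hi
  rcases (abs_eq (by positivity : (0:ℝ) ≤ (n:ℝ))).mp habs with h | h
  · exact ⟨n, hn, Or.inl ⟨h, ⟨hn, i, hi, h⟩⟩⟩
  · refine ⟨n, hn, Or.inr ⟨h, ?_⟩⟩
    rintro ⟨-, i', hi', hv⟩
    have he : i = i' := val_unique hg hn hi hi' habs (by rw [hv]; exact Nat.abs_cast n)
    rw [← he, h] at hv
    have hn' : (1:ℝ) ≤ (n:ℝ) := by exact_mod_cast hn
    linarith

lemma exists_neg {u : ℕ → ℝ} (hg : goodW u) {n : ℕ} (hn : 1 ≤ n) (hnP : n ∉ Pmap u) :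
    ∃ i, 1 ≤ i ∧ u i = -(n : ℝ) := by
  obtain ⟨i, ⟨hi, habs⟩, -⟩ := hg.2.2.1 n hn
  rcases (abs_eq (by positivity : (0:ℝ) ≤ (n:ℝ))).mp habs with h | h
  · exact absurd ⟨hn, i, hi, h⟩ hnP
  · exact ⟨i, hi, h⟩

lemma pos_of_mem {u : ℕ → ℝ} (hg : goodW u) {n : ℕ} (hnP : n ∈ Pmap u) :
    ∃ p, 1 ≤ p ∧ u p = (n : ℝ) ∧ ∀ j, 1 ≤ j → |u j| = (n : ℝ) → j = p := by
  obtain ⟨hn, i, hi, hv⟩ := hnP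
  exact ⟨i, hi, hv, fun j hj hja =>
    val_unique hg hn hj hi hja (by rw [hv]; exact Nat.abs_cast n)⟩

lemma neg_of_not_mem {u : ℕ → ℝ} (hg : goodW u) {n : ℕ} (hn : 1 ≤ n) (hnP : n ∉ Pmap u) :
    ∃ q, 1 ≤ q ∧ u q = -(n : ℝ) ∧ ∀ j, 1 ≤ j → |u j| = (n : ℝ) → j = q := by
  obtain ⟨i, hi, hv⟩ := exists_neg hg hn hnP
  exact ⟨i, hi, hv, fun j hj hja =>
    val_unique hg hn hj hi hja (by rw [hv, abs_neg]; exact Nat.abs_cast n)⟩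

lemma downclosed_mem {S : Set ℕ} (hfin : S.Finite) (h1 : ∀ i ∈ S, 1 ≤ i)
    (hdc : ∀ i ∈ S, ∀ j, 1 ≤ j → j ≤ i → j ∈ S) {i : ℕ} :
    i ∈ S ↔ 1 ≤ i ∧ i ≤ S.ncard := by
  rcases S.eq_empty_or_nonempty with rfl | hne
  · simp
    omega
  · have hne' : hfin.toFinset.Nonempty := by
      rwa [Set.Finite.toFinset_nonempty]
    obtain ⟨M, hMmem, hMmax⟩ : ∃ M, M ∈ S ∧ ∀ x ∈ S, x ≤ M := by
      refine ⟨hfin.toFinset.max' hne', ?_, ?_⟩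
      · have := hfin.toFinset.max'_mem hne'
        rwa [Set.Finite.mem_toFinset] at this
      · intro x hx
        exact hfin.toFinset.le_max' x ((Set.Finite.mem_toFinset hfin).mpr hx)
    have hSI : S = Set.Icc 1 M := by
      ext k
      simp only [Set.mem_Icc]
      constructor
      · intro hk
        exact ⟨h1 k hk, hMmax k hk⟩
      · rintro ⟨hk1, hk2⟩
        exact hdc M hMmem k hk1 hk2
    have hcard : S.ncard = M := by
      rw [hSI, ← Finset.coe_Icc, Set.ncard_coe_finset, Nat.card_Icc]
      omega
    rw [hcard, hSI, Set.mem_Icc]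

lemma seqRankPos {u : ℕ → ℝ} (hg : goodW u) (hsd : StronglyDecr u) {P : Finset ℕ}
    (hP : ↑P = Pmap u) {n : ℕ} (hn : 1 ≤ n) {i : ℕ} (hi : 1 ≤ i) :
    ((n : ℝ) ≤ u i ↔ i ≤ fcount P n) := by
  classical
  set S : Set ℕ := {j | 1 ≤ j ∧ (n : ℝ) ≤ u j} with hS
  obtain ⟨n1, hn1, habs1⟩ := hg.2.1 1 le_rfl
  have hbound : ∀ j ∈ S, j ≤ n1 := by
    rintro j ⟨hj1, hj2⟩
    have h1 := sd_strict hsd 1 (j - 1) le_rfl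
    rw [show 1 + (j - 1) = j by omega] at h1
    have h2 : u 1 ≤ (n1 : ℝ) := by rw [← habs1]; exact le_abs_self _
    have h3 : (1:ℝ) ≤ (n:ℝ) := by exact_mod_cast hn
    have h4 : ((j - 1 : ℕ) : ℝ) = (j : ℝ) - 1 := by
      rw [Nat.cast_sub hj1]; norm_num
    rw [h4] at h1
    have : (j : ℝ) ≤ (n1 : ℝ) := by linarith
    exact_mod_cast this
  have hfin : S.Finite := Set.Finite.subset (Set.finite_Icc 1 n1)
    (fun j hj => Set.mem_Icc.mpr ⟨hj.1, hbound j hj⟩)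
  have hdc : ∀ a ∈ S, ∀ b, 1 ≤ b → b ≤ a → b ∈ S := by
    rintro a ⟨ha1, ha2⟩ b hb1 hba
    exact ⟨hb1, le_trans ha2 (sd_le hsd hb1 hba)⟩
  have hPmem : ∀ k : ℕ, k ∈ P ↔ k ∈ Pmap u := by
    intro k
    rw [← hP, Finset.mem_coe]
  have himg : (fun j => ⌊u j⌋₊) '' S = ↑(P.filter (fun p => n ≤ p)) := by
    ext p
    simp only [Set.mem_image, Finset.coe_filter, Set.mem_setOf_eq]
    constructor
    · rintro ⟨j, ⟨hj1, hj2⟩, rfl⟩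
      obtain ⟨m, hm, hc⟩ := val_cases hg hj1
      rcases hc with ⟨hv, hmem⟩ | ⟨hv, -⟩
      · rw [hv, Nat.floor_natCast]
        refine ⟨(hPmem m).mpr hmem, ?_⟩
        rw [hv] at hj2
        exact_mod_cast hj2
      · exfalso
        have hm' : (1:ℝ) ≤ (m:ℝ) := by exact_mod_cast hm
        have hn' : (1:ℝ) ≤ (n:ℝ) := by exact_mod_cast hn
        rw [hv] at hj2
        linarith
    · rintro ⟨hpP, hnp⟩
      obtain ⟨hp1, j, hj1, hjv⟩ := (hPmem p).mp hpP
      refine ⟨j, ⟨hj1, by rw [hjv]; exact_mod_cast hnp⟩, by rw [hjv, Nat.floor_natCast]⟩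
  have hinj : Set.InjOn (fun j => ⌊u j⌋₊) S := by
    rintro a ⟨ha1, ha2⟩ b ⟨hb1, hb2⟩ hab
    have hn' : (1:ℝ) ≤ (n:ℝ) := by exact_mod_cast hn
    obtain ⟨ma, hma, hca⟩ := val_cases hg ha1
    obtain ⟨mb, hmb, hcb⟩ := val_cases hg hb1
    rcases hca with ⟨hva, -⟩ | ⟨hva, -⟩
    swap
    · exfalso
      have : (1:ℝ) ≤ (ma:ℝ) := by exact_mod_cast hma
      rw [hva] at ha2; linarith
    rcases hcb with ⟨hvb, -⟩ | ⟨hvb, -⟩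
    swap
    · exfalso
      have : (1:ℝ) ≤ (mb:ℝ) := by exact_mod_cast hmb
      rw [hvb] at hb2; linarith
    simp only [hva, hvb, Nat.floor_natCast] at hab
    apply sd_inj hsd ha1 hb1
    rw [hva, hvb, hab]
  have hcount : S.ncard = fcount P n := by
    calc S.ncard = ((fun j => ⌊u j⌋₊) '' S).ncard := (Set.ncard_image_of_injOn hinj).symm
    _ = (↑(P.filter (fun p => n ≤ p)) : Set ℕ).ncard := by rw [himg]
    _ = fcount P n := by rw [Set.ncard_coe_finset]; rfl
  have hmem := downclosed_mem hfin (fun a ha => ha.1) hdc (i := i)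
  rw [hcount] at hmem
  constructor
  · intro h
    exact (hmem.mp ⟨hi, h⟩).2
  · intro h
    exact (hmem.mpr ⟨hi, h⟩).2

lemma seqRankNeg {u : ℕ → ℝ} (hg : goodW u) (hsd : StronglyDecr u) {P : Finset ℕ}
    (hP : ↑P = Pmap u) (k : ℕ) {i : ℕ} (hi : 1 ≤ i) :
    (-(k : ℝ) ≤ u i ↔ i ≤ k + fcount P (k + 1)) := by
  classical
  have hPmem : ∀ m : ℕ, m ∈ P ↔ m ∈ Pmap u := by
    intro m
    rw [← hP, Finset.mem_coe]
  have hP1 : ∀ p ∈ P, 1 ≤ p := fun p hp => ((hPmem p).mp hp).1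
  set S : Set ℕ := {j | 1 ≤ j ∧ -(k : ℝ) ≤ u j} with hS
  obtain ⟨n1, hn1, habs1⟩ := hg.2.1 1 le_rfl
  have hbound : ∀ j ∈ S, j ≤ n1 + k + 1 := by
    rintro j ⟨hj1, hj2⟩
    have h1 := sd_strict hsd 1 (j - 1) le_rfl
    rw [show 1 + (j - 1) = j by omega] at h1
    have h2 : u 1 ≤ (n1 : ℝ) := by rw [← habs1]; exact le_abs_self _
    have h4 : ((j - 1 : ℕ) : ℝ) = (j : ℝ) - 1 := by
      rw [Nat.cast_sub hj1]; norm_num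
    rw [h4] at h1
    have : (j : ℝ) ≤ (n1 : ℝ) + (k : ℝ) + 1 := by linarith
    exact_mod_cast this
  have hfin : S.Finite := Set.Finite.subset (Set.finite_Icc 1 (n1 + k + 1))
    (fun j hj => Set.mem_Icc.mpr ⟨hj.1, hbound j hj⟩)
  have hdc : ∀ a ∈ S, ∀ b, 1 ≤ b → b ≤ a → b ∈ S := by
    rintro a ⟨ha1, ha2⟩ b hb1 hba
    exact ⟨hb1, le_trans ha2 (sd_le hsd hb1 hba)⟩
  set T : Finset ℕ :=
    ((Finset.Icc 1 k).filter (fun b => b ∉ P)).image (fun b => k - b)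
      ∪ P.image (fun p => k + p) with hT
  set φ : ℕ → ℕ := fun j => if 0 < u j then k + ⌊u j⌋₊ else k - ⌊-(u j)⌋₊ with hφ
  have himg : φ '' S = ↑T := by
    ext y
    simp only [Set.mem_image, hT, Finset.coe_union, Set.mem_union, Finset.coe_image,
      Finset.coe_filter, Finset.mem_Icc, Set.mem_setOf_eq]
    constructor
    · rintro ⟨j, ⟨hj1, hj2⟩, rfl⟩
      obtain ⟨m, hm, hc⟩ := val_cases hg hj1
      rcases hc with ⟨hv, hmem⟩ | ⟨hv, hmem⟩
      · right
        refine ⟨m, (hPmem m).mpr hmem, ?_⟩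
        have hpos : 0 < u j := by
          rw [hv]; exact_mod_cast hm
        show k + m = if 0 < u j then k + ⌊u j⌋₊ else k - ⌊-u j⌋₊
        rw [if_pos hpos, hv, Nat.floor_natCast]
      · left
        have hneg : ¬ 0 < u j := by
          rw [hv]
          have : (1:ℝ) ≤ (m:ℝ) := by exact_mod_cast hm
          linarith
        have hmk : m ≤ k := by
          rw [hv] at hj2
          have : (m:ℝ) ≤ (k:ℝ) := by linarith
          exact_mod_cast this
        refine ⟨m, ⟨⟨hm, hmk⟩, fun h => hmem ((hPmem m).mp h)⟩, ?_⟩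
        show k - m = if 0 < u j then k + ⌊u j⌋₊ else k - ⌊-u j⌋₊
        rw [if_neg hneg, hv, neg_neg, Nat.floor_natCast]
    · rintro (⟨b, ⟨⟨hb1, hbk⟩, hbP⟩, rfl⟩ | ⟨p, hpP, rfl⟩)
      · have hbPm : b ∉ Pmap u := fun h => hbP ((hPmem b).mpr h)
        obtain ⟨j, hj1, hjv⟩ := exists_neg hg hb1 hbPm
        refine ⟨j, ⟨hj1, ?_⟩, ?_⟩
        · rw [hjv]
          have : (b:ℝ) ≤ (k:ℝ) := by exact_mod_cast hbk
          linarith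
        · have hneg : ¬ 0 < u j := by
            rw [hjv]
            have : (1:ℝ) ≤ (b:ℝ) := by exact_mod_cast hb1
            linarith
          show (if 0 < u j then k + ⌊u j⌋₊ else k - ⌊-u j⌋₊) = k - b
          rw [if_neg hneg, hjv, neg_neg, Nat.floor_natCast]
      · obtain ⟨hp1, j, hj1, hjv⟩ := (hPmem p).mp hpP
        refine ⟨j, ⟨hj1, ?_⟩, ?_⟩
        · rw [hjv]
          have h1 : (0:ℝ) ≤ (p:ℝ) := Nat.cast_nonneg p
          have h2 : (0:ℝ) ≤ (k:ℝ) := Nat.cast_nonneg k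
          linarith
        · have hpos : 0 < u j := by
            rw [hjv]; exact_mod_cast hp1
          show (if 0 < u j then k + ⌊u j⌋₊ else k - ⌊-u j⌋₊) = k + p
          rw [if_pos hpos, hjv, Nat.floor_natCast]
  have hinj : Set.InjOn φ S := by
    rintro a ⟨ha1, ha2⟩ b ⟨hb1, hb2⟩ hab
    obtain ⟨ma, hma, hca⟩ := val_cases hg ha1
    obtain ⟨mb, hmb, hcb⟩ := val_cases hg hb1
    have hma' : (1:ℝ) ≤ (ma:ℝ) := by exact_mod_cast hma
    have hmb' : (1:ℝ) ≤ (mb:ℝ) := by exact_mod_cast hmb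
    have hab' : (if 0 < u a then k + ⌊u a⌋₊ else k - ⌊-(u a)⌋₊)
        = (if 0 < u b then k + ⌊u b⌋₊ else k - ⌊-(u b)⌋₊) := hab
    have key : u a = u b := by
      rcases hca with ⟨hva, -⟩ | ⟨hva, -⟩ <;> rcases hcb with ⟨hvb, -⟩ | ⟨hvb, -⟩
      · have hpa : 0 < u a := by rw [hva]; linarith
        have hpb : 0 < u b := by rw [hvb]; linarith
        rw [if_pos hpa, if_pos hpb, hva, hvb] at hab'
        simp only [Nat.floor_natCast] at hab'
        rw [hva, hvb]
        have heq : ma = mb := by omega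
        rw [heq]
      · exfalso
        have hpa : 0 < u a := by rw [hva]; linarith
        have hpb : ¬ 0 < u b := by rw [hvb]; linarith
        rw [if_pos hpa, if_neg hpb, hva, hvb] at hab'
        simp only [neg_neg, Nat.floor_natCast] at hab'
        omega
      · exfalso
        have hpa : ¬ 0 < u a := by rw [hva]; linarith
        have hpb : 0 < u b := by rw [hvb]; linarith
        rw [if_neg hpa, if_pos hpb, hva, hvb] at hab'
        simp only [neg_neg, Nat.floor_natCast] at hab'
        omega
      · have hpa : ¬ 0 < u a := by rw [hva]; linarith
        have hpb : ¬ 0 < u b := by rw [hvb]; linarith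
        have hmak : ma ≤ k := by
          rw [hva] at ha2
          have : (ma:ℝ) ≤ (k:ℝ) := by linarith
          exact_mod_cast this
        have hmbk : mb ≤ k := by
          rw [hvb] at hb2
          have : (mb:ℝ) ≤ (k:ℝ) := by linarith
          exact_mod_cast this
        rw [if_neg hpa, if_neg hpb, hva, hvb] at hab'
        simp only [neg_neg, Nat.floor_natCast] at hab'
        rw [hva, hvb]
        have heq : ma = mb := by omega
        rw [heq]
    exact sd_inj hsd ha1 hb1 key
  have hTcard : T.card = k + fcount P (k + 1) := by
    rw [hT]
    have hd : Disjoint (((Finset.Icc 1 k).filter (fun b => b ∉ P)).image (fun b => k - b))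
        (P.image (fun p => k + p)) := by
      rw [Finset.disjoint_left]
      rintro x hx1 hx2
      obtain ⟨b, hb, rfl⟩ := Finset.mem_image.mp hx1
      obtain ⟨p, hp, hpe⟩ := Finset.mem_image.mp hx2
      rw [Finset.mem_filter, Finset.mem_Icc] at hb
      have := hP1 p hp
      have h' : k + p = k - b := hpe
      omega
    rw [Finset.card_union_of_disjoint hd]
    have hc1 : (((Finset.Icc 1 k).filter (fun b => b ∉ P)).image (fun b => k - b)).card
        = ((Finset.Icc 1 k).filter (fun b => b ∉ P)).card := by
      apply Finset.card_image_of_injOn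
      intro x hx y hy hxy
      rw [Finset.mem_coe, Finset.mem_filter, Finset.mem_Icc] at hx hy
      have h' : k - x = k - y := hxy
      omega
    have hc2 : (P.image (fun p => k + p)).card = P.card :=
      Finset.card_image_of_injOn (fun x _ y _ hxy => by
        have h' : k + x = k + y := hxy
        omega)
    rw [hc1, hc2]
    have hsplit : ((Finset.Icc 1 k).filter (fun b => b ∈ P)).card
        + ((Finset.Icc 1 k).filter (fun b => b ∉ P)).card = k := by
      rw [Finset.card_filter_add_card_filter_not, Nat.card_Icc]
      omega
    have hPsplit : ((Finset.Icc 1 k).filter (fun b => b ∈ P)).card + fcount P (k + 1)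
        = P.card := by
      have he : (Finset.Icc 1 k).filter (fun b => b ∈ P) = P.filter (fun p => ¬ k + 1 ≤ p) := by
        ext x
        simp only [Finset.mem_filter, Finset.mem_Icc]
        constructor
        · rintro ⟨⟨hx1, hxk⟩, hxP⟩
          exact ⟨hxP, by omega⟩
        · rintro ⟨hxP, hxk⟩
          exact ⟨⟨hP1 x hxP, by omega⟩, hxP⟩
      rw [he, Nat.add_comm]
      exact Finset.card_filter_add_card_filter_not (p := fun p => k + 1 ≤ p)
    omega
  have hcount : S.ncard = k + fcount P (k + 1) := by
    calc S.ncard = (φ '' S).ncard := (Set.ncard_image_of_injOn hinj).symm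
    _ = (↑T : Set ℕ).ncard := by rw [himg]
    _ = T.card := Set.ncard_coe_finset T
    _ = k + fcount P (k + 1) := hTcard
  have hmem := downclosed_mem hfin (fun a ha => ha.1) hdc (i := i)
  rw [hcount] at hmem
  constructor
  · intro h
    exact (hmem.mp ⟨hi, h⟩).2
  · intro h
    exact (hmem.mpr ⟨hi, h⟩).2

lemma leSeq_iff {u u' : ℕ → ℝ} (hg : goodW u) (hsd : StronglyDecr u)
    (hg' : goodW u') (hsd' : StronglyDecr u') {P Q : Finset ℕ}
    (hP : ↑P = Pmap u) (hQ : ↑Q = Pmap u') :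
    leSeq u u' ↔ ∀ n, 1 ≤ n → fcount P n ≤ fcount Q n := by
  constructor
  · intro hle n hn
    rcases Nat.eq_zero_or_pos (fcount P n) with h0 | hpos
    · omega
    · have h1 : (n : ℝ) ≤ u (fcount P n) := (seqRankPos hg hsd hP hn hpos).mpr le_rfl
      have h2 : (n : ℝ) ≤ u' (fcount P n) := le_trans h1 (hle _ hpos)
      exact (seqRankPos hg' hsd' hQ hn hpos).mp h2
  · intro hdom i hi
    obtain ⟨m, hm, hc⟩ := val_cases hg hi
    rcases hc with ⟨hv, -⟩ | ⟨hv, -⟩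
    · have h1 : i ≤ fcount P m := (seqRankPos hg hsd hP hm hi).mp (le_of_eq hv.symm)
      have h2 : i ≤ fcount Q m := le_trans h1 (hdom m hm)
      have h3 := (seqRankPos hg' hsd' hQ hm hi).mpr h2
      rw [hv]
      exact h3
    · have h1 : i ≤ m + fcount P (m + 1) := (seqRankNeg hg hsd hP m hi).mp (le_of_eq hv.symm)
      have h2 : i ≤ m + fcount Q (m + 1) := by
        have := hdom (m + 1) (by omega)
        omega
      have h3 := (seqRankNeg hg' hsd' hQ m hi).mpr h2
      rw [hv]
      exact h3

lemma exists_PF {u : ℕ → ℝ} (hg : goodW u) (hsd : StronglyDecr u) :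
    ∃ P : Finset ℕ, ↑P = Pmap u ∧ (∀ p ∈ P, 1 ≤ p) ∧ Even P.card := by
  classical
  obtain ⟨n1, hn1, habs1⟩ := hg.2.1 1 le_rfl
  have hfin : (Pmap u).Finite := by
    apply Set.Finite.subset (Set.finite_Icc 1 n1)
    rintro n ⟨hn, i, hi, hv⟩
    have h1 : u i ≤ u 1 := sd_le hsd le_rfl hi
    have h2 : u 1 ≤ (n1 : ℝ) := by rw [← habs1]; exact le_abs_self _
    rw [hv] at h1
    have : (n : ℝ) ≤ (n1 : ℝ) := by linarith
    exact Set.mem_Icc.mpr ⟨hn, by exact_mod_cast this⟩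
  refine ⟨hfin.toFinset, hfin.coe_toFinset, ?_, ?_⟩
  · intro p hp
    exact ((hfin.mem_toFinset).mp hp).1
  · set S : Set ℕ := {i : ℕ | 1 ≤ i ∧ 0 < u i} with hSdef
    have himg : (fun j => ⌊u j⌋₊) '' S = ↑hfin.toFinset := by
      rw [hfin.coe_toFinset]
      ext p
      simp only [Set.mem_image, Set.mem_setOf_eq]
      constructor
      · rintro ⟨j, ⟨hj1, hj2⟩, rfl⟩
        obtain ⟨m, hm, hc⟩ := val_cases hg hj1
        rcases hc with ⟨hv, hmem⟩ | ⟨hv, -⟩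
        · rw [hv, Nat.floor_natCast]
          exact hmem
        · exfalso
          have : (1:ℝ) ≤ (m:ℝ) := by exact_mod_cast hm
          rw [hv] at hj2
          linarith
      · rintro ⟨hp1, j, hj1, hv⟩
        refine ⟨j, ⟨hj1, by rw [hv]; exact_mod_cast hp1⟩, by rw [hv, Nat.floor_natCast]⟩
    have hinj : Set.InjOn (fun j => ⌊u j⌋₊) S := by
      rintro a ⟨ha1, ha2⟩ b ⟨hb1, hb2⟩ hab
      obtain ⟨ma, hma, hca⟩ := val_cases hg ha1
      obtain ⟨mb, hmb, hcb⟩ := val_cases hg hb1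
      have hma' : (1:ℝ) ≤ (ma:ℝ) := by exact_mod_cast hma
      have hmb' : (1:ℝ) ≤ (mb:ℝ) := by exact_mod_cast hmb
      rcases hca with ⟨hva, -⟩ | ⟨hva, -⟩
      swap
      · exfalso; rw [hva] at ha2; linarith
      rcases hcb with ⟨hvb, -⟩ | ⟨hvb, -⟩
      swap
      · exfalso; rw [hvb] at hb2; linarith
      simp only [hva, hvb, Nat.floor_natCast] at hab
      apply sd_inj hsd ha1 hb1
      rw [hva, hvb, hab]
    have hcard : hfin.toFinset.card = S.ncard := by
      rw [← Set.ncard_coe_finset, ← himg, Set.ncard_image_of_injOn hinj]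
    rw [hcard]
    exact hg.2.2.2

lemma eq_of_Pmap_eq {u u' : ℕ → ℝ} (hg : goodW u) (hsd : StronglyDecr u)
    (hg' : goodW u') (hsd' : StronglyDecr u') (h : Pmap u = Pmap u') : u = u' := by
  obtain ⟨P, hP, -, -⟩ := exists_PF hg hsd
  have hQ : ↑P = Pmap u' := by rw [hP, h]
  have h1 : leSeq u u' := (leSeq_iff hg hsd hg' hsd' hP hQ).mpr (fun n _ => le_rfl)
  have h2 : leSeq u' u := (leSeq_iff hg' hsd' hg hsd hQ hP).mpr (fun n _ => le_rfl)
  funext i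
  rcases Nat.eq_zero_or_pos i with rfl | hi
  · rw [hg.1, hg'.1]
  · exact le_antisymm (h1 i hi) (h2 i hi)

/-! ### Part 5: the two moves -/

lemma move_a {u : ℕ → ℝ} (hg : goodW u) (hsd : StronglyDecr u) {β : ℕ}
    (hβ : β ∈ Pmap u) (hβ1 : β + 1 ∉ Pmap u) :
    ∃ p q : ℕ, 1 ≤ p ∧ p < q ∧
      StronglyDecr (negSwapFun p q u) ∧
      Pmap (negSwapFun p q u) = (Pmap u \ {β}) ∪ {β + 1} ∧
      leSeq u (negSwapFun p q u) ∧ negSwapFun p q u ≠ u := by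
  have hβ1' : 1 ≤ β := hβ.1
  have hβR : (1:ℝ) ≤ (β:ℝ) := by exact_mod_cast hβ1'
  obtain ⟨p, hp1, hpv, hpu⟩ := pos_of_mem hg hβ
  obtain ⟨q, hq1, hqv, hqu⟩ := neg_of_not_mem hg (by omega) hβ1
  have hqv' : u q = -((β:ℝ) + 1) := by rw [hqv]; push_cast; ring
  have hpq : p < q := by
    rcases lt_trichotomy p q with h | h | h
    · exact h
    · exfalso
      rw [h, hqv'] at hpv
      linarith
    · exfalso
      have := sd_lt hsd hq1 h
      rw [hpv, hqv'] at this
      linarith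
  have hpq' : p ≠ q := ne_of_lt hpq
  have hval : ∀ k, k ≠ p → k ≠ q → negSwapFun p q u k = u k :=
    fun k h h' => negSwapFun_apply_other h h' u
  have hvp : negSwapFun p q u p = (β:ℝ) + 1 := by
    rw [negSwapFun_apply_left hpq', hqv']; ring
  have hvq : negSwapFun p q u q = -(β:ℝ) := by
    rw [negSwapFun_apply_right hpq', hpv]
  have habsp : ∀ i, 1 ≤ i → |u i| = (β:ℝ) → i = p := fun i hi h => hpu i hi h
  have habsq : ∀ i, 1 ≤ i → |u i| = (β:ℝ) + 1 → i = q := fun i hi h =>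
    hqu i hi (by rw [h]; push_cast; ring)
  have hSD : StronglyDecr (negSwapFun p q u) := by
    intro i hi
    by_cases hip : i = p
    · subst hip
      by_cases hpq1 : i + 1 = q
      · rw [hpq1, hvq, hvp]
        linarith
      · rw [hval (i+1) (by omega) hpq1, hvp]
        have h1 := hsd i hi
        rw [hpv] at h1
        linarith
    · by_cases hiq : i = q
      · subst hiq
        rw [hval (i+1) (by omega) (by omega), hvq]
        have h1 := hsd i hi
        rw [hqv'] at h1
        linarith
      · by_cases hip1 : i + 1 = p
        · rw [hip1, hvp, hval i hip hiq]
          have h1 := hsd i hi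
          rw [hip1, hpv] at h1
          obtain ⟨m, hm, hc⟩ := val_cases hg hi
          rcases hc with ⟨hv, hmem⟩ | ⟨hv, -⟩
          · have hmne : m ≠ β + 1 := by
              intro he
              apply hiq
              apply habsq i hi
              rw [hv, he]
              push_cast
              rw [abs_of_nonneg (by positivity)]
            have hmge : (β:ℝ) + 1 ≤ (m:ℝ) := by
              rw [hv] at h1
              have : (β:ℝ) + 1 ≤ (m:ℝ) := by linarith
              exact this
            have hmge' : β + 1 ≤ m := by exact_mod_cast hmge
            have hmge2 : β + 2 ≤ m := by omega
            have : (β:ℝ) + 2 ≤ (m:ℝ) := by exact_mod_cast hmge2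
            rw [hv]
            linarith
          · exfalso
            have : (1:ℝ) ≤ (m:ℝ) := by exact_mod_cast hm
            rw [hv] at h1
            linarith
        · by_cases hiq1 : i + 1 = q
          · rw [hiq1, hvq, hval i hip hiq]
            have h1 := hsd i hi
            rw [hiq1, hqv'] at h1
            obtain ⟨m, hm, hc⟩ := val_cases hg hi
            rcases hc with ⟨hv, -⟩ | ⟨hv, -⟩
            · have : (1:ℝ) ≤ (m:ℝ) := by exact_mod_cast hm
              rw [hv]
              linarith
            · have hmne : m ≠ β := by
                intro he
                apply hip
                apply habsp i hi
                rw [hv, he, abs_neg, abs_of_nonneg (by positivity)]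
              have hmle : (m:ℝ) ≤ (β:ℝ) := by
                rw [hv] at h1
                linarith
              have hmle' : m ≤ β := by exact_mod_cast hmle
              have hmle2 : m ≤ β - 1 := by omega
              have hc2 : (m:ℝ) ≤ (β:ℝ) - 1 := by
                have h9 : m + 1 ≤ β := by omega
                have h10 : ((m + 1 : ℕ):ℝ) ≤ (β:ℝ) := by exact_mod_cast h9
                push_cast at h10
                linarith
              rw [hv]
              linarith
          · rw [hval i hip hiq, hval (i+1) hip1 hiq1]
            exact hsd i hi
  have hPm : Pmap (negSwapFun p q u) = (Pmap u \ {β}) ∪ {β + 1} := by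
    ext n
    simp only [Set.mem_union, Set.mem_diff, Set.mem_singleton_iff]
    constructor
    · rintro ⟨hn, i, hi, hv⟩
      by_cases hipp : i = p
      · right
        subst hipp
        rw [hvp] at hv
        have : ((β + 1 : ℕ):ℝ) = (n:ℝ) := by push_cast; linarith
        exact_mod_cast this.symm
      · by_cases hiqq : i = q
        · exfalso
          subst hiqq
          rw [hvq] at hv
          have hn' : (1:ℝ) ≤ (n:ℝ) := by exact_mod_cast hn
          linarith
        · left
          rw [hval i hipp hiqq] at hv
          refine ⟨⟨hn, i, hi, hv⟩, ?_⟩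
          intro he
          apply hipp
          apply habsp i hi
          rw [hv, he, abs_of_nonneg (by positivity)]
    · rintro (⟨⟨hn, i, hi, hv⟩, hne⟩ | rfl)
      · refine ⟨hn, i, hi, ?_⟩
        have hip : i ≠ p := by
          intro he
          apply hne
          rw [he, hpv] at hv
          exact_mod_cast hv.symm
        have hiq : i ≠ q := by
          intro he
          rw [he, hqv'] at hv
          have hn' : (1:ℝ) ≤ (n:ℝ) := by exact_mod_cast hn
          linarith
        rw [hval i hip hiq]
        exact hv
      · exact ⟨by omega, p, hp1, by rw [hvp]; push_cast; ring⟩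
  have hle : leSeq u (negSwapFun p q u) := by
    intro i hi
    by_cases hip : i = p
    · subst hip
      rw [hvp, hpv]
      linarith
    · by_cases hiq : i = q
      · subst hiq
        rw [hvq, hqv']
        linarith
      · rw [hval i hip hiq]
  have hneq : negSwapFun p q u ≠ u := by
    intro he
    have := congrFun he p
    rw [hvp, hpv] at this
    linarith
  exact ⟨p, q, hp1, hpq, hSD, hPm, hle, hneq⟩

lemma move_b {u : ℕ → ℝ} (hg : goodW u) (hsd : StronglyDecr u)
    (h1 : 1 ∉ Pmap u) (h2 : 2 ∉ Pmap u) :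
    ∃ p q : ℕ, 1 ≤ p ∧ p < q ∧
      StronglyDecr (negSwapFun p q u) ∧
      Pmap (negSwapFun p q u) = Pmap u ∪ {1, 2} ∧
      leSeq u (negSwapFun p q u) ∧ negSwapFun p q u ≠ u := by
  obtain ⟨p, hp1, hpv, hpu⟩ := neg_of_not_mem hg le_rfl h1
  obtain ⟨q, hq1, hqv, hqu⟩ := neg_of_not_mem hg (by omega) h2
  have hpv' : u p = -(1:ℝ) := by rw [hpv]; norm_num
  have hqv' : u q = -(2:ℝ) := by rw [hqv]; norm_num
  have hpq : p < q := by
    rcases lt_trichotomy p q with h | h | h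
    · exact h
    · exfalso
      rw [h, hqv'] at hpv'
      linarith
    · exfalso
      have := sd_lt hsd hq1 h
      rw [hpv', hqv'] at this
      linarith
  have hpq' : p ≠ q := ne_of_lt hpq
  have hval : ∀ k, k ≠ p → k ≠ q → negSwapFun p q u k = u k :=
    fun k h h' => negSwapFun_apply_other h h' u
  have hvp : negSwapFun p q u p = (2:ℝ) := by
    rw [negSwapFun_apply_left hpq', hqv']; ring
  have hvq : negSwapFun p q u q = (1:ℝ) := by
    rw [negSwapFun_apply_right hpq', hpv']; ring
  have habsp : ∀ i, 1 ≤ i → |u i| = (1:ℝ) → i = p := fun i hi h =>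
    hpu i hi (by rw [h]; norm_num)
  have habsq : ∀ i, 1 ≤ i → |u i| = (2:ℝ) → i = q := fun i hi h =>
    hqu i hi (by rw [h]; norm_num)
  have hSD : StronglyDecr (negSwapFun p q u) := by
    intro i hi
    by_cases hip : i = p
    · subst hip
      by_cases hpq1 : i + 1 = q
      · rw [hpq1, hvq, hvp]
        norm_num
      · rw [hval (i+1) (by omega) hpq1, hvp]
        have h1' := hsd i hi
        rw [hpv'] at h1'
        linarith
    · by_cases hiq : i = q
      · subst hiq
        rw [hval (i+1) (by omega) (by omega), hvq]
        have h1' := hsd i hi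
        rw [hqv'] at h1'
        linarith
      · by_cases hip1 : i + 1 = p
        · rw [hip1, hvp, hval i hip hiq]
          have h1' := hsd i hi
          rw [hip1, hpv'] at h1'
          obtain ⟨m, hm, hc⟩ := val_cases hg hi
          rcases hc with ⟨hv, hmem⟩ | ⟨hv, -⟩
          · have hm1 : m ≠ 1 := by
              intro he
              rw [he] at hmem
              exact h1 hmem
            have hm2 : m ≠ 2 := by
              intro he
              rw [he] at hmem
              exact h2 hmem
            have : 3 ≤ m := by omega
            have h3 : (3:ℝ) ≤ (m:ℝ) := by exact_mod_cast this
            rw [hv]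
            linarith
          · exfalso
            have : (1:ℝ) ≤ (m:ℝ) := by exact_mod_cast hm
            rw [hv] at h1'
            linarith
        · by_cases hiq1 : i + 1 = q
          · rw [hiq1, hvq, hval i hip hiq]
            have h1' := hsd i hi
            rw [hiq1, hqv'] at h1'
            obtain ⟨m, hm, hc⟩ := val_cases hg hi
            rcases hc with ⟨hv, hmem⟩ | ⟨hv, -⟩
            · have hm1 : m ≠ 1 := by
                intro he
                rw [he] at hmem
                exact h1 hmem
              have : 2 ≤ m := by omega
              have h3 : (2:ℝ) ≤ (m:ℝ) := by exact_mod_cast this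
              rw [hv]
              linarith
            · have hm1 : m ≠ 1 := by
                intro he
                apply hip
                apply habsp i hi
                rw [hv, he, abs_neg]
                norm_num
              have hmle : (m:ℝ) ≤ (2:ℝ) := by
                rw [hv] at h1'
                linarith
              have hmle' : m ≤ 2 := by exact_mod_cast hmle
              have hm2 : m ≠ 2 := by
                intro he
                apply hiq
                apply habsq i hi
                rw [hv, he, abs_neg]
                norm_num
              omega
          · rw [hval i hip hiq, hval (i+1) hip1 hiq1]
            exact hsd i hi
  have hPm : Pmap (negSwapFun p q u) = Pmap u ∪ {1, 2} := by
    ext n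
    simp only [Set.mem_union, Set.mem_insert_iff, Set.mem_singleton_iff]
    constructor
    · rintro ⟨hn, i, hi, hv⟩
      by_cases hipp : i = p
      · right; right
        subst hipp
        rw [hvp] at hv
        exact_mod_cast hv.symm
      · by_cases hiqq : i = q
        · right; left
          subst hiqq
          rw [hvq] at hv
          exact_mod_cast hv.symm
        · left
          rw [hval i hipp hiqq] at hv
          exact ⟨hn, i, hi, hv⟩
    · rintro (⟨hn, i, hi, hv⟩ | rfl | rfl)
      · refine ⟨hn, i, hi, ?_⟩
        have hn' : (1:ℝ) ≤ (n:ℝ) := by exact_mod_cast hn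
        have hip : i ≠ p := by
          intro he
          rw [he, hpv'] at hv
          linarith
        have hiq : i ≠ q := by
          intro he
          rw [he, hqv'] at hv
          linarith
        rw [hval i hip hiq]
        exact hv
      · exact ⟨le_rfl, q, hq1, by rw [hvq]; norm_num⟩
      · exact ⟨by omega, p, hp1, by rw [hvp]; norm_num⟩
  have hle : leSeq u (negSwapFun p q u) := by
    intro i hi
    by_cases hip : i = p
    · subst hip
      rw [hvp, hpv']
      linarith
    · by_cases hiq : i = q
      · subst hiq
        rw [hvq, hqv']
        linarith
      · rw [hval i hip hiq]
  have hneq : negSwapFun p q u ≠ u := by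
    intro he
    have := congrFun he p
    rw [hvp, hpv'] at this
    linarith
  exact ⟨p, q, hp1, hpq, hSD, hPm, hle, hneq⟩

/-! ### Part 2: cover combinatorics -/

lemma exists_up_move {P Q : Finset ℕ} (hP1 : ∀ p ∈ P, 1 ≤ p) (hQ1 : ∀ q ∈ Q, 1 ≤ q)
    (hPe : Even P.card) (hQe : Even Q.card) (hne : P ≠ Q)
    (hdom : ∀ n, 1 ≤ n → fcount P n ≤ fcount Q n) :
    (∃ β, β ∈ P ∧ β + 1 ∉ P ∧
        ∀ n, 1 ≤ n → fcount (insert (β + 1) (P.erase β)) n ≤ fcount Q n) ∨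
    (1 ∉ P ∧ 2 ∉ P ∧
        ∀ n, 1 ≤ n → fcount (insert 1 (insert 2 P)) n ≤ fcount Q n) := by
  classical
  have hQsup : ∀ n, fcount Q n ≠ 0 → n ≤ Q.sup id := by
    intro n hn
    obtain ⟨q, hq⟩ := Finset.card_ne_zero.mp hn
    simp only [Finset.mem_filter] at hq
    exact le_trans hq.2 (Finset.le_sup (f := id) hq.1)
  set S : Finset ℕ := (Finset.Icc 1 (Q.sup id)).filter (fun n => fcount P n < fcount Q n)
    with hS
  have hmemS : ∀ n, 1 ≤ n → fcount P n < fcount Q n → n ∈ S := by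
    intro n hn hlt
    rw [hS, Finset.mem_filter, Finset.mem_Icc]
    exact ⟨⟨hn, hQsup n (by omega)⟩, hlt⟩
  have hSne : S.Nonempty := by
    by_contra hemp
    apply hne
    apply eq_of_fcount_eq hP1 hQ1
    intro n hn
    rcases lt_or_ge (fcount P n) (fcount Q n) with h | h
    · exact absurd (Finset.nonempty_of_ne_empty (Finset.ne_empty_of_mem (hmemS n hn h))) hemp
    · exact le_antisymm (hdom n hn) h
  obtain ⟨m, hmS, hmax⟩ : ∃ m, m ∈ S ∧ ∀ x ∈ S, x ≤ m :=
    ⟨S.max' hSne, S.max'_mem hSne, fun x hx => S.le_max' x hx⟩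
  have hm1 : 1 ≤ m := by
    have := hmS; rw [hS, Finset.mem_filter, Finset.mem_Icc] at this; exact this.1.1
  have hmlt : fcount P m < fcount Q m := by
    have := hmS; rw [hS, Finset.mem_filter] at this; exact this.2
  have hagree : ∀ n, m < n → fcount P n = fcount Q n := by
    intro n hn
    rcases lt_or_ge (fcount P n) (fcount Q n) with h | h
    · have hle := hmax n (hmemS n (by omega) h)
      omega
    · exact le_antisymm (hdom n (by omega)) h
  have hmP : m ∉ P ∧ m ∈ Q := by
    have h1 := fcount_step P m
    have h2 := fcount_step Q m
    have h3 := hagree (m + 1) (by omega)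
    constructor
    · intro hp
      rw [if_pos hp] at h1
      by_cases hq : m ∈ Q
      · rw [if_pos hq] at h2; omega
      · rw [if_neg hq] at h2; omega
    · by_contra hq
      rw [if_neg hq] at h2
      by_cases hp : m ∈ P
      · rw [if_pos hp] at h1; omega
      · rw [if_neg hp] at h1; omega
  by_cases hPbelow : ∃ p ∈ P, p < m
  · left
    have hPbne : (P.filter (fun p => p < m)).Nonempty := by
      obtain ⟨p, hp, hpm⟩ := hPbelow
      exact ⟨p, by rw [Finset.mem_filter]; exact ⟨hp, hpm⟩⟩
    obtain ⟨β, hβmem, hβmax'⟩ :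
        ∃ β, β ∈ P.filter (fun p => p < m) ∧
          ∀ x ∈ P.filter (fun p => p < m), x ≤ β :=
      ⟨_, (P.filter (fun p => p < m)).max'_mem hPbne,
        fun x hx => (P.filter (fun p => p < m)).le_max' x hx⟩
    have hβP : β ∈ P := (Finset.mem_filter.mp hβmem).1
    have hβm : β < m := (Finset.mem_filter.mp hβmem).2
    have hβmax : ∀ p ∈ P, p < m → p ≤ β := by
      intro p hp hpm
      exact hβmax' p (Finset.mem_filter.mpr ⟨hp, hpm⟩)
    have hβ1 : β + 1 ∉ P := by
      intro h
      have hne' : β + 1 ≠ m := fun he => hmP.1 (he ▸ h)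
      have := hβmax (β + 1) h (by omega)
      omega
    refine ⟨β, hβP, hβ1, ?_⟩
    intro n hn
    rw [fcount_move_a hβP hβ1]
    split_ifs with hcase
    · subst hcase
      have e1 : fcount P (β + 1) = fcount P m := by
        apply fcount_eq_of_gap (by omega)
        intro p hp hbp
        by_contra h
        have := hβmax p hp (by omega)
        omega
      have e2 : fcount Q m ≤ fcount Q (β + 1) := fcount_mono Q (by omega)
      omega
    · have := hdom n hn; omega
  · right
    have hPm : ∀ p ∈ P, m + 1 ≤ p := by
      intro p hp
      have h1 : ¬ p < m := fun h => hPbelow ⟨p, hp, h⟩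
      have h2 : p ≠ m := fun he => hmP.1 (he ▸ hp)
      omega
    have hm2 : 2 ≤ m := by
      by_contra h
      have hm1' : m = 1 := by omega
      have e := hagree 2 (by omega)
      have s1 := fcount_step P 1
      have s2 := fcount_step Q 1
      have c1 : fcount P 1 = P.card := fcount_one P hP1
      have c2 : fcount Q 1 = Q.card := fcount_one Q hQ1
      have h1P : 1 ∉ P := hm1' ▸ hmP.1
      have h1Q : 1 ∈ Q := hm1' ▸ hmP.2
      rw [Nat.even_iff] at hPe hQe
      rw [if_neg h1P, show (1:ℕ)+1 = 2 from rfl] at s1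
      rw [if_pos h1Q, show (1:ℕ)+1 = 2 from rfl] at s2
      rw [hm1'] at hmlt
      omega
    have h1P : 1 ∉ P := fun h => by have := hPm 1 h; omega
    have h2P : 2 ∉ P := fun h => by have := hPm 2 h; omega
    refine ⟨h1P, h2P, ?_⟩
    intro n hn
    rw [fcount_move_b h1P h2P]
    have egap : ∀ k, 1 ≤ k → k ≤ m → fcount P k = fcount P m := by
      intro k hk hkm
      exact fcount_eq_of_gap hkm (fun p hp _ => by have := hPm p hp; omega)
    split_ifs with hc1 hc2
    · have hn1 : n = 1 := by omega
      subst hn1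
      have e1 : fcount P 1 = fcount P m := egap 1 (by omega) (by omega)
      have e2 : fcount Q m ≤ fcount Q 1 := fcount_mono Q (by omega)
      have c1 : fcount P 1 = P.card := fcount_one P hP1
      have c2 : fcount Q 1 = Q.card := fcount_one Q hQ1
      rw [Nat.even_iff] at hPe hQe
      omega
    · subst hc2
      have e1 : fcount P 2 = fcount P m := egap 2 (by omega) hm2
      have e2 : fcount Q m ≤ fcount Q 2 := fcount_mono Q hm2
      omega
    · have := hdom n hn; omega

lemma between_a {P R : Finset ℕ} {α : ℕ} (hα : α ∈ P) (hα1 : α + 1 ∉ P)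
    (hP1 : ∀ p ∈ P, 1 ≤ p) (hR1 : ∀ p ∈ R, 1 ≤ p)
    (hlo : ∀ n, 1 ≤ n → fcount P n ≤ fcount R n)
    (hhi : ∀ n, 1 ≤ n → fcount R n ≤ fcount (insert (α + 1) (P.erase α)) n) :
    R = P ∨ R = insert (α + 1) (P.erase α) := by
  have hQ1 : ∀ q ∈ insert (α + 1) (P.erase α), 1 ≤ q := by
    intro q hq
    rcases Finset.mem_insert.mp hq with rfl | hq'
    · omega
    · exact hP1 q (Finset.mem_of_mem_erase hq')
  by_cases hc : fcount R (α + 1) = fcount P (α + 1)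
  · left
    apply eq_of_fcount_eq hR1 hP1
    intro n hn
    by_cases hn' : n = α + 1
    · rw [hn', hc]
    · have h1 := hlo n hn
      have h2 := hhi n hn
      rw [fcount_move_a hα hα1, if_neg hn'] at h2
      omega
  · right
    apply eq_of_fcount_eq hR1 hQ1
    intro n hn
    have h1 := hlo n hn
    have h2 := hhi n hn
    rw [fcount_move_a hα hα1] at h2 ⊢
    by_cases hn' : n = α + 1
    · subst hn'
      rw [if_pos rfl] at h2 ⊢
      have h3 := hlo (α + 1) hn
      have h4 := hlo (α + 1) hn
      omega
    · rw [if_neg hn'] at h2 ⊢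
      omega

lemma between_b {P R : Finset ℕ} (h1 : 1 ∉ P) (h2 : 2 ∉ P)
    (hP1 : ∀ p ∈ P, 1 ≤ p) (hR1 : ∀ p ∈ R, 1 ≤ p)
    (hPe : Even P.card) (hRe : Even R.card)
    (hlo : ∀ n, 1 ≤ n → fcount P n ≤ fcount R n)
    (hhi : ∀ n, 1 ≤ n → fcount R n ≤ fcount (insert 1 (insert 2 P)) n) :
    R = P ∨ R = insert 1 (insert 2 P) := by
  have hQ1 : ∀ q ∈ insert 1 (insert 2 P), 1 ≤ q := by
    intro q hq
    rcases Finset.mem_insert.mp hq with rfl | hq'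
    · omega
    · rcases Finset.mem_insert.mp hq' with rfl | hq''
      · omega
      · exact hP1 q hq''
  have key1 : fcount (insert 1 (insert 2 P)) 1 = fcount P 1 + 2 := by
    rw [fcount_move_b h1 h2]; norm_num
  have key2 : fcount (insert 1 (insert 2 P)) 2 = fcount P 2 + 1 := by
    rw [fcount_move_b h1 h2]; norm_num
  have keyn : ∀ n, 3 ≤ n → fcount (insert 1 (insert 2 P)) n = fcount P n := by
    intro n hn
    rw [fcount_move_b h1 h2, if_neg (by omega), if_neg (by omega)]
    omega
  have cP : fcount P 1 = P.card := fcount_one P hP1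
  have cR : fcount R 1 = R.card := fcount_one R hR1
  have sP : fcount P 1 = fcount P 2 := by
    have h := fcount_step P 1
    rw [if_neg h1, show (1:ℕ)+1 = 2 from rfl] at h
    omega
  have sR : fcount R 1 ≤ fcount R 2 + 1 := by
    have h := fcount_step R 1
    rw [show (1:ℕ)+1 = 2 from rfl] at h
    split_ifs at h <;> omega
  have s1 := hlo 1 le_rfl
  have s1' := hhi 1 le_rfl
  rw [key1] at s1'
  have s2 := hlo 2 (by omega)
  have s2' := hhi 2 (by omega)
  rw [key2] at s2'
  rw [Nat.even_iff] at hPe hRe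
  by_cases hcase : fcount R 1 = fcount P 1
  · left
    apply eq_of_fcount_eq hR1 hP1
    intro n hn
    rcases Nat.lt_or_ge n 3 with h3 | h3
    · have hR2 : fcount R 2 ≤ fcount R 1 := fcount_mono R (by omega)
      interval_cases n
      · omega
      · omega
    · have h1' := hlo n hn
      have h2' := hhi n hn
      rw [keyn n h3] at h2'
      omega
  · right
    apply eq_of_fcount_eq hR1 hQ1
    intro n hn
    have hR1v : fcount R 1 = fcount P 1 + 2 := by omega
    rcases Nat.lt_or_ge n 3 with h3 | h3
    · interval_cases n
      · rw [key1]; omega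
      · rw [key2]; omega
    · have h1' := hlo n hn
      have h2' := hhi n hn
      rw [keyn n h3] at h2' ⊢
      omega

/-- For `w, w' ∈ V(v_-)`, `w'` covers `w` in the entrywise order
iff either (a) there is `α ≥ 1` with `α ∈ P(w)`, `α+1 ∉ P(w)` and
`P(w') = (P(w) \ {α}) ∪ {α+1}`, or (b) `1 ∉ P(w)`, `2 ∉ P(w)` and
`P(w') = P(w) ∪ {1, 2}`. -/
theorem stmt14 (w w' : ℕ → ℝ) (hw : w ∈ Vset vminus) (hw' : w' ∈ Vset vminus) :
    SeqCovers (Vset vminus) w w' ↔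
      ((∃ α : ℕ, 1 ≤ α ∧ α ∈ Pmap w ∧ α + 1 ∉ Pmap w ∧
          Pmap w' = (Pmap w \ {α}) ∪ {α + 1}) ∨
       (1 ∉ Pmap w ∧ 2 ∉ Pmap w ∧ Pmap w' = Pmap w ∪ {1, 2})) := by
  have hgw : goodW w := goodW_of_Vset hw
  have hgw' : goodW w' := goodW_of_Vset hw'
  have hsdw : StronglyDecr w := hw.2
  have hsdw' : StronglyDecr w' := hw'.2
  obtain ⟨P, hP, hP1, hPe⟩ := exists_PF hgw hsdw
  obtain ⟨Q, hQ, hQ1, hQe⟩ := exists_PF hgw' hsdw'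
  have hPmem : ∀ n : ℕ, n ∈ P ↔ n ∈ Pmap w := fun n => by rw [← hP, Finset.mem_coe]
  have hQmem : ∀ n : ℕ, n ∈ Q ↔ n ∈ Pmap w' := fun n => by rw [← hQ, Finset.mem_coe]
  have coeA : ∀ β : ℕ,
      (↑(insert (β + 1) (P.erase β)) : Set ℕ) = (Pmap w \ {β}) ∪ {β + 1} := by
    intro β
    rw [← hP]
    ext x
    simp only [Finset.coe_insert, Finset.coe_erase, Set.mem_insert_iff, Set.mem_diff,
      Set.mem_union, Set.mem_singleton_iff, Finset.mem_coe]
    tauto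
  have coeB : (↑(insert 1 (insert 2 P)) : Set ℕ) = Pmap w ∪ {1, 2} := by
    rw [← hP]
    ext x
    simp only [Finset.coe_insert, Set.mem_insert_iff, Set.mem_union, Set.mem_singleton_iff,
      Finset.mem_coe]
    tauto
  constructor
  · rintro ⟨hle, hne, hnomid⟩
    have hdom := (leSeq_iff hgw hsdw hgw' hsdw' hP hQ).mp hle
    have hPQ : P ≠ Q := by
      intro he
      apply hne
      apply eq_of_Pmap_eq hgw hsdw hgw' hsdw'
      rw [← hP, he, hQ]
    rcases exists_up_move hP1 hQ1 hPe hQe hPQ hdom with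
      ⟨β, hβP, hβ1P, hRdom⟩ | ⟨h1P, h2P, hRdom⟩
    · have hβPm : β ∈ Pmap w := (hPmem β).mp hβP
      have hβ1Pm : β + 1 ∉ Pmap w := fun h => hβ1P ((hPmem (β + 1)).mpr h)
      by_cases hRQ : insert (β + 1) (P.erase β) = Q
      · left
        refine ⟨β, hP1 β hβP, hβPm, hβ1Pm, ?_⟩
        rw [← hQ, ← hRQ, coeA β]
      · exfalso
        obtain ⟨p, q, hp1, hpq, hsdU, hPmU, hleU, hneU⟩ := move_a hgw hsdw hβPm hβ1Pm
        have hUV : negSwapFun p q w ∈ Vset vminus := Vset_negSwap hw hp1 hpq hsdU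
        have hgU : goodW (negSwapFun p q w) := goodW_of_Vset hUV
        have hRU : (↑(insert (β + 1) (P.erase β)) : Set ℕ) = Pmap (negSwapFun p q w) := by
          rw [hPmU, coeA β]
        apply hnomid
        refine ⟨negSwapFun p q w, hUV, hneU, ?_, hleU, ?_⟩
        · intro he
          apply hRQ
          apply Finset.coe_injective
          rw [hRU, he, hQ]
        · exact (leSeq_iff hgU hsdU hgw' hsdw' hRU hQ).mpr hRdom
    · have h1Pm : 1 ∉ Pmap w := fun h => h1P ((hPmem 1).mpr h)
      have h2Pm : 2 ∉ Pmap w := fun h => h2P ((hPmem 2).mpr h)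
      by_cases hRQ : insert 1 (insert 2 P) = Q
      · right
        refine ⟨h1Pm, h2Pm, ?_⟩
        rw [← hQ, ← hRQ, coeB]
      · exfalso
        obtain ⟨p, q, hp1, hpq, hsdU, hPmU, hleU, hneU⟩ := move_b hgw hsdw h1Pm h2Pm
        have hUV : negSwapFun p q w ∈ Vset vminus := Vset_negSwap hw hp1 hpq hsdU
        have hgU : goodW (negSwapFun p q w) := goodW_of_Vset hUV
        have hRU : (↑(insert 1 (insert 2 P)) : Set ℕ) = Pmap (negSwapFun p q w) := by
          rw [hPmU, coeB]
        apply hnomid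
        refine ⟨negSwapFun p q w, hUV, hneU, ?_, hleU, ?_⟩
        · intro he
          apply hRQ
          apply Finset.coe_injective
          rw [hRU, he, hQ]
        · exact (leSeq_iff hgU hsdU hgw' hsdw' hRU hQ).mpr hRdom
  · rintro (⟨α, hα1, hαP, hα1P, hPm'⟩ | ⟨h1P, h2P, hPm'⟩)
    · have hαF : α ∈ P := (hPmem α).mpr hαP
      have hα1F : α + 1 ∉ P := fun h => hα1P ((hPmem (α + 1)).mp h)
      have hQR : Q = insert (α + 1) (P.erase α) := by
        apply Finset.coe_injective
        rw [hQ, hPm', coeA α]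
      have hdom : ∀ n, 1 ≤ n → fcount P n ≤ fcount Q n := by
        intro n hn
        rw [hQR, fcount_move_a hαF hα1F]
        split_ifs <;> omega
      refine ⟨(leSeq_iff hgw hsdw hgw' hsdw' hP hQ).mpr hdom, ?_, ?_⟩
      · intro he
        apply hα1F
        have hPQ : P = Q := Finset.coe_injective (by rw [hP, he, hQ])
        rw [hPQ, hQR]
        exact Finset.mem_insert_self _ _
      · rintro ⟨uu, hUV, hneW, hneW', hle1, hle2⟩
        have hgU := goodW_of_Vset hUV
        have hsdU : StronglyDecr uu := hUV.2
        obtain ⟨R, hR, hR1, hRe⟩ := exists_PF hgU hsdU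
        have hlo := (leSeq_iff hgw hsdw hgU hsdU hP hR).mp hle1
        have hhi := (leSeq_iff hgU hsdU hgw' hsdw' hR hQ).mp hle2
        have hhi' : ∀ n, 1 ≤ n → fcount R n ≤ fcount (insert (α + 1) (P.erase α)) n := by
          rw [← hQR]
          exact hhi
        rcases between_a hαF hα1F hP1 hR1 hlo hhi' with hRP | hRQ2
        · exact hneW (eq_of_Pmap_eq hgU hsdU hgw hsdw (by rw [← hR, hRP, hP]))
        · exact hneW' (eq_of_Pmap_eq hgU hsdU hgw' hsdw' (by rw [← hR, hRQ2, ← hQR, hQ]))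
    · have h1F : 1 ∉ P := fun h => h1P ((hPmem 1).mp h)
      have h2F : 2 ∉ P := fun h => h2P ((hPmem 2).mp h)
      have hQR : Q = insert 1 (insert 2 P) := by
        apply Finset.coe_injective
        rw [hQ, hPm', coeB]
      have hdom : ∀ n, 1 ≤ n → fcount P n ≤ fcount Q n := by
        intro n hn
        rw [hQR, fcount_move_b h1F h2F]
        split_ifs <;> omega
      refine ⟨(leSeq_iff hgw hsdw hgw' hsdw' hP hQ).mpr hdom, ?_, ?_⟩
      · intro he
        apply h1F
        have hPQ : P = Q := Finset.coe_injective (by rw [hP, he, hQ])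
        rw [hPQ, hQR]
        exact Finset.mem_insert_self _ _
      · rintro ⟨uu, hUV, hneW, hneW', hle1, hle2⟩
        have hgU := goodW_of_Vset hUV
        have hsdU : StronglyDecr uu := hUV.2
        obtain ⟨R, hR, hR1, hRe⟩ := exists_PF hgU hsdU
        have hlo := (leSeq_iff hgw hsdw hgU hsdU hP hR).mp hle1
        have hhi := (leSeq_iff hgU hsdU hgw' hsdw' hR hQ).mp hle2
        have hhi' : ∀ n, 1 ≤ n → fcount R n ≤ fcount (insert 1 (insert 2 P)) n := by
          rw [← hQR]
          exact hhi
        rcases between_b h1F h2F hP1 hR1 hPe hRe hlo hhi' with hRP | hRQ2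
        · exact hneW (eq_of_Pmap_eq hgU hsdU hgw hsdw (by rw [← hR, hRP, hP]))
        · exact hneW' (eq_of_Pmap_eq hgU hsdU hgw' hsdw' (by rw [← hR, hRQ2, ← hQR, hQ]))
end

section
/- Let a be a finite subset of {1,2,3,…} and let α ≥ 1 satisfy α ∉ a and α+1 ∈ a. Set a′ = (a ∖ {α+1}) ∪ {α}. Let {α} ∪ X and {α+1} ∪ Y be the parts of 𝒯(a′) containing α and α+1 respectively (so X and Y each have at most one element, possibly empty). Then 𝒯(a) is obtained from 𝒯(a′) by replacing these two parts by the pair {α, α+1} together with the part X ∪ Y (the latter omitted when X ∪ Y = ∅); all other parts of 𝒯(a) and 𝒯(a′) coincide. -/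
-- basics
lemma tlDepth_eq_sum (a : Finset ℕ) (p r : ℕ) :
    tlDepth a p r = ∑ i ∈ Finset.Icc p r, (if i ∈ a then (-1 : ℤ) else 1) := by
  classical
  unfold tlDepth
  rw [Finset.sum_ite, Finset.sum_const, Finset.sum_const]
  push_cast
  ring

lemma tlDepth_single (a : Finset ℕ) (p : ℕ) :
    tlDepth a p p = if p ∈ a then -1 else 1 := by
  rw [tlDepth_eq_sum, Finset.Icc_self, Finset.sum_singleton]

lemma tlDepth_split (a : Finset ℕ) {p m r : ℕ} (h1 : p ≤ m + 1) (h2 : m ≤ r) :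
    tlDepth a p r = tlDepth a p m + tlDepth a (m+1) r := by
  rw [tlDepth_eq_sum, tlDepth_eq_sum, tlDepth_eq_sum, ← Finset.sum_union]
  · congr 1
    ext x; simp only [Finset.mem_union, Finset.mem_Icc]; omega
  · rw [Finset.disjoint_left]; intro x hx hy
    simp only [Finset.mem_Icc] at hx hy; omega

lemma tlDepth_succ (a : Finset ℕ) {p r : ℕ} (h : p ≤ r + 1) :
    tlDepth a p (r+1) = tlDepth a p r + (if r+1 ∈ a then -1 else 1) := by
  rcases Nat.lt_or_ge r p with h'|h'
  · have hr : r + 1 = p := by omega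
    subst hr
    rw [tlDepth_single]
    have : Finset.Icc (r+1) r = ∅ := by rw [Finset.Icc_eq_empty]; omega
    rw [tlDepth_eq_sum, this, Finset.sum_empty]; ring
  · rw [tlDepth_split a (show p ≤ r + 1 by omega) (show r ≤ r + 1 by omega), tlDepth_single]

-- discrete IVT
lemma ivt_up (f : ℕ → ℤ) {m n : ℕ} (hmn : m ≤ n)
    (hf : ∀ k, m ≤ k → k < n → f (k+1) = f k + 1 ∨ f (k+1) = f k - 1)
    {c : ℤ} (h1 : f m ≤ c) (h2 : c ≤ f n) : ∃ k, m ≤ k ∧ k ≤ n ∧ f k = c := by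
  induction n, hmn using Nat.le_induction with
  | base => exact ⟨m, le_refl _, le_refl _, le_antisymm h1 h2⟩
  | succ n hmn ih =>
    rcases le_or_gt c (f n) with h | h
    · obtain ⟨k, h1, h2, h3⟩ := ih (fun k hk hk' => hf k hk (by omega)) h
      exact ⟨k, h1, by omega, h3⟩
    · refine ⟨n+1, by omega, le_refl _, ?_⟩
      rcases hf n hmn (by omega) with h' | h' <;> omega

lemma ivt_down (f : ℕ → ℤ) {m n : ℕ} (hmn : m ≤ n)
    (hf : ∀ k, m ≤ k → k < n → f (k+1) = f k + 1 ∨ f (k+1) = f k - 1)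
    {c : ℤ} (h1 : c ≤ f m) (h2 : f n ≤ c) : ∃ k, m ≤ k ∧ k ≤ n ∧ f k = c := by
  induction n, hmn using Nat.le_induction with
  | base => exact ⟨m, le_refl _, le_refl _, le_antisymm h2 h1⟩
  | succ n hmn ih =>
    rcases le_or_gt (f n) c with h | h
    · obtain ⟨k, h1, h2, h3⟩ := ih (fun k hk hk' => hf k hk (by omega)) h
      exact ⟨k, h1, by omega, h3⟩
    · refine ⟨n+1, by omega, le_refl _, ?_⟩
      rcases hf n hmn (by omega) with h' | h' <;> omega

-- IVT specialized: varying right endpoint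
lemma ivt_right (a : Finset ℕ) {p m n : ℕ} (hpm : p ≤ m) (hmn : m ≤ n) {c : ℤ}
    (h : tlDepth a p m ≤ c ∧ c ≤ tlDepth a p n ∨ c ≤ tlDepth a p m ∧ tlDepth a p n ≤ c) :
    ∃ r, m ≤ r ∧ r ≤ n ∧ tlDepth a p r = c := by
  have hstep : ∀ k, m ≤ k → k < n → tlDepth a p (k+1) = tlDepth a p k + 1 ∨
      tlDepth a p (k+1) = tlDepth a p k - 1 := by
    intro k hk hk'
    rw [tlDepth_succ a (by omega)]
    split_ifs <;> [right; left] <;> ring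
  rcases h with ⟨h1, h2⟩ | ⟨h1, h2⟩
  · exact ivt_up _ hmn hstep h1 h2
  · exact ivt_down _ hmn hstep h1 h2

-- varying left endpoint: s from m up to n, f s = tlDepth a s q
lemma ivt_left (a : Finset ℕ) {q m n : ℕ} (hmn : m ≤ n) (hnq : n ≤ q) {c : ℤ}
    (h : tlDepth a m q ≤ c ∧ c ≤ tlDepth a n q ∨ c ≤ tlDepth a m q ∧ tlDepth a n q ≤ c) :
    ∃ s, m ≤ s ∧ s ≤ n ∧ tlDepth a s q = c := by
  have hstep : ∀ k, m ≤ k → k < n → tlDepth a (k+1) q = tlDepth a k q + 1 ∨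
      tlDepth a (k+1) q = tlDepth a k q - 1 := by
    intro k hk hk'
    have h2 := tlDepth_split a (show k ≤ k + 1 by omega) (show k ≤ q by omega)
    rw [tlDepth_single] at h2
    split_ifs at h2
    · left; omega
    · right; omega
  rcases h with ⟨h1, h2⟩ | ⟨h1, h2⟩
  · exact ivt_up _ hmn hstep h1 h2
  · exact ivt_down _ hmn hstep h1 h2

section MP
variable {a : Finset ℕ}

lemma mp_unique_right {p q q' : ℕ} (h : MatchedPair a p q) (h' : MatchedPair a p q') : q = q' := by
  obtain ⟨h1, h2, h3, h4, h5, h6⟩ := h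
  obtain ⟨h1', h2', h3', h4', h5', h6'⟩ := h'
  rcases lt_trichotomy q q' with hl | he | hl
  · have := h6' q (by omega) hl; omega
  · exact he
  · have := h6 q' (by omega) hl; omega

lemma mp_not_lt {p p' q : ℕ} (h : MatchedPair a p q) (h' : MatchedPair a p' q) (hl : p < p') :
    False := by
  obtain ⟨h1, h2, h3, h4, h5, h6⟩ := h
  obtain ⟨h1', h2', h3', h4', h5', h6'⟩ := h'
  have hs := tlDepth_split a (show p ≤ (p'-1)+1 by omega) (show p'-1 ≤ q by omega)
  have hp : p' - 1 + 1 = p' := by omega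
  rw [hp] at hs
  have := h6 (p'-1) (by omega) (by omega)
  omega

lemma mp_unique_left {p p' q : ℕ} (h : MatchedPair a p q) (h' : MatchedPair a p' q) : p = p' := by
  rcases lt_trichotomy p p' with hl | he | hl
  · exact absurd (mp_not_lt h h' hl) id
  · exact he
  · exact absurd (mp_not_lt h' h hl) id

open Classical in
lemma exists_mp_right {p r : ℕ} (hp1 : 1 ≤ p) (hp : p ∉ a) (hpr : p ≤ r)
    (hneg : tlDepth a p r ≤ 0) : ∃ q, MatchedPair a p q := by
  have h0 : tlDepth a p p = 1 := by rw [tlDepth_single]; simp [hp]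
  obtain ⟨q0, hq1, hq2, hq3⟩ := ivt_right a (le_refl p) hpr (c := 0) (Or.inr ⟨by omega, hneg⟩)
  have hq0p : p < q0 := by
    rcases eq_or_lt_of_le hq1 with h | h
    · rw [← h] at hq3; omega
    · exact h
  have hex : ∃ q, p < q ∧ tlDepth a p q = 0 := ⟨q0, hq0p, hq3⟩
  classical
  obtain ⟨hq1', hq2'⟩ := Nat.find_spec hex
  have hmin0 : ∀ m, m < Nat.find hex → ¬(p < m ∧ tlDepth a p m = 0) :=
    fun m hm => Nat.find_min hex hm
  set q := Nat.find hex with hqdef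
  have hpos : ∀ r', p ≤ r' → r' < q → 0 < tlDepth a p r' := by
    intro r' h1' h2'
    by_contra hnp
    obtain ⟨r'', hr1, hr2, hr3⟩ := ivt_right a (le_refl p) h1' (c := 0)
      (Or.inr ⟨by omega, by omega⟩)
    have hpr'' : p < r'' := by
      rcases eq_or_lt_of_le hr1 with h | h
      · rw [← h] at hr3; omega
      · exact h
    exact hmin0 r'' (by omega) ⟨hpr'', hr3⟩
  have hqa : q ∈ a := by
    by_contra hqa
    have hs := tlDepth_succ a (show p ≤ (q-1)+1 by omega)
    have hq : q - 1 + 1 = q := by omega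
    rw [hq] at hs
    have hd := hpos (q-1) (by omega) (by omega)
    rw [if_neg hqa] at hs
    omega
  exact ⟨q, hp1, hq1', hp, hqa, hq2', hpos⟩

open Classical in
lemma exists_mp_left {s q : ℕ} (hs1 : 1 ≤ s) (hq : q ∈ a) (hsq : s < q)
    (hpos : 0 < tlDepth a s q) : ∃ p, MatchedPair a p q := by
  have hqq : tlDepth a q q = -1 := by rw [tlDepth_single]; simp [hq]
  obtain ⟨s0, hs0a, hs0b, hs0c⟩ := ivt_left a (le_of_lt hsq) (le_refl q) (c := 0)
    (Or.inr ⟨by omega, by omega⟩)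
  have hs0q : s0 < q := by
    rcases eq_or_lt_of_le hs0b with h | h
    · rw [h] at hs0c; omega
    · exact h
  classical
  set P : ℕ → Prop := fun x => 1 ≤ x ∧ x < q ∧ tlDepth a x q = 0 with hP
  have hs0P : P s0 := ⟨by omega, hs0q, hs0c⟩
  have hps0 : s0 ≤ Nat.findGreatest P q := Nat.le_findGreatest (by omega) hs0P
  have hPp : P (Nat.findGreatest P q) := Nat.findGreatest_spec (by omega) hs0P
  have hmax0 : ∀ m, Nat.findGreatest P q < m → m ≤ q → ¬ P m :=
    fun m h1 h2 => Nat.findGreatest_is_greatest h1 h2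
  set p := Nat.findGreatest P q with hpdef
  obtain ⟨hp1, hpq, hp0⟩ := hPp
  have hmax : ∀ m, p < m → m < q → tlDepth a m q ≠ 0 := by
    intro m h1 h2 h3
    exact hmax0 m h1 (by omega) ⟨by omega, h2, h3⟩
  have hpa : p ∉ a := by
    intro hpa
    have hs := tlDepth_split a (show p ≤ p + 1 by omega) (show p ≤ q by omega)
    rw [tlDepth_single, if_pos hpa] at hs
    have hp1q : p + 1 < q := by
      rcases Nat.lt_or_ge (p+1) q with h | h
      · exact h
      · have he : p + 1 = q := by omega
        rw [he] at hs; omega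
    obtain ⟨s', h1', h2', h3'⟩ := ivt_left a (le_of_lt hp1q) (le_refl q) (c := 0)
      (Or.inr ⟨by omega, by omega⟩)
    have hs'q : s' < q := by
      rcases eq_or_lt_of_le h2' with h | h
      · rw [h] at h3'; omega
      · exact h
    exact hmax s' (by omega) hs'q h3'
  have hposr : ∀ r, p ≤ r → r < q → 0 < tlDepth a p r := by
    intro r h1 h2
    by_contra hnp
    have hs := tlDepth_split a (show p ≤ r + 1 by omega) (show r ≤ q by omega)
    have hr1q : r + 1 < q := by
      rcases Nat.lt_or_ge (r+1) q with h | h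
      · exact h
      · have he : r + 1 = q := by omega
        rw [he] at hs; omega
    obtain ⟨s', h1', h2', h3'⟩ := ivt_left a (le_of_lt hr1q) (le_refl q) (c := 0)
      (Or.inr ⟨by omega, by omega⟩)
    have hs'q : s' < q := by
      rcases eq_or_lt_of_le h2' with h | h
      · rw [h] at h3'; omega
      · exact h
    exact hmax s' (by omega) hs'q h3'
  exact ⟨p, hp1, hpq, hpa, hq, hp0, hposr⟩

lemma unmatched_pos {p : ℕ} (hp1 : 1 ≤ p) (hp : p ∉ a) (h : ¬∃ q, MatchedPair a p q) :
    ∀ r, p ≤ r → 0 < tlDepth a p r := by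
  intro r hr
  by_contra hnp
  exact h (exists_mp_right hp1 hp hr (by omega))

lemma inside_matched {s t x : ℕ} (h : MatchedPair a s t) (hx : x ∈ a) (h1 : s < x)
    (h2 : x < t) : ∃ p, MatchedPair a p x :=
  exists_mp_left h.1 hx h1 (h.2.2.2.2.2 x (by omega) h2)

lemma after_unmatched {p t : ℕ} (hp1 : 1 ≤ p) (hp : p ∉ a) (hpm : ¬∃ q, MatchedPair a p q)
    (ht : t ∈ a) (hpt : p < t) : ∃ s, MatchedPair a s t :=
  exists_mp_left hp1 ht hpt (unmatched_pos hp1 hp hpm t (le_of_lt hpt))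

end MP

section Transfer
variable {a a' : Finset ℕ} {α : ℕ}

lemma mem_a' (ha' : a' = insert α (a.erase (α + 1))) (x : ℕ) :
    x ∈ a' ↔ (x = α ∨ (x ∈ a ∧ x ≠ α + 1)) := by
  subst ha'; simp [Finset.mem_insert, Finset.mem_erase]; tauto

lemma alpha_mem (ha' : a' = insert α (a.erase (α + 1))) : α ∈ a' := by
  rw [mem_a' ha']; left; rfl

lemma alpha1_not_mem (ha' : a' = insert α (a.erase (α + 1))) (h1 : α ∉ a) : α + 1 ∉ a' := by
  rw [mem_a' ha']
  rintro (h | ⟨h, h'⟩)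
  · omega
  · exact h' rfl

lemma mem_iff_out (ha' : a' = insert α (a.erase (α + 1))) (h1 : α ∉ a) {x : ℕ}
    (hx : x ≠ α) (hx1 : x ≠ α + 1) : x ∈ a ↔ x ∈ a' := by
  rw [mem_a' ha']; constructor
  · intro h; exact Or.inr ⟨h, hx1⟩
  · rintro (h | ⟨h, _⟩)
    · exact absurd h hx
    · exact h

lemma depth_diff (ha' : a' = insert α (a.erase (α + 1))) (h1 : α ∉ a) (h2 : α + 1 ∈ a)
    (p r : ℕ) :
    tlDepth a p r = tlDepth a' p r + (if p ≤ α ∧ α ≤ r then 2 else 0)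
      - (if p ≤ α + 1 ∧ α + 1 ≤ r then 2 else 0) := by
  classical
  rw [tlDepth_eq_sum, tlDepth_eq_sum]
  have key : ∀ i ∈ Finset.Icc p r, (if i ∈ a then (-1:ℤ) else 1) =
      (if i ∈ a' then (-1:ℤ) else 1) +
        ((if i = α then (2:ℤ) else 0) + (if i = α + 1 then (-2:ℤ) else 0)) := by
    intro i _
    by_cases hiα : i = α
    · subst hiα
      rw [if_neg h1, if_pos (alpha_mem ha'), if_pos rfl, if_neg (by omega)]; ring
    · by_cases hiα1 : i = α + 1
      · subst hiα1
        rw [if_pos h2, if_neg (alpha1_not_mem ha' h1), if_neg (by omega), if_pos rfl]; ring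
      · rw [if_neg hiα, if_neg hiα1]
        by_cases hia : i ∈ a
        · rw [if_pos hia, if_pos ((mem_iff_out ha' h1 hiα hiα1).mp hia)]; ring
        · rw [if_neg hia, if_neg (fun h => hia ((mem_iff_out ha' h1 hiα hiα1).mpr h))]; ring
  rw [Finset.sum_congr rfl key, Finset.sum_add_distrib, Finset.sum_add_distrib]
  rw [Finset.sum_ite_eq' (Finset.Icc p r) α (fun _ => (2:ℤ)),
      Finset.sum_ite_eq' (Finset.Icc p r) (α+1) (fun _ => (-2:ℤ))]
  simp only [Finset.mem_Icc]
  by_cases hc1 : p ≤ α ∧ α ≤ r <;> by_cases hc2 : p ≤ α + 1 ∧ α + 1 ≤ r <;>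
    simp only [hc1, hc2, and_self, if_true, if_false] <;> ring

lemma depth_eq_out (ha' : a' = insert α (a.erase (α + 1))) (h1 : α ∉ a) (h2 : α + 1 ∈ a)
    {p r : ℕ} (h : r < α ∨ α + 1 < p ∨ (p ≤ α ∧ α + 1 ≤ r)) :
    tlDepth a p r = tlDepth a' p r := by
  have := depth_diff ha' h1 h2 p r
  rcases h with h | h | ⟨ha1, ha2⟩
  · rw [if_neg (by omega), if_neg (by omega)] at this; omega
  · rw [if_neg (by omega), if_neg (by omega)] at this; omega
  · rw [if_pos ⟨ha1, by omega⟩, if_pos ⟨by omega, ha2⟩] at this; omega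

lemma depth_at_alpha (ha' : a' = insert α (a.erase (α + 1))) (h1 : α ∉ a) (h2 : α + 1 ∈ a)
    {p : ℕ} (hp : p ≤ α) : tlDepth a p α = tlDepth a' p α + 2 := by
  have := depth_diff ha' h1 h2 p α
  rw [if_pos ⟨hp, le_refl _⟩, if_neg (by omega)] at this; omega

lemma mp_alpha (hα : 1 ≤ α) (h1 : α ∉ a) (h2 : α + 1 ∈ a) : MatchedPair a α (α + 1) := by
  refine ⟨hα, by omega, h1, h2, ?_, ?_⟩
  · rw [tlDepth_succ a (by omega), tlDepth_single, if_neg h1, if_pos h2]; ring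
  · intro r hr1 hr2
    have : r = α := by omega
    subst this
    rw [tlDepth_single, if_neg h1]; omega
end Transfer

lemma mp_a_iff {a a' : Finset ℕ} {α : ℕ} (hα : 1 ≤ α) (h1 : α ∉ a) (h2 : α + 1 ∈ a)
    (ha' : a' = insert α (a.erase (α + 1))) (s t : ℕ) :
    MatchedPair a s t ↔
      ((s = α ∧ t = α + 1) ∨
       (MatchedPair a' s t ∧ t ≠ α ∧ s ≠ α + 1) ∨
       (MatchedPair a' s α ∧ MatchedPair a' (α + 1) t)) := by
  constructor
  · intro hm
    by_cases hsα : s = α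
    · subst hsα; left; exact ⟨rfl, mp_unique_right hm (mp_alpha hα h1 h2)⟩
    by_cases htα1 : t = α + 1
    · subst htα1; left; exact ⟨mp_unique_left hm (mp_alpha hα h1 h2), rfl⟩
    obtain ⟨hm1, hm2, hm3, hm4, hm5, hm6⟩ := hm
    have hsα1 : s ≠ α + 1 := fun h => hm3 (h ▸ h2)
    have htα : t ≠ α := fun h => h1 (h ▸ hm4)
    have hsa' : s ∉ a' := fun h => by
      rcases (mem_a' ha' s).mp h with h | ⟨h, _⟩
      · exact hsα h
      · exact hm3 h
    have hta' : t ∈ a' := (mem_iff_out ha' h1 htα htα1).mp hm4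
    rcases Nat.lt_or_ge t α with htlt | htge
    · right; left
      refine ⟨⟨hm1, hm2, hsa', hta', ?_, ?_⟩, htα, hsα1⟩
      · rw [← depth_eq_out ha' h1 h2 (Or.inl htlt)]; exact hm5
      · intro r hr1 hr2
        rw [← depth_eq_out ha' h1 h2 (Or.inl (by omega))]; exact hm6 r hr1 hr2
    rcases Nat.lt_or_ge (α+1) s with hsgt | hsle
    · right; left
      refine ⟨⟨hm1, hm2, hsa', hta', ?_, ?_⟩, htα, hsα1⟩
      · rw [← depth_eq_out ha' h1 h2 (Or.inr (Or.inl hsgt))]; exact hm5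
      · intro r hr1 hr2
        rw [← depth_eq_out ha' h1 h2 (Or.inr (Or.inl hsgt))]; exact hm6 r hr1 hr2
    have hsltα : s < α := by omega
    have htgt : α + 1 < t := by omega
    have hd1 : 0 < tlDepth a s (α+1) := hm6 (α+1) (by omega) htgt
    have hstep := tlDepth_succ a (show s ≤ α + 1 by omega)
    rw [if_pos h2] at hstep
    have hda := depth_at_alpha ha' h1 h2 (le_of_lt hsltα) (p := s)
    have hd0 : 0 ≤ tlDepth a' s α := by omega
    rcases eq_or_lt_of_le hd0 with hzero | hpos
    · right; right
      constructor
      · refine ⟨hm1, hsltα, hsa', alpha_mem ha', hzero.symm, ?_⟩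
        intro r hr1 hr2
        rw [← depth_eq_out ha' h1 h2 (Or.inl hr2)]
        exact hm6 r hr1 (by omega)
      · refine ⟨by omega, htgt, alpha1_not_mem ha' h1, hta', ?_, ?_⟩
        · have hsplit' := tlDepth_split a' (show s ≤ α + 1 by omega) (show α ≤ t by omega)
          have hdt := depth_eq_out ha' h1 h2 (p := s) (r := t)
            (Or.inr (Or.inr ⟨by omega, by omega⟩))
          omega
        · intro r hr1 hr2
          have hsplit'' := tlDepth_split a' (show s ≤ α + 1 by omega) (show α ≤ r by omega)
          have hdr := depth_eq_out ha' h1 h2 (p := s) (r := r)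
            (Or.inr (Or.inr ⟨by omega, by omega⟩))
          have := hm6 r (by omega) hr2
          omega
    · right; left
      refine ⟨⟨hm1, hm2, hsa', hta', ?_, ?_⟩, htα, hsα1⟩
      · rw [← depth_eq_out ha' h1 h2 (Or.inr (Or.inr ⟨by omega, by omega⟩))]; exact hm5
      · intro r hr1 hr2
        rcases Nat.lt_or_ge r α with hr | hr
        · rw [← depth_eq_out ha' h1 h2 (Or.inl hr)]; exact hm6 r hr1 (by omega)
        · rcases Nat.eq_or_lt_of_le hr with hr' | hr'
          · subst hr'; exact hpos
          · rw [← depth_eq_out ha' h1 h2 (Or.inr (Or.inr ⟨by omega, by omega⟩))]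
            exact hm6 r hr1 hr2
  · rintro (⟨hs, ht⟩ | ⟨hm, htα, hsα1⟩ | ⟨hmα, hmα1⟩)
    · subst hs; subst ht; exact mp_alpha hα h1 h2
    · obtain ⟨hm1, hm2, hm3, hm4, hm5, hm6⟩ := hm
      have hsα : s ≠ α := fun h => hm3 (h ▸ alpha_mem ha')
      have htα1 : t ≠ α + 1 := fun h => (alpha1_not_mem ha' h1) (h ▸ hm4)
      have hsa : s ∉ a := fun h => hm3 ((mem_iff_out ha' h1 hsα hsα1).mp h)
      have hta : t ∈ a := (mem_iff_out ha' h1 htα htα1).mpr hm4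
      refine ⟨hm1, hm2, hsa, hta, ?_, ?_⟩
      · have hd := depth_diff ha' h1 h2 s t
        by_cases hc1 : s ≤ α ∧ α ≤ t <;> by_cases hc2 : s ≤ α+1 ∧ α+1 ≤ t
        · rw [if_pos hc1, if_pos hc2] at hd; omega
        · omega
        · omega
        · rw [if_neg hc1, if_neg hc2] at hd; omega
      · intro r hr1 hr2
        have hd := depth_diff ha' h1 h2 s r
        have hpr := hm6 r hr1 hr2
        by_cases hc1 : s ≤ α ∧ α ≤ r <;> by_cases hc2 : s ≤ α+1 ∧ α+1 ≤ r
        · rw [if_pos hc1, if_pos hc2] at hd; omega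
        · rw [if_pos hc1, if_neg hc2] at hd; omega
        · omega
        · rw [if_neg hc1, if_neg hc2] at hd; omega
    · obtain ⟨hp1, hpq, hpa, hqa, hp5, hp6⟩ := hmα
      obtain ⟨_, hq2, hq3, hq4, hq5, hq6⟩ := hmα1
      have hsa : s ∉ a := fun h => hpa ((mem_iff_out ha' h1 (by omega) (by omega)).mp h)
      have hta : t ∈ a := (mem_iff_out ha' h1 (by omega) (by omega)).mpr hq4
      refine ⟨hp1, by omega, hsa, hta, ?_, ?_⟩
      · have hsp := tlDepth_split a' (show s ≤ α + 1 by omega) (show α ≤ t by omega)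
        have heq := depth_eq_out ha' h1 h2 (p := s) (r := t)
          (Or.inr (Or.inr ⟨by omega, by omega⟩))
        omega
      · intro r hr1 hr2
        rcases Nat.lt_or_ge r α with hr | hr
        · rw [depth_eq_out ha' h1 h2 (Or.inl hr)]; exact hp6 r hr1 hr
        rcases Nat.eq_or_lt_of_le hr with hr' | hr'
        · subst hr'
          have := depth_at_alpha ha' h1 h2 (p := s) (by omega)
          omega
        · have hsp := tlDepth_split a' (show s ≤ α + 1 by omega) (show α ≤ r by omega)
          have heq := depth_eq_out ha' h1 h2 (p := s) (r := r)
            (Or.inr (Or.inr ⟨by omega, by omega⟩))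
          have := hq6 r (by omega) hr2
          omega

lemma leftover_iff {a a' : Finset ℕ} {α : ℕ} (hα : 1 ≤ α) (h1 : α ∉ a) (h2 : α + 1 ∈ a)
    (ha' : a' = insert α (a.erase (α + 1))) (t : ℕ) :
    t ∈ leftover a ↔
      ((t ∈ leftover a' ∧ t ≠ α) ∨
       (MatchedPair a' (α + 1) t ∧ ¬∃ p, MatchedPair a' p α)) := by
  constructor
  · rintro ⟨hta, hnm⟩
    have htα : t ≠ α := fun h => h1 (h ▸ hta)
    have htα1 : t ≠ α + 1 := fun h => hnm ⟨α, h ▸ mp_alpha hα h1 h2⟩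
    have hta' : t ∈ a' := (mem_iff_out ha' h1 htα htα1).mp hta
    by_cases hB' : MatchedPair a' (α + 1) t
    · right
      refine ⟨hB', fun ⟨p, hp⟩ => hnm ⟨p, ?_⟩⟩
      exact (mp_a_iff hα h1 h2 ha' p t).mpr (Or.inr (Or.inr ⟨hp, hB'⟩))
    · left
      refine ⟨⟨hta', fun ⟨s, hs⟩ => ?_⟩, htα⟩
      by_cases hsα1 : s = α + 1
      · exact hB' (hsα1 ▸ hs)
      · exact hnm ⟨s, (mp_a_iff hα h1 h2 ha' s t).mpr (Or.inr (Or.inl ⟨hs, htα, hsα1⟩))⟩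
  · rintro (⟨⟨hta', hnm'⟩, htα⟩ | ⟨hB, hnA⟩)
    · have htα1 : t ≠ α + 1 := fun h => (alpha1_not_mem ha' h1) (h ▸ hta')
      refine ⟨(mem_iff_out ha' h1 htα htα1).mpr hta', fun ⟨s, hs⟩ => ?_⟩
      rcases (mp_a_iff hα h1 h2 ha' s t).mp hs with ⟨_, h⟩ | ⟨h, _⟩ | ⟨_, h⟩
      · exact htα1 h
      · exact hnm' ⟨s, h⟩
      · exact hnm' ⟨α + 1, h⟩
    · have htgt : α + 1 < t := hB.2.1
      have hta' : t ∈ a' := hB.2.2.2.1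
      refine ⟨(mem_iff_out ha' h1 (by omega) (by omega)).mpr hta', fun ⟨s, hs⟩ => ?_⟩
      rcases (mp_a_iff hα h1 h2 ha' s t).mp hs with ⟨_, h⟩ | ⟨h, _, hs1⟩ | ⟨h, _⟩
      · omega
      · exact hs1 (mp_unique_left h hB)
      · exact hnA ⟨s, h⟩

lemma leftover_subset {b : Finset ℕ} : leftover b ⊆ (b : Set ℕ) := fun _ h => h.1

lemma leftover_finite (b : Finset ℕ) : (leftover b).Finite :=
  Set.Finite.subset b.finite_toSet leftover_subset

lemma leftover_le_alpha {a a' : Finset ℕ} {α : ℕ} (h1 : α ∉ a)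
    (ha' : a' = insert α (a.erase (α + 1)))
    (hB : ¬∃ q, MatchedPair a' (α + 1) q) : ∀ t ∈ leftover a', t ≤ α := by
  rintro t ⟨hta', hnm⟩
  by_contra hgt
  have htα1 : t ≠ α + 1 := fun h => (alpha1_not_mem ha' h1) (h ▸ hta')
  have : α + 1 < t := by omega
  exact hnm (after_unmatched (by omega) (alpha1_not_mem ha' h1) hB hta' this)

lemma leftover_out {a a' : Finset ℕ} {α q : ℕ} (h1 : α ∉ a)
    (ha' : a' = insert α (a.erase (α + 1)))
    (hq : MatchedPair a' (α + 1) q) : ∀ t ∈ leftover a', t ≤ α ∨ q < t := by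
  rintro t ⟨hta', hnm⟩
  by_contra hgt
  push_neg at hgt
  obtain ⟨hgt1, hgt2⟩ := hgt
  have htα1 : t ≠ α + 1 := fun h => (alpha1_not_mem ha' h1) (h ▸ hta')
  rcases Nat.lt_or_ge t q with hlt | hge
  · exact hnm (inside_matched hq hta' (by omega) hlt)
  · have : t = q := by omega
    exact hnm ⟨α + 1, this ▸ hq⟩

open Classical in
lemma count_eq_of_agree {L L' : Set ℕ} [DecidablePred (· ∈ L)] [DecidablePred (· ∈ L')] {x : ℕ}
    (h : ∀ y, y < x → (y ∈ L ↔ y ∈ L')) :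
    Nat.count (· ∈ L) x = Nat.count (· ∈ L') x := by
  rw [Nat.count_eq_card_filter_range, Nat.count_eq_card_filter_range]
  congr 1
  exact Finset.filter_congr (fun y hy => h y (Finset.mem_range.mp hy))

open Classical in
lemma setOf_mem_set (L : Set ℕ) : {x | x ∈ L} = L := rfl

open Classical in
lemma nth_replace {L' : Set ℕ} (hfin : L'.Finite) {β γ : ℕ} (hβ : β ∈ L') (hγ : γ ∉ L')
    (hslot : ∀ x ∈ L', x ≠ β → (x < β ↔ x < γ)) :
    (((L' \ {β}) ∪ {γ}).ncard = L'.ncard) ∧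
    (∀ i, i < L'.ncard →
      Nat.nth (· ∈ (L' \ {β}) ∪ {γ}) i =
        if Nat.nth (· ∈ L') i = β then γ else Nat.nth (· ∈ L') i) := by
  classical
  have hβγ : β ≠ γ := fun h => hγ (h ▸ hβ)
  set L : Set ℕ := (L' \ {β}) ∪ {γ} with hLdef
  have hLfin : L.Finite := Set.Finite.union hfin.diff (Set.finite_singleton _)
  have hmemL : ∀ y, y ∈ L ↔ ((y ∈ L' ∧ y ≠ β) ∨ y = γ) := by
    intro y
    rw [hLdef]
    constructor
    · rintro (⟨h, hne⟩ | h)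
      · exact Or.inl ⟨h, hne⟩
      · exact Or.inr h
    · rintro (⟨h, hne⟩ | h)
      · exact Or.inl ⟨h, hne⟩
      · exact Or.inr h
  have hncard : L.ncard = L'.ncard := by
    rw [hLdef, Set.union_singleton, Set.ncard_insert_of_notMem
      (by simp [Set.mem_diff]; intro h; exact absurd h hγ) hfin.diff]
    rw [Set.ncard_diff_singleton_add_one hβ hfin]
  refine ⟨hncard, ?_⟩
  -- count agreements
  have hcount_le : ∀ x, x ≤ β → x ≤ γ → Nat.count (· ∈ L) x = Nat.count (· ∈ L') x := by
    intro x hx1 hx2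
    refine count_eq_of_agree (fun y hy => ?_)
    rw [hmemL y]
    constructor
    · rintro (⟨h, _⟩ | h)
      · exact h
      · omega
    · intro h; exact Or.inl ⟨h, by omega⟩
  have hcount_gt : ∀ x, β < x → γ < x → Nat.count (· ∈ L) x = Nat.count (· ∈ L') x := by
    intro x hx1 hx2
    rw [Nat.count_eq_card_filter_range, Nat.count_eq_card_filter_range]
    have hfe : Finset.filter (· ∈ L) (Finset.range x) =
        insert γ ((Finset.filter (· ∈ L') (Finset.range x)).erase β) := by
      ext y
      simp only [Finset.mem_filter, Finset.mem_range, Finset.mem_insert, Finset.mem_erase,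
        hmemL y]
      constructor
      · rintro ⟨hy, ⟨h, hne⟩ | h⟩
        · exact Or.inr ⟨hne, hy, h⟩
        · exact Or.inl h
      · rintro (h | ⟨hne, hy, h⟩)
        · exact ⟨by omega, Or.inr h⟩
        · exact ⟨hy, Or.inl ⟨h, hne⟩⟩
    rw [hfe, Finset.card_insert_of_notMem (by
        simp only [Finset.mem_erase, Finset.mem_filter]
        rintro ⟨_, _, h⟩; exact hγ h),
      Finset.card_erase_of_mem (by
        simp only [Finset.mem_filter, Finset.mem_range]
        exact ⟨hx1, hβ⟩)]
    have : 0 < (Finset.filter (· ∈ L') (Finset.range x)).card :=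
      Finset.card_pos.mpr ⟨β, by simp only [Finset.mem_filter, Finset.mem_range]; exact ⟨hx1, hβ⟩⟩
    omega
  have hcount_mid : Nat.count (· ∈ L) γ = Nat.count (· ∈ L') β := by
    rw [Nat.count_eq_card_filter_range, Nat.count_eq_card_filter_range]
    congr 1
    ext y
    simp only [Finset.mem_filter, Finset.mem_range, hmemL y]
    constructor
    · rintro ⟨hy, ⟨h, hne⟩ | h⟩
      · exact ⟨(hslot y h hne).mpr hy, h⟩
      · omega
    · rintro ⟨hy, h⟩
      have hne : y ≠ β := by omega
      exact ⟨(hslot y h hne).mp hy, Or.inl ⟨h, hne⟩⟩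
  -- cards via toFinset
  have hcard' : ∀ (hf : (Set.ofPred (· ∈ L')).Finite), L'.ncard = hf.toFinset.card := by
    intro hf; rw [Set.ncard_eq_toFinset_card L' hf]
  have hcardL : ∀ (hf : (Set.ofPred (· ∈ L)).Finite), L.ncard = hf.toFinset.card := by
    intro hf; rw [Set.ncard_eq_toFinset_card L hf]
  intro i hi
  have hni : Nat.nth (· ∈ L') i ∈ L' := Nat.nth_mem_of_lt_card hfin (by rw [← hcard' hfin]; exact hi)
  have hci : Nat.count (· ∈ L') (Nat.nth (· ∈ L') i) = i :=
    Nat.count_nth (fun hf => by rw [← hcard' hf]; exact hi)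
  by_cases h : Nat.nth (· ∈ L') i = β
  · rw [if_pos h]
    have hγL : γ ∈ L := (hmemL γ).mpr (Or.inr rfl)
    have : Nat.count (· ∈ L) γ = i := by rw [hcount_mid, ← h, hci]
    rw [← this]
    exact Nat.nth_count hγL
  · rw [if_neg h]
    set x := Nat.nth (· ∈ L') i with hxdef
    have hxL : x ∈ L := (hmemL x).mpr (Or.inl ⟨hni, h⟩)
    have hcx : Nat.count (· ∈ L) x = i := by
      rcases Nat.lt_or_ge x β with hlt | hge
      · rw [hcount_le x (by omega) (le_of_lt ((hslot x hni h).mp hlt)), hci]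
      · have hxβ : β < x := by omega
        have hxγ : γ < x := by
          have := (hslot x hni h)
          rcases Nat.lt_or_ge x γ with h' | h'
          · omega
          · rcases Nat.eq_or_lt_of_le h' with h'' | h''
            · exact absurd h''.symm (fun hh => hγ (hh ▸ hni))
            · exact h''
        rw [hcount_gt x hxβ hxγ, hci]
    rw [← hcx]
    exact Nat.nth_count hxL

open Classical in
lemma nth_erase_max {L' : Set ℕ} (hfin : L'.Finite) {β : ℕ} (hβ : β ∈ L')
    (hmax : ∀ x ∈ L', x ≤ β) :
    ((L' \ {β}).ncard + 1 = L'.ncard) ∧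
    (∀ i, i < (L' \ {β}).ncard →
      Nat.nth (· ∈ L' \ {β}) i = Nat.nth (· ∈ L') i) := by
  classical
  set L : Set ℕ := L' \ {β} with hLdef
  have hLfin : L.Finite := hfin.diff
  have hnc : L.ncard + 1 = L'.ncard := Set.ncard_diff_singleton_add_one hβ hfin
  refine ⟨hnc, ?_⟩
  have hcardL : ∀ (hf : (Set.ofPred (· ∈ L)).Finite), L.ncard = hf.toFinset.card := by
    intro hf; rw [Set.ncard_eq_toFinset_card L hf]
  intro i hi
  have hni : Nat.nth (· ∈ L) i ∈ L := Nat.nth_mem_of_lt_card hLfin (by rw [← hcardL hLfin]; exact hi)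
  have hci : Nat.count (· ∈ L) (Nat.nth (· ∈ L) i) = i :=
    Nat.count_nth (fun hf => by rw [← hcardL hf]; exact hi)
  set x := Nat.nth (· ∈ L) i with hxdef
  have hxL' : x ∈ L' := hni.1
  have hxβ : x ≠ β := hni.2
  have hxlt : x < β := by
    have := hmax x hxL'; omega
  have hcc : Nat.count (· ∈ L') x = Nat.count (· ∈ L) x := by
    refine count_eq_of_agree (fun y hy => ?_)
    simp only [hLdef, Set.mem_diff, Set.mem_singleton_iff]
    constructor
    · intro h; exact ⟨h, by omega⟩
    · rintro ⟨h, _⟩; exact h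
  rw [show Nat.nth (· ∈ L') i = Nat.nth (· ∈ L') (Nat.count (· ∈ L') x) by rw [hcc, hci]]
  exact (Nat.nth_count hxL').symm

lemma card_eq_ncard {L : Set ℕ} (hfin : L.Finite) (hf : (Set.ofPred (· ∈ L)).Finite) :
    hf.toFinset.card = L.ncard := (Set.ncard_eq_toFinset_card L hf).symm

lemma nth_mem' {L : Set ℕ} (hfin : L.Finite) {i : ℕ} (hi : i < L.ncard) :
    Nat.nth (· ∈ L) i ∈ L :=
  Nat.nth_mem_of_lt_card hfin (by rw [card_eq_ncard hfin hfin]; exact hi)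

lemma nth_lt_nth'' {L : Set ℕ} (hfin : L.Finite) {i j : ℕ} (hij : i < j) (hj : j < L.ncard) :
    Nat.nth (· ∈ L) i < Nat.nth (· ∈ L) j :=
  Nat.nth_lt_nth_of_lt_card hfin hij (by rw [card_eq_ncard hfin hfin]; exact hj)

lemma nth_inj' {L : Set ℕ} (hfin : L.Finite) {i j : ℕ} (hi : i < L.ncard) (hj : j < L.ncard)
    (h : Nat.nth (· ∈ L) i = Nat.nth (· ∈ L) j) : i = j := by
  rcases lt_trichotomy i j with hl | he | hl
  · have := nth_lt_nth'' hfin hl hj; omega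
  · exact he
  · have := nth_lt_nth'' hfin hl hi; omega

open Classical in
lemma exists_nth_eq {L : Set ℕ} (hfin : L.Finite) {x : ℕ} (hx : x ∈ L) :
    ∃ i, i < L.ncard ∧ Nat.nth (· ∈ L) i = x := by
  classical
  refine ⟨Nat.count (· ∈ L) x, ?_, Nat.nth_count hx⟩
  have := Nat.count_lt_card (p := (· ∈ L)) hfin hx
  rw [card_eq_ncard hfin hfin] at this
  exact this

lemma leftover_nth_mem {b : Finset ℕ} {j : ℕ} (h : j < (leftover b).ncard) :
    Nat.nth (· ∈ leftover b) j ∈ leftover b := nth_mem' (leftover_finite b) h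

lemma TLpairs_two {b : Finset ℕ} {Q : Set ℕ} (hQ : Q ∈ TLpairs b) :
    ∃ u v : ℕ, u ≠ v ∧ Q = {u, v} := by
  rcases hQ with ⟨p, q, h, rfl⟩ | ⟨k, hk, rfl⟩
  · exact ⟨p, q, by have := h.2.1; omega, rfl⟩
  · exact ⟨_, _, Nat.ne_of_lt (nth_lt_nth'' (leftover_finite b) (by omega) hk), rfl⟩

lemma mem_pair_iff {x u v : ℕ} : x ∈ ({u, v} : Set ℕ) ↔ x = u ∨ x = v := by
  simp [Set.mem_insert_iff, Set.mem_singleton_iff]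

lemma TLpairs_disj {b : Finset ℕ} {P Q : Set ℕ} (hP : P ∈ TLpairs b) (hQ : Q ∈ TLpairs b)
    {x : ℕ} (hxP : x ∈ P) (hxQ : x ∈ Q) : P = Q := by
  rcases hP with ⟨p, q, h, rfl⟩ | ⟨k, hk, rfl⟩ <;> rcases hQ with ⟨p', q', h', rfl⟩ | ⟨k', hk', rfl⟩
  · rw [mem_pair_iff] at hxP hxQ
    rcases hxP with rfl | rfl <;> rcases hxQ with h2 | h2
    · rw [h2] at h ⊢
      rw [mp_unique_right h' h]
    · exact absurd h'.2.2.2.1 (h2 ▸ h.2.2.1)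
    · exact absurd h.2.2.2.1 (h2 ▸ h'.2.2.1)
    · rw [h2] at h ⊢
      rw [mp_unique_left h' h]
  · exfalso
    rw [mem_pair_iff] at hxP hxQ
    have hl1 := leftover_nth_mem (b := b) (j := 2*k') (by omega)
    have hl2 := leftover_nth_mem (b := b) (j := 2*k'+1) hk'
    rcases hxQ with h2 | h2 <;> rw [h2] at hxP <;> rcases hxP with h3 | h3
    · exact h.2.2.1 (h3 ▸ hl1.1)
    · exact hl1.2 ⟨p, h3 ▸ h⟩
    · exact h.2.2.1 (h3 ▸ hl2.1)
    · exact hl2.2 ⟨p, h3 ▸ h⟩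
  · exfalso
    rw [mem_pair_iff] at hxP hxQ
    have hl1 := leftover_nth_mem (b := b) (j := 2*k) (by omega)
    have hl2 := leftover_nth_mem (b := b) (j := 2*k+1) hk
    rcases hxP with h2 | h2 <;> rw [h2] at hxQ <;> rcases hxQ with h3 | h3
    · exact h'.2.2.1 (h3 ▸ hl1.1)
    · exact hl1.2 ⟨p', h3 ▸ h'⟩
    · exact h'.2.2.1 (h3 ▸ hl2.1)
    · exact hl2.2 ⟨p', h3 ▸ h'⟩
  · rw [mem_pair_iff] at hxP hxQ
    have hfin := leftover_finite b
    have key : ∀ i j, i < (leftover b).ncard → j < (leftover b).ncard →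
        Nat.nth (· ∈ leftover b) i = Nat.nth (· ∈ leftover b) j → i = j :=
      fun i j hi hj => nth_inj' hfin hi hj
    have hkk : k = k' := by
      rcases hxP with h2 | h2 <;> rcases hxQ with h3 | h3 <;> rw [h2] at h3
      · have := key _ _ (by omega : 2*k < _) (by omega : 2*k' < _) h3; omega
      · have := key _ _ (by omega : 2*k < _) (by omega : 2*k'+1 < _) h3; omega
      · have := key _ _ (by omega : 2*k+1 < _) (by omega : 2*k' < _) h3; omega
      · have := key _ _ (by omega : 2*k+1 < _) (by omega : 2*k'+1 < _) h3; omega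
    rw [hkk]

lemma TLparts_disj {b : Finset ℕ} {P Q : Set ℕ} (hP : P ∈ TLparts b) (hQ : Q ∈ TLparts b)
    {x : ℕ} (hxP : x ∈ P) (hxQ : x ∈ Q) : P = Q := by
  rcases hP with hP | ⟨y, hy1, hy2, rfl⟩ <;> rcases hQ with hQ | ⟨z, hz1, hz2, rfl⟩
  · exact TLpairs_disj hP hQ hxP hxQ
  · rw [Set.mem_singleton_iff] at hxQ
    exact absurd (hxQ ▸ hxP) (hz2 P hP)
  · rw [Set.mem_singleton_iff] at hxP
    exact absurd (hxP ▸ hxQ) (hy2 Q hQ)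
  · rw [Set.mem_singleton_iff] at hxP hxQ
    rw [hxP] at hxQ
    rw [hxQ]

lemma assembly {a a' : Finset ℕ} {α : ℕ} {X Y : Set ℕ}
    (hXp : insert α X ∈ TLparts a') (hXα : α ∉ X)
    (hYp : insert (α+1) Y ∈ TLparts a') (hYα1 : α + 1 ∉ Y)
    (hXα1 : α + 1 ∉ X) (hYα : α ∉ Y)
    (hX1 : ∀ u ∈ X, 1 ≤ u) (hY1 : ∀ v ∈ Y, 1 ≤ v)
    (hXs : X.Subsingleton) (hYs : Y.Subsingleton)
    (hpairs : TLpairs a =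
      {R | R ∈ TLpairs a' ∧ α ∉ R ∧ α + 1 ∉ R} ∪ {({α, α+1} : Set ℕ)} ∪
      {R | X.Nonempty ∧ Y.Nonempty ∧ R = X ∪ Y}) :
    TLparts a =
      ((TLparts a' \ {insert α X, insert (α + 1) Y}) ∪ {({α, α + 1} : Set ℕ)}) ∪
        {P | (X ∪ Y).Nonempty ∧ P = X ∪ Y} := by
  have hαα1 : ({α, α+1} : Set ℕ) ∈ TLpairs a := by
    rw [hpairs]; exact Or.inl (Or.inr rfl)
  have hacovers : ∀ {x : ℕ}, x ∈ ({α, α+1} : Set ℕ) → ∃ Q ∈ TLpairs a, x ∈ Q :=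
    fun hx => ⟨_, hαα1, hx⟩
  have hQa' : ∀ {Q : Set ℕ}, Q ∈ TLpairs a' → (α ∈ Q ∨ α + 1 ∈ Q) → Q = insert α X ∨
      Q = insert (α+1) Y := by
    intro Q hQ hor
    rcases hor with h | h
    · exact Or.inl (TLparts_disj (Or.inl hQ) hXp h (Set.mem_insert _ _))
    · exact Or.inr (TLparts_disj (Or.inl hQ) hYp h (Set.mem_insert _ _))
  ext P
  constructor
  · intro hP
    rcases hP with hPpair | ⟨x, hx1, hxn, rfl⟩
    · rw [hpairs] at hPpair
      rcases hPpair with (⟨hP', hPα, hPα1⟩ | hP2) | ⟨hXne, hYne, rfl⟩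
      · left; left
        refine ⟨Or.inl hP', ?_⟩
        simp only [Set.mem_insert_iff, Set.mem_singleton_iff]
        push_neg
        constructor
        · intro h; exact hPα (h ▸ Set.mem_insert _ _)
        · intro h; exact hPα1 (h ▸ Set.mem_insert _ _)
      · rw [Set.mem_singleton_iff] at hP2
        left; right; rw [hP2]; rfl
      · right
        obtain ⟨u, hu⟩ := hXne
        exact ⟨⟨u, Or.inl hu⟩, rfl⟩
    · have hxα : x ≠ α := fun h => hxn _ hαα1 (by rw [h]; exact Or.inl rfl)
      have hxα1 : x ≠ α + 1 := fun h => hxn _ hαα1 (by rw [h]; exact Or.inr rfl)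
      by_cases hxXY : x ∈ X ∪ Y
      · have hnotboth : ¬(X.Nonempty ∧ Y.Nonempty) := by
          rintro ⟨hXne, hYne⟩
          refine hxn (X ∪ Y) ?_ hxXY
          rw [hpairs]; exact Or.inr ⟨hXne, hYne, rfl⟩
        right
        rcases hxXY with hx | hx
        · have hXx : X = {x} := hXs.eq_singleton_of_mem hx
          have hYe : Y = ∅ := by
            rw [← Set.not_nonempty_iff_eq_empty]
            exact fun h => hnotboth ⟨⟨x, hx⟩, h⟩
          rw [hXx, hYe, Set.union_empty]
          exact ⟨⟨x, rfl⟩, rfl⟩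
        · have hYx : Y = {x} := hYs.eq_singleton_of_mem hx
          have hXe : X = ∅ := by
            rw [← Set.not_nonempty_iff_eq_empty]
            exact fun h => hnotboth ⟨h, ⟨x, hx⟩⟩
          rw [hYx, hXe, Set.empty_union]
          exact ⟨⟨x, rfl⟩, rfl⟩
      · left; left
        constructor
        · refine Or.inr ⟨x, hx1, ?_, rfl⟩
          intro Q hQ hxQ
          by_cases hαQ : α ∈ Q ∨ α + 1 ∈ Q
          · rcases hQa' hQ hαQ with rfl | rfl
            · rcases hxQ with h | h
              · exact hxα h
              · exact hxXY (Or.inl h)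
            · rcases hxQ with h | h
              · exact hxα1 h
              · exact hxXY (Or.inr h)
          · push_neg at hαQ
            refine hxn Q ?_ hxQ
            rw [hpairs]
            exact Or.inl (Or.inl ⟨hQ, hαQ.1, hαQ.2⟩)
        · simp only [Set.mem_insert_iff, Set.mem_singleton_iff]
          push_neg
          constructor
          · intro h
            exact hxα (by have := Set.mem_insert α X; rw [← h] at this; exact this.symm)
          · intro h
            exact hxα1 (by have := Set.mem_insert (α+1) Y; rw [← h] at this; exact this.symm)
  · intro hP
    rcases hP with (⟨hP', hPne⟩ | hP2) | ⟨hne, rfl⟩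
    · simp only [Set.mem_insert_iff, Set.mem_singleton_iff] at hPne
      push_neg at hPne
      have hPα : α ∉ P := fun hαP =>
        hPne.1 (TLparts_disj hP' hXp hαP (Set.mem_insert _ _))
      have hPα1 : α + 1 ∉ P := fun hαP =>
        hPne.2 (TLparts_disj hP' hYp hαP (Set.mem_insert _ _))
      rcases hP' with hPpair' | ⟨x, hx1, hxn', rfl⟩
      · left
        rw [hpairs]
        exact Or.inl (Or.inl ⟨hPpair', hPα, hPα1⟩)
      · right
        refine ⟨x, hx1, ?_, rfl⟩
        intro Q hQ hxQ
        rw [hpairs] at hQ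
        rcases hQ with (⟨hQ', _, _⟩ | hQ2) | ⟨hXne, hYne, rfl⟩
        · exact hxn' Q hQ' hxQ
        · rw [Set.mem_singleton_iff] at hQ2
          subst hQ2
          rcases hxQ with h | h
          · exact hPα (by rw [h]; exact rfl)
          · exact hPα1 (by rw [Set.mem_singleton_iff] at h; rw [h]; exact rfl)
        · rcases hxQ with h | h
          · have := TLparts_disj (Or.inr ⟨x, hx1, hxn', rfl⟩) hXp rfl (Or.inr h)
            exact hPα (by rw [this]; exact Set.mem_insert _ _)
          · have := TLparts_disj (Or.inr ⟨x, hx1, hxn', rfl⟩) hYp rfl (Or.inr h)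
            exact hPα1 (by rw [this]; exact Set.mem_insert _ _)
    · rw [Set.mem_singleton_iff] at hP2
      subst hP2
      exact Or.inl hαα1
    · by_cases hboth : X.Nonempty ∧ Y.Nonempty
      · left
        rw [hpairs]
        exact Or.inr ⟨hboth.1, hboth.2, rfl⟩
      · obtain ⟨z, hz⟩ := hne
        have hz1 : 1 ≤ z := by
          rcases hz with h | h
          · exact hX1 z h
          · exact hY1 z h
        have hXY : X ∪ Y = {z} := by
          rcases hz with h | h
          · have hXx : X = {z} := hXs.eq_singleton_of_mem h
            have hYe : Y = ∅ := by
              rw [← Set.not_nonempty_iff_eq_empty]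
              exact fun hy => hboth ⟨⟨z, h⟩, hy⟩
            rw [hXx, hYe, Set.union_empty]
          · have hYx : Y = {z} := hYs.eq_singleton_of_mem h
            have hXe : X = ∅ := by
              rw [← Set.not_nonempty_iff_eq_empty]
              exact fun hx => hboth ⟨hx, ⟨z, h⟩⟩
            rw [hYx, hXe, Set.empty_union]
        right
        rw [hXY]
        refine ⟨z, hz1, ?_, rfl⟩
        intro Q hQ hzQ
        rw [hpairs] at hQ
        rcases hQ with (⟨hQ', hQα, hQα1⟩ | hQ2) | ⟨hXne, hYne, _⟩
        · rcases hz with h | h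
          · have := TLparts_disj (Or.inl hQ') hXp hzQ (Set.mem_insert_of_mem _ h)
            exact hQα (by rw [this]; exact Set.mem_insert _ _)
          · have := TLparts_disj (Or.inl hQ') hYp hzQ (Set.mem_insert_of_mem _ h)
            exact hQα1 (by rw [this]; exact Set.mem_insert _ _)
        · rw [Set.mem_singleton_iff] at hQ2
          subst hQ2
          rcases hzQ with h | h
          · rcases hz with h' | h'
            · exact hXα (h ▸ h')
            · exact hYα (h ▸ h')
          · rw [Set.mem_singleton_iff] at h
            rcases hz with h' | h'
            · exact hXα1 (h ▸ h')
            · exact hYα1 (h ▸ h')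
        · exact hboth ⟨hXne, hYne⟩

lemma insert_eq_pair {c u : ℕ} {X : Set ℕ} (hcX : c ∉ X) (huc : u ≠ c)
    (h : insert c X = {c, u}) : X = {u} := by
  ext y
  constructor
  · intro hy
    have : y ∈ insert c X := Set.mem_insert_of_mem _ hy
    rw [h] at this
    rcases this with h' | h'
    · exact absurd (h' ▸ hy) hcX
    · exact h'
  · intro hy
    rw [Set.mem_singleton_iff] at hy
    subst hy
    have : y ∈ insert c X := by rw [h]; exact Or.inr rfl
    rcases this with h' | h'
    · exact absurd h' huc
    · exact h'

lemma insert_eq_singleton {c : ℕ} {X : Set ℕ} (hcX : c ∉ X) (h : insert c X = {c}) :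
    X = ∅ := by
  ext y
  simp only [Set.mem_empty_iff_false, iff_false]
  intro hy
  have : y ∈ insert c X := Set.mem_insert_of_mem _ hy
  rw [h, Set.mem_singleton_iff] at this
  exact absurd (this ▸ hy) hcX

lemma matched_pair_mem_parts {b : Finset ℕ} {s t : ℕ} (h : MatchedPair b s t) :
    ({s, t} : Set ℕ) ∈ TLparts b := Or.inl (Or.inl ⟨s, t, h, rfl⟩)

lemma leftover_pair_mem_parts {b : Finset ℕ} {k : ℕ} (hk : 2*k+1 < (leftover b).ncard) :
    ({Nat.nth (· ∈ leftover b) (2*k), Nat.nth (· ∈ leftover b) (2*k+1)} : Set ℕ) ∈ TLparts b :=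
  Or.inl (Or.inr ⟨k, hk, rfl⟩)

lemma singleton_alpha1_part {a a' : Finset ℕ} {α : ℕ} (h1 : α ∉ a)
    (ha' : a' = insert α (a.erase (α + 1)))
    (hB : ¬∃ q, MatchedPair a' (α + 1) q) : ({α + 1} : Set ℕ) ∈ TLparts a' := by
  refine Or.inr ⟨α + 1, by omega, ?_, rfl⟩
  intro Q hQ hmem
  rcases hQ with ⟨p, q, h, rfl⟩ | ⟨k, hk, rfl⟩
  · rcases hmem with h' | h'
    · exact hB ⟨q, h' ▸ h⟩
    · rw [Set.mem_singleton_iff] at h'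
      exact (alpha1_not_mem ha' h1) (h' ▸ h.2.2.2.1)
  · rcases hmem with h' | h'
    · exact (alpha1_not_mem ha' h1) (h' ▸ (leftover_nth_mem (by omega)).1)
    · rw [Set.mem_singleton_iff] at h'
      exact (alpha1_not_mem ha' h1) (h' ▸ (leftover_nth_mem hk).1)

lemma singleton_alpha_part {a a' : Finset ℕ} {α : ℕ} (hα : 1 ≤ α)
    (ha' : a' = insert α (a.erase (α + 1)))
    (hA : ¬∃ p, MatchedPair a' p α)
    (hcond : ∀ j, j < (leftover a').ncard → Nat.nth (· ∈ leftover a') j = α →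
      ∀ k, 2*k+1 < (leftover a').ncard → j ≠ 2*k ∧ j ≠ 2*k+1) :
    ({α} : Set ℕ) ∈ TLparts a' := by
  refine Or.inr ⟨α, hα, ?_, rfl⟩
  intro Q hQ hmem
  rcases hQ with ⟨p, q, h, rfl⟩ | ⟨k, hk, rfl⟩
  · rcases hmem with h' | h'
    · exact (h' ▸ h.2.2.1) (alpha_mem ha')
    · rw [Set.mem_singleton_iff] at h'
      exact hA ⟨p, h' ▸ h⟩
  · rcases hmem with h' | h'
    · exact ((hcond (2*k) (by omega) h'.symm) k hk).1 rfl
    · rw [Set.mem_singleton_iff] at h'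
      exact ((hcond (2*k+1) hk h'.symm) k hk).2 rfl

section Scenarios
variable {a a' : Finset ℕ} {α : ℕ}

lemma leftover_eq_A (hα : 1 ≤ α) (h1 : α ∉ a) (h2 : α + 1 ∈ a)
    (ha' : a' = insert α (a.erase (α + 1))) {p : ℕ} (hp : MatchedPair a' p α) :
    leftover a = leftover a' := by
  ext t
  rw [leftover_iff hα h1 h2 ha' t]
  constructor
  · rintro (⟨h, _⟩ | ⟨_, hnA⟩)
    · exact h
    · exact absurd ⟨p, hp⟩ hnA
  · intro h
    exact Or.inl ⟨h, fun hteq => h.2 ⟨p, hteq ▸ hp⟩⟩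

lemma matched_fwd (hα : 1 ≤ α) (h1 : α ∉ a) (h2 : α + 1 ∈ a)
    (ha' : a' = insert α (a.erase (α + 1))) {s t : ℕ} (hm : MatchedPair a s t) :
    ({s, t} : Set ℕ) = {α, α + 1} ∨
    (({s, t} : Set ℕ) ∈ TLpairs a' ∧ α ∉ ({s, t} : Set ℕ) ∧ α + 1 ∉ ({s, t} : Set ℕ)) ∨
    (MatchedPair a' s α ∧ MatchedPair a' (α + 1) t) := by
  rcases (mp_a_iff hα h1 h2 ha' s t).mp hm with ⟨rfl, rfl⟩ | ⟨hm', htα, hsα1⟩ | ⟨hsm, htm⟩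
  · exact Or.inl rfl
  · right; left
    have hsα : s ≠ α := fun h => hm'.2.2.1 (h ▸ alpha_mem ha')
    have htα1 : t ≠ α + 1 := fun h => (alpha1_not_mem ha' h1) (h ▸ hm'.2.2.2.1)
    refine ⟨Or.inl ⟨s, t, hm', rfl⟩, ?_, ?_⟩
    · rw [mem_pair_iff]; push_neg; exact ⟨fun h => hsα h.symm, fun h => htα h.symm⟩
    · rw [mem_pair_iff]; push_neg; exact ⟨fun h => hsα1 h.symm, fun h => htα1 h.symm⟩
  · exact Or.inr (Or.inr ⟨hsm, htm⟩)

lemma matched_bwd_avoid (hα : 1 ≤ α) (h1 : α ∉ a) (h2 : α + 1 ∈ a)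
    (ha' : a' = insert α (a.erase (α + 1))) {s t : ℕ} (hm' : MatchedPair a' s t)
    (hRα : α ∉ ({s, t} : Set ℕ)) (hRα1 : α + 1 ∉ ({s, t} : Set ℕ)) :
    MatchedPair a s t := by
  rw [mem_pair_iff] at hRα hRα1
  push_neg at hRα hRα1
  exact (mp_a_iff hα h1 h2 ha' s t).mpr
    (Or.inr (Or.inl ⟨hm', fun h => hRα.2 h.symm, fun h => hRα1.1 h.symm⟩))

lemma leftover_pair_avoid (ha' : a' = insert α (a.erase (α + 1))) (h1 : α ∉ a)
    (hαL : α ∉ leftover a') {k : ℕ} (hk : 2*k+1 < (leftover a').ncard) :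
    α ∉ ({Nat.nth (· ∈ leftover a') (2*k), Nat.nth (· ∈ leftover a') (2*k+1)} : Set ℕ) ∧
    α + 1 ∉ ({Nat.nth (· ∈ leftover a') (2*k), Nat.nth (· ∈ leftover a') (2*k+1)} : Set ℕ) := by
  have hl1 := leftover_nth_mem (b := a') (j := 2*k) (by omega)
  have hl2 := leftover_nth_mem (b := a') (j := 2*k+1) hk
  constructor
  · rw [mem_pair_iff]; push_neg
    exact ⟨fun h => hαL (h ▸ hl1), fun h => hαL (h ▸ hl2)⟩
  · rw [mem_pair_iff]; push_neg
    constructor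
    · intro h; exact (alpha1_not_mem ha' h1) (h ▸ hl1.1)
    · intro h; exact (alpha1_not_mem ha' h1) (h ▸ hl2.1)

lemma hpairs_A (hα : 1 ≤ α) (h1 : α ∉ a) (h2 : α + 1 ∈ a)
    (ha' : a' = insert α (a.erase (α + 1))) {p : ℕ} (hp : MatchedPair a' p α)
    {Y : Set ℕ}
    (hY : (∃ q, MatchedPair a' (α+1) q ∧ Y = {q}) ∨
          ((¬∃ q, MatchedPair a' (α+1) q) ∧ Y = ∅)) :
    TLpairs a =
      {R | R ∈ TLpairs a' ∧ α ∉ R ∧ α + 1 ∉ R} ∪ {({α, α+1} : Set ℕ)} ∪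
      {R | ({p} : Set ℕ).Nonempty ∧ Y.Nonempty ∧ R = {p} ∪ Y} := by
  have hLset := leftover_eq_A hα h1 h2 ha' hp
  have hαL : α ∉ leftover a' := fun h => h.2 ⟨p, hp⟩
  ext R
  constructor
  · rintro (⟨s, t, hm, rfl⟩ | ⟨k, hk, rfl⟩)
    · rcases matched_fwd hα h1 h2 ha' hm with hc | ⟨hin, hα', hα1'⟩ | ⟨hsm, htm⟩
      · rw [hc]; exact Or.inl (Or.inr rfl)
      · exact Or.inl (Or.inl ⟨hin, hα', hα1'⟩)
      · rcases hY with ⟨q, hq, hYq⟩ | ⟨hnB, _⟩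
        · right
          have hs : s = p := mp_unique_left hsm hp
          have ht : t = q := mp_unique_right htm hq
          refine ⟨⟨p, rfl⟩, by rw [hYq]; exact ⟨q, rfl⟩, ?_⟩
          rw [hYq, Set.singleton_union, hs, ht]
        · exact absurd ⟨t, htm⟩ hnB
    · rw [hLset] at hk ⊢
      have := leftover_pair_avoid ha' h1 hαL hk
      exact Or.inl (Or.inl ⟨Or.inr ⟨k, hk, rfl⟩, this.1, this.2⟩)
  · rintro ((⟨hR', hRα, hRα1⟩ | hmid) | ⟨_, hYne, rfl⟩)
    · rcases hR' with ⟨s, t, hm', rfl⟩ | ⟨k, hk, rfl⟩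
      · exact Or.inl ⟨s, t, matched_bwd_avoid hα h1 h2 ha' hm' hRα hRα1, rfl⟩
      · rw [← hLset] at hk ⊢
        exact Or.inr ⟨k, hk, rfl⟩
    · rw [Set.mem_singleton_iff] at hmid
      rw [hmid]
      exact Or.inl ⟨α, α + 1, mp_alpha hα h1 h2, rfl⟩
    · rcases hY with ⟨q, hq, hYq⟩ | ⟨hnB, hYe⟩
      · rw [hYq, Set.singleton_union]
        exact Or.inl ⟨p, q, (mp_a_iff hα h1 h2 ha' p q).mpr (Or.inr (Or.inr ⟨hp, hq⟩)), rfl⟩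
      · rw [hYe] at hYne
        exact absurd hYne (Set.not_nonempty_empty)

end Scenarios

section Scenarios2
variable {a a' : Finset ℕ} {α : ℕ}

lemma leftover_eq_nAB (hα : 1 ≤ α) (h1 : α ∉ a) (h2 : α + 1 ∈ a)
    (ha' : a' = insert α (a.erase (α + 1))) (hA : ¬∃ p, MatchedPair a' p α)
    {q : ℕ} (hq : MatchedPair a' (α + 1) q) :
    leftover a = (leftover a' \ {α}) ∪ {q} := by
  ext t
  rw [leftover_iff hα h1 h2 ha' t]
  constructor
  · rintro (⟨h, hne⟩ | ⟨hm, _⟩)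
    · exact Or.inl ⟨h, hne⟩
    · exact Or.inr (mp_unique_right hm hq)
  · rintro (⟨h, hne⟩ | h)
    · exact Or.inl ⟨h, hne⟩
    · rw [Set.mem_singleton_iff] at h
      exact Or.inr ⟨h ▸ hq, hA⟩

lemma leftover_eq_nAnB (hα : 1 ≤ α) (h1 : α ∉ a) (h2 : α + 1 ∈ a)
    (ha' : a' = insert α (a.erase (α + 1)))
    (hB : ¬∃ q, MatchedPair a' (α + 1) q) :
    leftover a = leftover a' \ {α} := by
  ext t
  rw [leftover_iff hα h1 h2 ha' t]
  constructor
  · rintro (⟨h, hne⟩ | ⟨hm, _⟩)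
    · exact ⟨h, hne⟩
    · exact absurd ⟨t, hm⟩ hB
  · rintro ⟨h, hne⟩
    exact Or.inl ⟨h, hne⟩

lemma hpairs_nAB (hα : 1 ≤ α) (h1 : α ∉ a) (h2 : α + 1 ∈ a)
    (ha' : a' = insert α (a.erase (α + 1))) (hA : ¬∃ p, MatchedPair a' p α)
    {q : ℕ} (hq : MatchedPair a' (α + 1) q) {r : ℕ} (hr : r < (leftover a').ncard)
    (hrα : Nat.nth (· ∈ leftover a') r = α) {X : Set ℕ}
    (hX : (∃ k0, 2*k0+1 < (leftover a').ncard ∧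
            ((r = 2*k0 ∧ X = {Nat.nth (· ∈ leftover a') (2*k0+1)}) ∨
             (r = 2*k0+1 ∧ X = {Nat.nth (· ∈ leftover a') (2*k0)}))) ∨
          ((∀ k, 2*k+1 < (leftover a').ncard → r ≠ 2*k ∧ r ≠ 2*k+1) ∧ X = ∅)) :
    TLpairs a = {R | R ∈ TLpairs a' ∧ α ∉ R ∧ α+1 ∉ R} ∪ {({α,α+1} : Set ℕ)} ∪
      {R | X.Nonempty ∧ ({q} : Set ℕ).Nonempty ∧ R = X ∪ {q}} := by
  have hfin := leftover_finite a'
  have hαL' : α ∈ leftover a' := ⟨alpha_mem ha', hA⟩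
  have hqL' : q ∉ leftover a' := fun h => h.2 ⟨α + 1, hq⟩
  have hαq : α < q := by have := hq.2.1; omega
  have hslot : ∀ x ∈ leftover a', x ≠ α → (x < α ↔ x < q) := by
    intro x hx hne
    rcases leftover_out h1 ha' hq x hx with h | h
    · constructor
      · intro _; omega
      · intro _; omega
    · constructor
      · intro _; omega
      · intro _; omega
  have hLset := leftover_eq_nAB hα h1 h2 ha' hA hq
  obtain ⟨hN, hnth⟩ := nth_replace hfin hαL' hqL' hslot
  rw [← hLset] at hN hnth
  have hridx : ∀ i, i < (leftover a').ncard → Nat.nth (· ∈ leftover a') i = α → i = r := by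
    intro i hi h
    exact nth_inj' hfin hi hr (h.trans hrα.symm)
  ext R
  constructor
  · rintro (⟨s, t, hm, rfl⟩ | ⟨k, hk, rfl⟩)
    · rcases matched_fwd hα h1 h2 ha' hm with hc | ⟨hin, hα', hα1'⟩ | ⟨hsm, htm⟩
      · rw [hc]; exact Or.inl (Or.inr rfl)
      · exact Or.inl (Or.inl ⟨hin, hα', hα1'⟩)
      · exact absurd ⟨s, hsm⟩ hA
    · rw [hN] at hk
      have hu := hnth (2*k) (by omega)
      have hv := hnth (2*k+1) hk
      by_cases hr1 : r = 2*k
      · rw [if_pos (by rw [← hr1]; exact hrα)] at hu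
        have hvne : Nat.nth (· ∈ leftover a') (2*k+1) ≠ α := fun h => by
          have := hridx (2*k+1) hk h; omega
        rw [if_neg hvne] at hv
        right
        rcases hX with ⟨k0, hk0, ⟨hr0, hX0⟩ | ⟨hr0, hX0⟩⟩ | ⟨hno, hX0⟩
        · have : k0 = k := by omega
          subst this
          refine ⟨by rw [hX0]; exact ⟨_, rfl⟩, ⟨q, rfl⟩, ?_⟩
          rw [hX0, hu, hv, Set.singleton_union, Set.pair_comm]
        · omega
        · exact absurd (hno k hk) (by omega)
      · by_cases hr2 : r = 2*k+1
        · rw [if_pos (by rw [← hr2]; exact hrα)] at hv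
          have hune : Nat.nth (· ∈ leftover a') (2*k) ≠ α := fun h => by
            have := hridx (2*k) (by omega) h; omega
          rw [if_neg hune] at hu
          right
          rcases hX with ⟨k0, hk0, ⟨hr0, hX0⟩ | ⟨hr0, hX0⟩⟩ | ⟨hno, hX0⟩
          · omega
          · have : k0 = k := by omega
            subst this
            refine ⟨by rw [hX0]; exact ⟨_, rfl⟩, ⟨q, rfl⟩, ?_⟩
            rw [hX0, hu, hv, Set.singleton_union]
          · exact absurd (hno k hk) (by omega)
        · have hune : Nat.nth (· ∈ leftover a') (2*k) ≠ α := fun h => by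
            have := hridx (2*k) (by omega) h; omega
          have hvne : Nat.nth (· ∈ leftover a') (2*k+1) ≠ α := fun h => by
            have := hridx (2*k+1) hk h; omega
          rw [if_neg hune] at hu
          rw [if_neg hvne] at hv
          left; left
          rw [hu, hv]
          refine ⟨Or.inr ⟨k, hk, rfl⟩, ?_, ?_⟩
          · rw [mem_pair_iff]; push_neg
            exact ⟨fun h => hune h.symm, fun h => hvne h.symm⟩
          · have hl1 := leftover_nth_mem (b := a') (j := 2*k) (by omega)
            have hl2 := leftover_nth_mem (b := a') (j := 2*k+1) hk
            rw [mem_pair_iff]; push_neg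
            constructor
            · intro h; exact (alpha1_not_mem ha' h1) (h ▸ hl1.1)
            · intro h; exact (alpha1_not_mem ha' h1) (h ▸ hl2.1)
  · rintro ((⟨hR', hRα, hRα1⟩ | hmid) | ⟨hXne, _, rfl⟩)
    · rcases hR' with ⟨s, t, hm', rfl⟩ | ⟨k, hk, rfl⟩
      · exact Or.inl ⟨s, t, matched_bwd_avoid hα h1 h2 ha' hm' hRα hRα1, rfl⟩
      · rw [mem_pair_iff] at hRα
        push_neg at hRα
        have hu := hnth (2*k) (by omega)
        have hv := hnth (2*k+1) hk
        rw [if_neg (fun h => hRα.1 h.symm)] at hu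
        rw [if_neg (fun h => hRα.2 h.symm)] at hv
        right
        rw [← hu, ← hv]
        exact ⟨k, by omega, rfl⟩
    · rw [Set.mem_singleton_iff] at hmid
      rw [hmid]
      exact Or.inl ⟨α, α + 1, mp_alpha hα h1 h2, rfl⟩
    · rcases hX with ⟨k0, hk0, ⟨hr0, hX0⟩ | ⟨hr0, hX0⟩⟩ | ⟨hno, hX0⟩
      · right
        refine ⟨k0, by omega, ?_⟩
        have hu := hnth (2*k0) (by omega)
        have hv := hnth (2*k0+1) hk0
        rw [if_pos (by rw [← hr0]; exact hrα)] at hu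
        rw [if_neg (fun h => by have := hridx (2*k0+1) hk0 h; omega)] at hv
        rw [hu, hv, hX0, Set.singleton_union, Set.pair_comm]
      · right
        refine ⟨k0, by omega, ?_⟩
        have hu := hnth (2*k0) (by omega)
        have hv := hnth (2*k0+1) hk0
        rw [if_pos (by rw [← hr0]; exact hrα)] at hv
        rw [if_neg (fun h => by have := hridx (2*k0) (by omega) h; omega)] at hu
        rw [hu, hv, hX0, Set.singleton_union]
      · rw [hX0] at hXne
        exact absurd hXne (Set.not_nonempty_empty)

lemma hpairs_nAnB (hα : 1 ≤ α) (h1 : α ∉ a) (h2 : α + 1 ∈ a)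
    (ha' : a' = insert α (a.erase (α + 1))) (hA : ¬∃ p, MatchedPair a' p α)
    (hB : ¬∃ q, MatchedPair a' (α + 1) q) {r : ℕ} (hr : r < (leftover a').ncard)
    (hrα : Nat.nth (· ∈ leftover a') r = α) (X : Set ℕ) :
    TLpairs a = {R | R ∈ TLpairs a' ∧ α ∉ R ∧ α+1 ∉ R} ∪ {({α,α+1} : Set ℕ)} ∪
      {R | X.Nonempty ∧ (∅ : Set ℕ).Nonempty ∧ R = X ∪ ∅} := by
  have hfin := leftover_finite a'
  have hαL' : α ∈ leftover a' := ⟨alpha_mem ha', hA⟩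
  have hmax : ∀ x ∈ leftover a', x ≤ α := leftover_le_alpha h1 ha' hB
  have hLset := leftover_eq_nAnB hα h1 h2 ha' hB
  obtain ⟨hN, hnth⟩ := nth_erase_max hfin hαL' hmax
  rw [← hLset] at hN hnth
  have hrlast : r + 1 = (leftover a').ncard := by
    by_contra hne
    have hlt : r + 1 < (leftover a').ncard := by omega
    have h1' := nth_lt_nth'' hfin (show r < r + 1 by omega) hlt
    have h2' := hmax _ (nth_mem' hfin hlt)
    rw [hrα] at h1'
    omega
  have hridx : ∀ i, i < (leftover a').ncard → Nat.nth (· ∈ leftover a') i = α → i = r := by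
    intro i hi h
    exact nth_inj' hfin hi hr (h.trans hrα.symm)
  ext R
  constructor
  · rintro (⟨s, t, hm, rfl⟩ | ⟨k, hk, rfl⟩)
    · rcases matched_fwd hα h1 h2 ha' hm with hc | ⟨hin, hα', hα1'⟩ | ⟨hsm, htm⟩
      · rw [hc]; exact Or.inl (Or.inr rfl)
      · exact Or.inl (Or.inl ⟨hin, hα', hα1'⟩)
      · exact absurd ⟨s, hsm⟩ hA
    · have hu := hnth (2*k) (by omega)
      have hv := hnth (2*k+1) hk
      have hune : Nat.nth (· ∈ leftover a') (2*k) ≠ α := fun h => by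
        have := hridx (2*k) (by omega) h; omega
      have hvne : Nat.nth (· ∈ leftover a') (2*k+1) ≠ α := fun h => by
        have := hridx (2*k+1) (by omega) h; omega
      left; left
      rw [hu, hv]
      refine ⟨Or.inr ⟨k, by omega, rfl⟩, ?_, ?_⟩
      · rw [mem_pair_iff]; push_neg
        exact ⟨fun h => hune h.symm, fun h => hvne h.symm⟩
      · have hl1 := leftover_nth_mem (b := a') (j := 2*k) (by omega)
        have hl2 := leftover_nth_mem (b := a') (j := 2*k+1) (by omega)
        rw [mem_pair_iff]; push_neg
        constructor
        · intro h; exact (alpha1_not_mem ha' h1) (h ▸ hl1.1)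
        · intro h; exact (alpha1_not_mem ha' h1) (h ▸ hl2.1)
  · rintro ((⟨hR', hRα, hRα1⟩ | hmid) | ⟨_, hne, _⟩)
    · rcases hR' with ⟨s, t, hm', rfl⟩ | ⟨k, hk, rfl⟩
      · exact Or.inl ⟨s, t, matched_bwd_avoid hα h1 h2 ha' hm' hRα hRα1, rfl⟩
      · rw [mem_pair_iff] at hRα
        push_neg at hRα
        have hk1 : 2*k+1 ≠ r := by
          intro h
          rw [← h] at hrα
          exact hRα.2 hrα.symm
        have hklt : 2*k+1 < (leftover a).ncard := by omega
        have hu := hnth (2*k) (by omega)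
        have hv := hnth (2*k+1) hklt
        right
        rw [← hu, ← hv]
        exact ⟨k, hklt, rfl⟩
    · rw [Set.mem_singleton_iff] at hmid
      rw [hmid]
      exact Or.inl ⟨α, α + 1, mp_alpha hα h1 h2, rfl⟩
    · exact absurd hne (Set.not_nonempty_empty)

end Scenarios2


/-- Let `α ∉ a`, `α + 1 ∈ a` and `a' = (a \ {α+1}) ∪ {α}`.
If `{α} ∪ X` and `{α+1} ∪ Y` are the parts of `𝒯(a')` containing `α` and
`α+1`, then `𝒯(a)` is obtained from `𝒯(a')` by replacing these two parts by
the pair `{α, α+1}` together with the part `X ∪ Y` (omitted when empty); all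
other parts coincide. -/
theorem stmt15 (a : Finset ℕ) (ha : ∀ n ∈ a, 1 ≤ n) (α : ℕ) (hα : 1 ≤ α)
    (h1 : α ∉ a) (h2 : α + 1 ∈ a)
    (a' : Finset ℕ) (ha' : a' = insert α (a.erase (α + 1)))
    (X Y : Set ℕ)
    (hX : insert α X ∈ TLparts a' ∧ α ∉ X)
    (hY : insert (α + 1) Y ∈ TLparts a' ∧ (α + 1) ∉ Y) :
    TLparts a =
      ((TLparts a' \ {insert α X, insert (α + 1) Y}) ∪ {({α, α + 1} : Set ℕ)}) ∪
        {P | (X ∪ Y).Nonempty ∧ P = X ∪ Y} := by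

  obtain ⟨hXp, hXα⟩ := hX
  obtain ⟨hYp, hYα1⟩ := hY
  have hfin := leftover_finite a'
  have ha'pos : ∀ x ∈ a', 1 ≤ x := by
    intro x hx
    rcases (mem_a' ha' x).mp hx with h | ⟨h, _⟩
    · omega
    · exact ha x h
  -- Y computation
  have hYdata : (∃ q, MatchedPair a' (α+1) q ∧ Y = {q}) ∨
      ((¬∃ q, MatchedPair a' (α+1) q) ∧ Y = ∅) := by
    by_cases hB : ∃ q, MatchedPair a' (α + 1) q
    · obtain ⟨q, hq⟩ := hB
      have hqpart : insert (α+1) Y = {α+1, q} :=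
        TLparts_disj hYp (matched_pair_mem_parts hq) (Set.mem_insert _ _) (Or.inl rfl)
      have hqα1 : q ≠ α + 1 := by have := hq.2.1; omega
      exact Or.inl ⟨q, hq, insert_eq_pair hYα1 hqα1 hqpart⟩
    · have hsing : insert (α+1) Y = {α+1} :=
        TLparts_disj hYp (singleton_alpha1_part h1 ha' hB) (Set.mem_insert _ _) rfl
      exact Or.inr ⟨hB, insert_eq_singleton hYα1 hsing⟩
  have hYα : α ∉ Y := by
    rcases hYdata with ⟨q, hq, hYq⟩ | ⟨_, hYe⟩
    · rw [hYq, Set.mem_singleton_iff]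
      have := hq.2.1; omega
    · rw [hYe]; exact Set.notMem_empty _
  have hY1 : ∀ v ∈ Y, 1 ≤ v := by
    rcases hYdata with ⟨q, hq, hYq⟩ | ⟨_, hYe⟩
    · intro v hv
      rw [hYq, Set.mem_singleton_iff] at hv
      subst hv
      have := hq.2.1; omega
    · intro v hv; rw [hYe] at hv; exact absurd hv (Set.notMem_empty _)
  have hYs : Y.Subsingleton := by
    rcases hYdata with ⟨q, hq, hYq⟩ | ⟨_, hYe⟩
    · rw [hYq]; exact Set.subsingleton_singleton
    · rw [hYe]; exact Set.subsingleton_empty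
  by_cases hA : ∃ p, MatchedPair a' p α
  · obtain ⟨p, hp⟩ := hA
    have hpart : insert α X = {p, α} :=
      TLparts_disj hXp (matched_pair_mem_parts hp) (Set.mem_insert _ _) (Or.inr rfl)
    have hpα : p ≠ α := by have := hp.2.1; omega
    have hXeq : X = {p} := insert_eq_pair hXα hpα (hpart.trans (Set.pair_comm p α))
    have hXα1 : α + 1 ∉ X := by
      rw [hXeq, Set.mem_singleton_iff]
      have := hp.2.1; omega
    have hX1 : ∀ u ∈ X, 1 ≤ u := by
      intro u hu
      rw [hXeq, Set.mem_singleton_iff] at hu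
      subst hu
      exact hp.1
    have hXs : X.Subsingleton := by rw [hXeq]; exact Set.subsingleton_singleton
    have hpairs := hpairs_A hα h1 h2 ha' hp (Y := Y) (by
      rcases hYdata with ⟨q, hq, hYq⟩ | ⟨hB, hYe⟩
      · exact Or.inl ⟨q, hq, hYq⟩
      · exact Or.inr ⟨hB, hYe⟩)
    rw [← hXeq] at hpairs
    exact assembly hXp hXα hYp hYα1 hXα1 hYα hX1 hY1 hXs hYs hpairs
  · -- α is a leftover of a'
    have hαL' : α ∈ leftover a' := ⟨alpha_mem ha', hA⟩
    obtain ⟨r, hr, hrα⟩ := exists_nth_eq hfin hαL'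
    have hridx : ∀ i, i < (leftover a').ncard → Nat.nth (· ∈ leftover a') i = α → i = r :=
      fun i hi h => nth_inj' hfin hi hr (h.trans hrα.symm)
    have hXdata : (∃ k0, 2*k0+1 < (leftover a').ncard ∧
            ((r = 2*k0 ∧ X = {Nat.nth (· ∈ leftover a') (2*k0+1)}) ∨
             (r = 2*k0+1 ∧ X = {Nat.nth (· ∈ leftover a') (2*k0)}))) ∨
          ((∀ k, 2*k+1 < (leftover a').ncard → r ≠ 2*k ∧ r ≠ 2*k+1) ∧ X = ∅) := by
      by_cases hpr : ∃ k0, 2*k0+1 < (leftover a').ncard ∧ (r = 2*k0 ∨ r = 2*k0+1)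
      · obtain ⟨k0, hk0, hor⟩ := hpr
        left
        refine ⟨k0, hk0, ?_⟩
        rcases hor with hr0 | hr0
        · left
          refine ⟨hr0, ?_⟩
          have hP0 := leftover_pair_mem_parts (b := a') hk0
          have hαP0 : α ∈ ({Nat.nth (· ∈ leftover a') (2*k0),
              Nat.nth (· ∈ leftover a') (2*k0+1)} : Set ℕ) := by
            left
            rw [← hr0, hrα]
          have hident := TLparts_disj hXp hP0 (Set.mem_insert _ _) hαP0
          have hvα : Nat.nth (· ∈ leftover a') (2*k0+1) ≠ α := by
            intro h
            have := hridx (2*k0+1) hk0 h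
            omega
          have hident2 : insert α X = {α, Nat.nth (· ∈ leftover a') (2*k0+1)} := by
            rw [hident, ← hr0, hrα]
          exact insert_eq_pair hXα hvα hident2
        · right
          refine ⟨hr0, ?_⟩
          have hP0 := leftover_pair_mem_parts (b := a') hk0
          have hαP0 : α ∈ ({Nat.nth (· ∈ leftover a') (2*k0),
              Nat.nth (· ∈ leftover a') (2*k0+1)} : Set ℕ) := by
            right
            rw [← hr0, hrα]
            rfl
          have hident := TLparts_disj hXp hP0 (Set.mem_insert _ _) hαP0
          have hvα : Nat.nth (· ∈ leftover a') (2*k0) ≠ α := by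
            intro h
            have := hridx (2*k0) (by omega) h
            omega
          have hident2 : insert α X = {Nat.nth (· ∈ leftover a') (2*k0), α} := by
            rw [hident, ← hr0, hrα]
          exact insert_eq_pair hXα hvα (hident2.trans (Set.pair_comm _ α))
      · push_neg at hpr
        have hno : ∀ k, 2*k+1 < (leftover a').ncard → r ≠ 2*k ∧ r ≠ 2*k+1 := by
          intro k hk
          have := hpr k hk
          omega
        right
        refine ⟨hno, ?_⟩
        have hsing : insert α X = {α} := by
          refine TLparts_disj hXp (singleton_alpha_part hα ha' hA ?_) (Set.mem_insert _ _) rfl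
          intro j hj hjα k hk
          have := hridx j hj hjα
          subst this
          exact hno k hk
        exact insert_eq_singleton hXα hsing
    have hXα1 : α + 1 ∉ X := by
      rcases hXdata with ⟨k0, hk0, ⟨_, hX0⟩ | ⟨_, hX0⟩⟩ | ⟨_, hX0⟩
      · rw [hX0, Set.mem_singleton_iff]
        intro h
        exact (alpha1_not_mem ha' h1) (h ▸ (leftover_nth_mem hk0).1)
      · rw [hX0, Set.mem_singleton_iff]
        intro h
        exact (alpha1_not_mem ha' h1) (h ▸ (leftover_nth_mem (j := 2*k0) (by omega)).1)
      · rw [hX0]; exact Set.notMem_empty _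
    have hX1 : ∀ u ∈ X, 1 ≤ u := by
      rcases hXdata with ⟨k0, hk0, ⟨_, hX0⟩ | ⟨_, hX0⟩⟩ | ⟨_, hX0⟩
      · intro u hu
        rw [hX0, Set.mem_singleton_iff] at hu
        subst hu
        exact ha'pos _ (leftover_nth_mem hk0).1
      · intro u hu
        rw [hX0, Set.mem_singleton_iff] at hu
        subst hu
        exact ha'pos _ (leftover_nth_mem (j := 2*k0) (by omega)).1
      · intro u hu; rw [hX0] at hu; exact absurd hu (Set.notMem_empty _)
    have hXs : X.Subsingleton := by
      rcases hXdata with ⟨k0, hk0, ⟨_, hX0⟩ | ⟨_, hX0⟩⟩ | ⟨_, hX0⟩ <;> rw [hX0]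
      · exact Set.subsingleton_singleton
      · exact Set.subsingleton_singleton
      · exact Set.subsingleton_empty
    rcases hYdata with ⟨q, hq, hYq⟩ | ⟨hB, hYe⟩
    · have hpairs := hpairs_nAB hα h1 h2 ha' hA hq hr hrα hXdata
      rw [← hYq] at hpairs
      exact assembly hXp hXα hYp hYα1 hXα1 hYα hX1 hY1 hXs hYs hpairs
    · have hpairs := hpairs_nAnB hα h1 h2 ha' hA hB hr hrα X
      rw [← hYe] at hpairs
      exact assembly hXp hXα hYp hYα1 hXα1 hYα hX1 hY1 hXs hYs hpairs
end
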